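/- arXiv:1503.06033 — 9 statements merged into one kernel-verified Lean document; each statement's English description precedes it below -/
import Mathlib

section
/- Let α ∈ 𝔉 with α ∉ fO. Then the ideal of O generated by f and α equals 𝔉, i.e. fO + αO = 𝔉. -/
open NumberField

/-- `Q` is an `F`-primary ideal of a commutative ring. -/
def IsFPrimary {R : Type*} [CommRing R] (F Q : Ideal R) : Prop :=
  Q.IsPrimary ∧ Q.radical = F

set_option maxHeartbeats 1000000 in
set_option synthInstance.maxHeartbeats 400000 in
theorem stmt_0
    (K : Type*) [Field K] [NumberField K] (hK : Module.finrank ℚ K = 2)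
    (f : ℕ) (hf : f.Prime)
    (O : Subring (𝓞 K))
    (hO : ∀ x : 𝓞 K, x ∈ O ↔ ∃ n : ℤ, x - (n : 𝓞 K) ∈ Ideal.span {(f : 𝓞 K)})
    (F : Ideal O) (hF : ∀ x : O, x ∈ F ↔ (x : 𝓞 K) ∈ Ideal.span {(f : 𝓞 K)})
    (α : O) (hα : α ∈ F) (hα' : α ∉ Ideal.span {(f : O)}) :
    Ideal.span {(f : O), α} = F := by
  haveI : Fact f.Prime := ⟨hf⟩
  haveI : NeZero f := ⟨hf.ne_zero⟩
  set I : Ideal (𝓞 K) := Ideal.span {(f : 𝓞 K)} with hIdef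
  -- α = f * e with e ∉ O
  obtain ⟨e, he⟩ : (f : 𝓞 K) ∣ (α : 𝓞 K) := Ideal.mem_span_singleton.mp ((hF α).mp hα)
  have heO : e ∉ O := by
    intro heO
    exact hα' (Ideal.mem_span_singleton.mpr ⟨⟨e, heO⟩, by apply Subtype.ext; push_cast; exact he⟩)
  -- cardinality of the quotient
  have hrank : Module.finrank ℤ (𝓞 K) = 2 := by
    rw [NumberField.RingOfIntegers.rank, hK]
  have habs : Ideal.absNorm I = f ^ 2 := by
    have hb := Algebra.norm_algebraMap_of_basis (Module.finBasis ℤ (𝓞 K)) (f : ℤ)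
    rw [hIdef, Ideal.absNorm_span_singleton]
    have : ((f : ℤ) : 𝓞 K) = algebraMap ℤ (𝓞 K) (f : ℤ) := rfl
    rw [show ((f : ℕ) : 𝓞 K) = algebraMap ℤ (𝓞 K) (f : ℤ) by push_cast; rfl, hb]
    simp [hrank, Int.natAbs_pow]
  have hcard : Nat.card ((𝓞 K) ⧸ I) = f ^ 2 := by
    rw [← habs, Ideal.absNorm_apply, Submodule.cardQuot_apply]
  haveI : Finite ((𝓞 K) ⧸ I) := Nat.finite_of_card_ne_zero (by
    rw [hcard]; exact pow_ne_zero _ hf.ne_zero)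
  haveI : Nontrivial ((𝓞 K) ⧸ I) := by
    rw [← Finite.one_lt_card_iff_nontrivial, hcard]
    exact Nat.one_lt_pow (by norm_num) hf.one_lt
  -- characteristic f, ZMod f module structure
  have hf0 : ((f : ℕ) : (𝓞 K) ⧸ I) = 0 := by
    rw [← map_natCast (Ideal.Quotient.mk I)]
    exact Ideal.Quotient.eq_zero_iff_mem.mpr (Ideal.mem_span_singleton_self _)
  haveI : CharP ((𝓞 K) ⧸ I) f := (CharP.charP_iff_prime_eq_zero hf).mpr hf0
  letI : Algebra (ZMod f) ((𝓞 K) ⧸ I) := ZMod.algebra _ f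
  have halg : ∀ s : ZMod f,
      algebraMap (ZMod f) ((𝓞 K) ⧸ I) s = ((s.val : ℕ) : (𝓞 K) ⧸ I) := by
    intro s
    conv_lhs => rw [← ZMod.natCast_rightInverse s]
    rw [map_natCast]
  -- finrank of the quotient over ZMod f
  letI : Fintype ((𝓞 K) ⧸ I) := Fintype.ofFinite _
  have hfin : Module.finrank (ZMod f) ((𝓞 K) ⧸ I) = 2 := by
    have h1 := Module.card_eq_pow_finrank (K := ZMod f) (V := (𝓞 K) ⧸ I)
    rw [ZMod.card] at h1
    have h2 : f ^ Module.finrank (ZMod f) ((𝓞 K) ⧸ I) = f ^ 2 := by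
      rw [← h1, ← Nat.card_eq_fintype_card, hcard]
    exact Nat.pow_right_injective hf.two_le h2
  set π := Ideal.Quotient.mk I with hπ
  -- 1 and π e are linearly independent over ZMod f
  have hli : LinearIndependent (ZMod f) ![(1 : (𝓞 K) ⧸ I), π e] := by
    rw [LinearIndependent.pair_iff]
    intro s t hst
    by_cases ht : t = 0
    · subst ht
      refine ⟨?_, rfl⟩
      rw [zero_smul, add_zero, Algebra.smul_def, mul_one, ← map_zero
        (algebraMap (ZMod f) ((𝓞 K) ⧸ I))] at hst
      exact (algebraMap (ZMod f) ((𝓞 K) ⧸ I)).injective hst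
    · exfalso
      apply heO
      have h2 : π e = algebraMap (ZMod f) ((𝓞 K) ⧸ I) (t⁻¹ * (-s)) := by
        have h3 : t • π e = -(s • (1 : (𝓞 K) ⧸ I)) := by
          rw [eq_neg_iff_add_eq_zero, add_comm]; exact hst
        have h4 := congrArg (fun z => t⁻¹ • z) h3
        simp only [smul_smul, inv_mul_cancel₀ ht, one_smul] at h4
        rw [h4, Algebra.smul_def, Algebra.smul_def, mul_one]
        rw [← map_neg, ← map_mul]
      set m := (t⁻¹ * (-s)).val with hm
      have h5 : π e = π ((m : ℕ) : 𝓞 K) := by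
        rw [h2, halg, map_natCast]
      have h6 : e - ((m : ℕ) : 𝓞 K) ∈ I := Ideal.Quotient.eq.mp h5
      exact (hO e).mpr ⟨(m : ℤ), by push_cast; exact h6⟩
  have hsp : Submodule.span (ZMod f) (Set.range ![(1 : (𝓞 K) ⧸ I), π e]) = ⊤ :=
    hli.span_eq_top_of_card_eq_finrank (by simp [hfin])
  -- prove the equality of ideals
  refine le_antisymm (Ideal.span_le.mpr ?_) ?_
  · rintro x hx
    simp only [Set.mem_insert_iff, Set.mem_singleton_iff] at hx
    rcases hx with rfl | rfl
    · refine (hF _).mpr ?_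
      push_cast
      exact Ideal.mem_span_singleton_self _
    · exact hα
  · intro x hx
    obtain ⟨d, hd⟩ : (f : 𝓞 K) ∣ (x : 𝓞 K) := Ideal.mem_span_singleton.mp ((hF x).mp hx)
    have hmem : π d ∈ Submodule.span (ZMod f) {(1 : (𝓞 K) ⧸ I), π e} := by
      have htop : π d ∈ (⊤ : Submodule (ZMod f) ((𝓞 K) ⧸ I)) := trivial
      rw [← hsp] at htop
      have htop' : π d ∈ Submodule.span (ZMod f) {π e, (1 : (𝓞 K) ⧸ I)} := by
        simpa [Matrix.range_cons, Matrix.range_empty] using htop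
      rwa [Set.pair_comm] at htop'
    obtain ⟨a, b, hab⟩ := Submodule.mem_span_pair.mp hmem
    have hab' : π (((a.val : ℕ) : 𝓞 K) + ((b.val : ℕ) : 𝓞 K) * e) = π d := by
      rw [map_add, map_mul, map_natCast, map_natCast, ← hab,
        Algebra.smul_def, Algebra.smul_def, halg, halg, mul_one]
    obtain ⟨t, ht⟩ : (f : 𝓞 K) ∣ (d - (((a.val : ℕ) : 𝓞 K) + ((b.val : ℕ) : 𝓞 K) * e)) :=
      Ideal.mem_span_singleton.mp (Ideal.Quotient.eq.mp hab'.symm)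
    have hftO : (f : 𝓞 K) * t ∈ O := (hO _).mpr ⟨0, by
      simpa using Ideal.mem_span_singleton.mpr ⟨t, rfl⟩⟩
    rw [Ideal.mem_span_pair]
    refine ⟨((a.val : ℕ) : O) + ⟨(f : 𝓞 K) * t, hftO⟩, ((b.val : ℕ) : O), ?_⟩
    apply Subtype.ext
    push_cast
    rw [he, hd]
    linear_combination (-(f : 𝓞 K)) * ht
end

section
/- Let Q be an 𝔉-primary ideal of O and let k ≥ 1 be such that Q ⊆ 𝔉^k and Q ⊄ 𝔉^{k+1}. Then: (i) the set Q' = {x ∈ O : f^{k−1}·x ∈ Q} is an 𝔉-basic ideal of O and Q = f^{k−1}·Q' = {f^{k−1}x : x ∈ Q'}; (ii) if m ∈ ℕ and Q'' is an 𝔉-basic ideal of O with Q = f^m·Q'', then m = k − 1. -/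
set_option synthInstance.maxHeartbeats 1000000
set_option maxHeartbeats 1000000
open NumberField

/-- `Q` is an `F`-basic ideal: an `F`-primary ideal not contained in `F ^ 2`. -/
def IsFBasic {R : Type*} [CommRing R] (F Q : Ideal R) : Prop :=
  IsFPrimary F Q ∧ ¬ Q ≤ F ^ 2

/-- Divisibility of an integer by `f` in `𝓞 K` descends to `ℤ`. -/
lemma aux_dvd_descent (K : Type*) [Field K] [NumberField K] (f : ℕ) (hf : f.Prime)
    (n : ℤ) (hn : (n : 𝓞 K) ∈ Ideal.span {(f : 𝓞 K)}) : (f : ℤ) ∣ n := by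
  rw [Ideal.mem_span_singleton] at hn
  obtain ⟨d, hd⟩ := hn
  have hfK : (f : K) ≠ 0 := Nat.cast_ne_zero.mpr hf.ne_zero
  have h1 : (n : K) = (f : K) * (algebraMap (𝓞 K) K d) := by
    have : (algebraMap (𝓞 K) K) ((n : 𝓞 K)) = (f : K) * (algebraMap (𝓞 K) K d) := by
      rw [hd]; push_cast; ring
    rwa [map_intCast] at this
  have hq : algebraMap ℚ K ((n : ℚ) / (f : ℚ)) = algebraMap (𝓞 K) K d := by
    rw [map_div₀]
    push_cast
    simp only [map_intCast]
    rw [div_eq_iff hfK, h1]; ring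
  have hint : IsIntegral ℤ ((n : ℚ) / (f : ℚ)) := by
    have := d.isIntegral_coe
    rw [← hq] at this
    exact (isIntegral_algebraMap_iff (algebraMap ℚ K).injective).mp this
  obtain ⟨m, hm⟩ := IsIntegrallyClosed.isIntegral_iff.mp hint
  refine ⟨m, ?_⟩
  have hf0 : (f : ℚ) ≠ 0 := Nat.cast_ne_zero.mpr hf.ne_zero
  have : (n : ℚ) = (f : ℚ) * (m : ℚ) := by
    have hm' : (m : ℚ) = (n : ℚ) / (f : ℚ) := by exact_mod_cast hm
    rw [hm']; field_simp
  exact_mod_cast this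

theorem stmt_1
    (K : Type*) [Field K] [NumberField K] (hK : Module.finrank ℚ K = 2)
    (f : ℕ) (hf : f.Prime)
    (O : Subring (𝓞 K))
    (hO : ∀ x : 𝓞 K, x ∈ O ↔ ∃ n : ℤ, x - (n : 𝓞 K) ∈ Ideal.span {(f : 𝓞 K)})
    (F : Ideal O) (hF : ∀ x : O, x ∈ F ↔ (x : 𝓞 K) ∈ Ideal.span {(f : 𝓞 K)})
    (Q : Ideal O) (hQ : IsFPrimary F Q)
    (k : ℕ) (hk : 1 ≤ k) (hQle : Q ≤ F ^ k) (hQnle : ¬ Q ≤ F ^ (k + 1))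
    (Q' : Ideal O) (hQ' : ∀ x : O, x ∈ Q' ↔ (f : O) ^ (k - 1) * x ∈ Q) :
    (IsFBasic F Q' ∧ ∀ y : O, y ∈ Q ↔ ∃ x ∈ Q', y = (f : O) ^ (k - 1) * x) ∧
      (∀ (m : ℕ) (Q'' : Ideal O), IsFBasic F Q'' →
        (∀ y : O, y ∈ Q ↔ ∃ x ∈ Q'', y = (f : O) ^ m * x) → m = k - 1) := by
  -- basic coercion facts
  have hcoe : ∀ j : ℕ, (((f : O) ^ j : O) : 𝓞 K) = (f : 𝓞 K) ^ j := by
    intro j; push_cast; ring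
  have hf0K : (f : 𝓞 K) ≠ 0 := Nat.cast_ne_zero.mpr hf.ne_zero
  have hf0 : (f : O) ≠ 0 := by
    intro h
    apply hf0K
    have := congrArg (Subtype.val) h
    simpa using this
  -- f ∈ F
  have hfF : (f : O) ∈ F := by
    rw [hF]
    simpa using Ideal.mem_span_singleton_self (f : 𝓞 K)
  -- F is not top
  have hFne : F ≠ ⊤ := by
    intro h
    have h1 : (1 : O) ∈ F := h ▸ Submodule.mem_top
    rw [hF] at h1
    have : ((1 : ℤ) : 𝓞 K) ∈ Ideal.span {(f : 𝓞 K)} := by simpa using h1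
    have := aux_dvd_descent K f hf 1 this
    have h1' := Int.le_of_dvd one_pos this
    have h2 := hf.two_le
    omega
  -- membership in F in terms of integer residue
  have hFres : ∀ (x : O) (n : ℤ), (x : 𝓞 K) - (n : 𝓞 K) ∈ Ideal.span {(f : 𝓞 K)} →
      (x ∈ F ↔ (f : ℤ) ∣ n) := by
    intro x n hxn
    constructor
    · intro hx
      apply aux_dvd_descent K f hf
      rw [hF] at hx
      have : (n : 𝓞 K) = (x : 𝓞 K) - ((x : 𝓞 K) - (n : 𝓞 K)) := by ring
      rw [this]
      exact Submodule.sub_mem _ hx hxn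
    · intro hd
      rw [hF]
      have hnm : (n : 𝓞 K) ∈ Ideal.span {(f : 𝓞 K)} := by
        rw [Ideal.mem_span_singleton]
        obtain ⟨c, hc⟩ := hd
        refine ⟨(c : 𝓞 K), ?_⟩
        rw [hc]; push_cast; ring
      have : (x : 𝓞 K) = ((x : 𝓞 K) - (n : 𝓞 K)) + (n : 𝓞 K) := by ring
      rw [this]
      exact Submodule.add_mem _ hxn hnm
  -- F is prime
  have hFprime : F.IsPrime := by
    constructor
    · exact hFne
    · intro x y hxy
      obtain ⟨a, ha⟩ := (hO x).mp x.2
      obtain ⟨b, hb⟩ := (hO y).mp y.2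
      have hxyres : ((x * y : O) : 𝓞 K) - ((a * b : ℤ) : 𝓞 K) ∈ Ideal.span {(f : 𝓞 K)} := by
        have : ((x * y : O) : 𝓞 K) - ((a * b : ℤ) : 𝓞 K) =
            (x : 𝓞 K) * ((y : 𝓞 K) - (b : 𝓞 K)) + (b : 𝓞 K) * ((x : 𝓞 K) - (a : 𝓞 K)) := by
          push_cast; ring
        rw [this]
        exact Submodule.add_mem _ (Ideal.mul_mem_left _ _ hb) (Ideal.mul_mem_left _ _ ha)
      have hdvd : (f : ℤ) ∣ a * b := (hFres (x * y) (a * b) hxyres).mp hxy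
      rcases Int.Prime.dvd_mul' hf hdvd with h | h
      · exact Or.inl ((hFres x a ha).mpr h)
      · exact Or.inr ((hFres y b hb).mpr h)
  -- F * F = span {f} * F
  have hFF : F * F = Ideal.span {(f : O)} * F := by
    apply le_antisymm
    · rw [Ideal.mul_le]
      intro r hr s hs
      obtain ⟨d, hd⟩ := Ideal.mem_span_singleton.mp ((hF r).mp hr)
      have hsK : (s : 𝓞 K) ∈ Ideal.span {(f : 𝓞 K)} := (hF s).mp hs
      have hdsK : d * (s : 𝓞 K) ∈ Ideal.span {(f : 𝓞 K)} := Ideal.mul_mem_left _ _ hsK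
      have hdsO : d * (s : 𝓞 K) ∈ O := by
        rw [hO]
        exact ⟨0, by simpa using hdsK⟩
      have hzF : (⟨d * (s : 𝓞 K), hdsO⟩ : O) ∈ F := by
        rw [hF]; exact hdsK
      have hrs : r * s = (f : O) * ⟨d * (s : 𝓞 K), hdsO⟩ := by
        apply Subtype.ext
        show (r : 𝓞 K) * (s : 𝓞 K) = ((f : O) : 𝓞 K) * (d * (s : 𝓞 K))
        push_cast
        rw [hd]; ring
      rw [hrs]
      exact Ideal.mul_mem_mul (Ideal.mem_span_singleton_self _) hzF
    · exact Ideal.mul_mono (Ideal.span_le.mpr (by simpa using hfF)) le_rfl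
  -- F ^ (j+1) = span {f^j} * F
  have hFpow : ∀ j : ℕ, F ^ (j + 1) = Ideal.span {(f : O) ^ j} * F := by
    intro j
    induction j with
    | zero => simp [Ideal.span_singleton_one]
    | succ j ih =>
      rw [pow_succ, ih, mul_assoc, hFF, ← mul_assoc,
        Ideal.span_singleton_mul_span_singleton, ← pow_succ]
  -- cancellation for ideals
  have cancel : ∀ (c : O), c ≠ 0 → ∀ (I J : Ideal O),
      Ideal.span {c} * I ≤ Ideal.span {c} * J → I ≤ J := by
    intro c hc I J h x hx
    have hcx : c * x ∈ Ideal.span {c} * J :=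
      h (Ideal.mul_mem_mul (Ideal.mem_span_singleton_self c) hx)
    obtain ⟨y, hy, hxy⟩ := Ideal.mem_span_singleton_mul.mp hcx
    have : y = x := mul_left_cancel₀ hc hxy
    rwa [← this]
  have hfk0 : (f : O) ^ (k - 1) ≠ 0 := pow_ne_zero _ hf0
  have hkk : k - 1 + 1 = k := by omega
  have hFk : F ^ k = Ideal.span {(f : O) ^ (k - 1)} * F := by
    have := hFpow (k - 1)
    rwa [hkk] at this
  -- Q = span {f^(k-1)} * Q'
  have hQQ' : Q = Ideal.span {(f : O) ^ (k - 1)} * Q' := by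
    apply le_antisymm
    · intro y hy
      have : y ∈ Ideal.span {(f : O) ^ (k - 1)} * F := hFk ▸ hQle hy
      obtain ⟨w, hwF, hw⟩ := Ideal.mem_span_singleton_mul.mp this
      have hwQ' : w ∈ Q' := (hQ' w).mpr (by rwa [hw])
      exact Ideal.mem_span_singleton_mul.mpr ⟨w, hwQ', hw⟩
    · intro y hy
      obtain ⟨w, hwQ', hw⟩ := Ideal.mem_span_singleton_mul.mp hy
      rw [← hw]
      exact (hQ' w).mp hwQ'
  -- Q ⊆ Q'
  have hQsub : Q ≤ Q' := fun y hy => (hQ' y).mpr (Ideal.mul_mem_left _ _ hy)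
  -- Q' ≤ F
  have hQ'F : Q' ≤ F := by
    intro x hx
    have h1 : (f : O) ^ (k - 1) * x ∈ Ideal.span {(f : O) ^ (k - 1)} * F :=
      hFk ▸ hQle ((hQ' x).mp hx)
    obtain ⟨w, hwF, hw⟩ := Ideal.mem_span_singleton_mul.mp h1
    have : w = x := mul_left_cancel₀ hfk0 hw
    rwa [← this]
  -- radical Q' = F
  have hradQ' : Q'.radical = F := by
    apply le_antisymm
    · rw [← hFprime.radical]
      exact Ideal.radical_mono hQ'F
    · rw [← hQ.2]
      exact Ideal.radical_mono hQsub
  -- Q' is primary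
  have hQ'primary : Q'.IsPrimary := by
    rw [Ideal.isPrimary_iff]
    constructor
    · intro h
      have : (1 : O) ∈ F := hQ'F (h ▸ Submodule.mem_top)
      exact hFne (Ideal.eq_top_of_isUnit_mem _ this isUnit_one)
    · intro x y hxy
      have hxy' : ((f : O) ^ (k - 1) * x) * y ∈ Q := by
        have := (hQ' (x * y)).mp hxy
        rwa [← mul_assoc] at this
      rcases (Ideal.isPrimary_iff.mp hQ.1).2 hxy' with h | h
      · exact Or.inl ((hQ' x).mpr h)
      · right
        rw [hradQ']
        rw [← hQ.2]
        exact h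
  -- Q' is not contained in F^2
  have hQ'notle : ¬ Q' ≤ F ^ 2 := by
    intro h
    apply hQnle
    rw [hQQ']
    calc Ideal.span {(f : O) ^ (k - 1)} * Q' ≤ Ideal.span {(f : O) ^ (k - 1)} * F ^ 2 :=
          Ideal.mul_mono_right h
      _ = F ^ (k + 1) := by
          rw [show (2 : ℕ) = 1 + 1 from rfl, hFpow 1, pow_one, ← mul_assoc,
            Ideal.span_singleton_mul_span_singleton, ← pow_succ, hkk]
          rw [← hFpow k]
  refine ⟨⟨⟨⟨hQ'primary, hradQ'⟩, hQ'notle⟩, ?_⟩, ?_⟩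
  · intro y
    rw [hQQ']
    rw [Ideal.mem_span_singleton_mul]
    constructor
    · rintro ⟨x, hx, hxy⟩; exact ⟨x, hx, hxy.symm⟩
    · rintro ⟨x, hx, hxy⟩; exact ⟨x, hx, hxy.symm⟩
  · intro m Q'' hbasic hset
    have hQQ'' : Q = Ideal.span {(f : O) ^ m} * Q'' := by
      apply le_antisymm
      · intro y hy
        obtain ⟨x, hx, hxy⟩ := (hset y).mp hy
        exact Ideal.mem_span_singleton_mul.mpr ⟨x, hx, hxy.symm⟩
      · intro y hy
        obtain ⟨x, hx, hxy⟩ := Ideal.mem_span_singleton_mul.mp hy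
        exact (hset y).mpr ⟨x, hx, hxy.symm⟩
    have hQ''F : Q'' ≤ F := by
      rw [← hbasic.1.2]
      exact Ideal.le_radical
    -- m + 1 ≤ k
    have hm1 : m + 1 ≤ k := by
      by_contra hcon
      apply hQnle
      have hle : Q ≤ F ^ (m + 1) := by
        rw [hQQ'', hFpow m]
        exact Ideal.mul_mono_right hQ''F
      exact le_trans hle (Ideal.pow_le_pow_right (by omega))
    -- k - 1 ≤ m
    have hm2 : k ≤ m + 1 := by
      by_contra hcon
      apply hbasic.2
      have hsplit : F ^ k = Ideal.span {(f : O) ^ m} * F ^ (k - m) := by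
        have h1 : k - m = (k - m - 1) + 1 := by omega
        rw [h1, hFpow, ← mul_assoc, Ideal.span_singleton_mul_span_singleton, ← pow_add]
        rw [show m + (k - m - 1) = k - 1 by omega, ← hFk]
      have : Ideal.span {(f : O) ^ m} * Q'' ≤ Ideal.span {(f : O) ^ m} * F ^ (k - m) := by
        rw [← hQQ'', ← hsplit]
        exact hQle
      have hQ''le : Q'' ≤ F ^ (k - m) := cancel _ (pow_ne_zero _ hf0) _ _ this
      exact le_trans hQ''le (Ideal.pow_le_pow_right (by omega))
    omega
end

section
/- Let ω ∈ D be such that D = ℤ[ω]. Let x, y ∈ ℤ, not both zero, and set t = f(x + ωy) ∈ O. Assume t is 𝔉-primary. Then: (i) gcd(x, y) = f^a for some a ≥ 0; (ii) t is 𝔉-basic if and only if x and y are coprime; (iii) if t is 𝔉-basic, then t is an irreducible element of O and tO is not a prime ideal of O. -/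
set_option synthInstance.maxHeartbeats 1000000
set_option maxHeartbeats 1000000

open NumberField

private theorem lemB' (K : Type*) [Field K] [NumberField K] (hK : Module.finrank ℚ K = 2)
    (ω : 𝓞 K) (hω : Algebra.adjoin ℤ {ω} = ⊤) (d : 𝓞 K) :
    ∃ m n : ℤ, d = (m : 𝓞 K) + ω * (n : 𝓞 K) := by
  have hint : IsIntegral ℤ ω := IsIntegral.of_finite ℤ ω
  have hmon := minpoly.monic hint
  have hdeg : (minpoly ℤ ω).natDegree ≤ 2 := by
    have h1 := minpoly.isIntegrallyClosed_eq_field_fractions ℚ K hint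
    have h2 : (minpoly ℚ (algebraMap (𝓞 K) K ω)).natDegree ≤ 2 := by
      rw [← hK]; exact minpoly.natDegree_le _
    rwa [h1, Polynomial.natDegree_map_eq_of_injective
      (algebraMap ℤ ℚ).injective_int] at h2
  have hne1 : minpoly ℤ ω ≠ 1 := by
    intro h
    have := minpoly.natDegree_pos hint
    rw [h] at this; simp at this
  have hd : d ∈ Algebra.adjoin ℤ ({ω} : Set (𝓞 K)) := by rw [hω]; trivial
  rw [Algebra.adjoin_singleton_eq_range_aeval] at hd
  obtain ⟨p, hp⟩ := hd
  have hr : (p %ₘ minpoly ℤ ω).natDegree ≤ 1 := by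
    have := Polynomial.natDegree_modByMonic_lt p hmon hne1
    omega
  have heq : Polynomial.aeval ω (p %ₘ minpoly ℤ ω) = d := by
    rw [Polynomial.modByMonic_eq_sub_mul_div p (minpoly ℤ ω)]
    simp only [map_sub, map_mul, minpoly.aeval, zero_mul, sub_zero]; exact hp
  rw [Polynomial.eq_X_add_C_of_natDegree_le_one hr] at heq
  refine ⟨(p %ₘ minpoly ℤ ω).coeff 0, (p %ₘ minpoly ℤ ω).coeff 1, ?_⟩
  rw [← heq]
  simp [mul_comm]
  ring

private theorem lemA' (K : Type*) [Field K] [NumberField K] (hK : Module.finrank ℚ K = 2)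
    (ω : 𝓞 K) (hω : Algebra.adjoin ℤ {ω} = ⊤) (a b : ℤ)
    (h : (a : 𝓞 K) + ω * (b : 𝓞 K) = 0) : a = 0 ∧ b = 0 := by
  by_cases hb : b = 0
  · subst hb
    simp only [Int.cast_zero, mul_zero, add_zero] at h
    exact ⟨by exact_mod_cast h, rfl⟩
  · exfalso
    have hbK : ((b : ℤ) : K) ≠ 0 := Int.cast_ne_zero.mpr hb
    have hmap : (a : K) + algebraMap (𝓞 K) K ω * (b : K) = 0 := by
      have := congrArg (algebraMap (𝓞 K) K) h
      simpa only [map_add, map_mul, map_intCast, map_zero] using this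
    have hr : algebraMap (𝓞 K) K ω = algebraMap ℚ K ((-a : ℚ) / (b : ℚ)) := by
      rw [map_div₀]
      have h1 : algebraMap ℚ K ((-a : ℤ) : ℚ) = ((-a : ℤ) : K) := map_intCast _ _
      have h2 : algebraMap ℚ K ((b : ℤ) : ℚ) = ((b : ℤ) : K) := map_intCast _ _
      push_cast at h1 h2 ⊢
      rw [h1, h2, eq_div_iff (by exact_mod_cast hbK)]
      linear_combination hmap
    have himg : ∀ w : 𝓞 K, ∃ q : ℚ, algebraMap (𝓞 K) K w = algebraMap ℚ K q := by
      intro w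
      obtain ⟨m, n, hw⟩ := lemB' K hK ω hω w
      refine ⟨(m : ℚ) + ((-a : ℚ) / (b : ℚ)) * n, ?_⟩
      rw [hw]
      simp only [map_add, map_mul, map_intCast, hr]
    have hsurj : Function.Surjective (algebraMap ℚ K) := by
      intro z
      obtain ⟨u, v, hv, huv⟩ := IsFractionRing.div_surjective (A := 𝓞 K) z
      obtain ⟨qu, hqu⟩ := himg u
      obtain ⟨qv, hqv⟩ := himg v
      exact ⟨qu / qv, by rw [map_div₀, ← hqu, ← hqv, huv]⟩
    have hbot : (⊥ : Subalgebra ℚ K) = ⊤ := by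
      rw [eq_top_iff]
      intro z _
      obtain ⟨q, rfl⟩ := hsurj z
      exact ⟨q, rfl⟩
    have := Subalgebra.bot_eq_top_iff_finrank_eq_one.mp hbot
    rw [hK] at this
    exact absurd this (by norm_num)

theorem stmt_2
    (K : Type*) [Field K] [NumberField K] (hK : Module.finrank ℚ K = 2)
    (f : ℕ) (hf : f.Prime)
    (O : Subring (𝓞 K))
    (hO : ∀ x : 𝓞 K, x ∈ O ↔ ∃ n : ℤ, x - (n : 𝓞 K) ∈ Ideal.span {(f : 𝓞 K)})
    (F : Ideal O) (hF : ∀ x : O, x ∈ F ↔ (x : 𝓞 K) ∈ Ideal.span {(f : 𝓞 K)})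
    (ω : 𝓞 K) (hω : Algebra.adjoin ℤ {ω} = ⊤)
    (x y : ℤ) (hxy : ¬ (x = 0 ∧ y = 0))
    (t : O) (ht : (t : 𝓞 K) = (f : 𝓞 K) * ((x : 𝓞 K) + ω * (y : 𝓞 K)))
    (htp : IsFPrimary F (Ideal.span {t})) :
    (∃ a : ℕ, Int.gcd x y = f ^ a) ∧
    (IsFBasic F (Ideal.span {t}) ↔ IsCoprime x y) ∧
    (IsFBasic F (Ideal.span {t}) → Irreducible t ∧ ¬ (Ideal.span {t}).IsPrime) := by
  have hA := lemA' K hK ω hω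
  have hB := lemB' K hK ω hω
  have hfK : (f : 𝓞 K) ≠ 0 := Nat.cast_ne_zero.mpr hf.ne_zero
  have hfZ : Prime (f : ℤ) := Nat.prime_iff_prime_int.mp hf
  have hw0 : (x : 𝓞 K) + ω * (y : 𝓞 K) ≠ 0 := fun h => hxy ⟨(hA x y h).1, (hA x y h).2⟩
  have ht0 : t ≠ 0 := by
    intro h
    apply mul_ne_zero hfK hw0
    rw [← ht, h, ZeroMemClass.coe_zero]
  have hQprim := Ideal.isPrimary_iff.mp htp.1
  have hQne : Ideal.span {t} ≠ ⊤ := hQprim.1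
  have hprimary : ∀ {a b : ↥O}, a * b ∈ Ideal.span {t} → a ∈ Ideal.span {t} ∨ b ∈ (Ideal.span {t}).radical := hQprim.2
  have hfd_mem : ∀ d : 𝓞 K, (f : 𝓞 K) * d ∈ O := by
    intro d
    rw [hO]
    exact ⟨0, by simpa using Ideal.mem_span_singleton.mpr ⟨d, rfl⟩⟩
  -- units of 𝓞 K which are integers are units of ℤ
  have hCunit : ∀ q : ℤ, IsUnit ((q : ℤ) : 𝓞 K) → IsUnit q := by
    intro q hq
    obtain ⟨v, hv⟩ := isUnit_iff_exists_inv.mp hq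
    obtain ⟨m, n, rfl⟩ := hB v
    have : ((q * m - 1 : ℤ) : 𝓞 K) + ω * ((q * n : ℤ) : 𝓞 K) = 0 := by
      push_cast
      linear_combination hv
    have h1 := (hA _ _ this).1
    have : q * m = 1 := by omega
    exact IsUnit.of_mul_eq_one _ this
  have hfunit : ¬ IsUnit (f : ℤ) := hfZ.not_unit
  -- main divisibility fact for (i)
  have key : ∀ p : ℕ, p.Prime → (p : ℤ) ∣ x → (p : ℤ) ∣ y → p = f := by
    intro p hp hpx hpy
    by_contra hpf
    obtain ⟨x', hx'⟩ := hpx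
    obtain ⟨y', hy'⟩ := hpy
    set S : O := ⟨(f : 𝓞 K) * ((x' : 𝓞 K) + ω * (y' : 𝓞 K)), hfd_mem _⟩ with hS
    have htS : t = S * (p : O) := by
      apply Subtype.ext
      push_cast [ht, hx', hy']
      ring
    have hmem : S * (p : O) ∈ Ideal.span {t} := htS ▸ Ideal.mem_span_singleton_self t
    rcases hprimary hmem with hSm | hpm
    · obtain ⟨u, hu⟩ := Ideal.mem_span_singleton.mp hSm
      have hcoe : (S : 𝓞 K) = (t : 𝓞 K) * (u : 𝓞 K) := congrArg Subtype.val hu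
      have hz : ((x' : 𝓞 K) + ω * (y' : 𝓞 K)) * (1 - (p : 𝓞 K) * (u : 𝓞 K)) = 0 := by
        apply mul_left_cancel₀ hfK
        rw [mul_zero]
        push_cast [ht, hx', hy'] at hcoe ⊢
        linear_combination hcoe
      rcases mul_eq_zero.mp hz with h | h
      · obtain ⟨h1, h2⟩ := hA x' y' h
        exact hxy ⟨by rw [hx', h1, mul_zero], by rw [hy', h2, mul_zero]⟩
      · have hpu : ((p : ℤ) : 𝓞 K) * (u : 𝓞 K) = 1 := by
          push_cast
          linear_combination -h
        have := hCunit p (IsUnit.of_mul_eq_one _ hpu)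
        exact (Nat.prime_iff_prime_int.mp hp).not_unit this
    · rw [htp.2] at hpm
      have hpO : ((p : ℕ) : 𝓞 K) ∈ Ideal.span {(f : 𝓞 K)} := by
        have := (hF _).mp hpm
        simpa using this
      obtain ⟨d, hd⟩ := Ideal.mem_span_singleton.mp hpO
      have hcop : IsCoprime (p : ℤ) (f : ℤ) := by
        rw [Int.isCoprime_iff_gcd_eq_one]
        simpa [Int.gcd_natCast_natCast] using (Nat.coprime_primes hp hf).mpr hpf
      obtain ⟨u, v, huv⟩ := hcop
      have hfu : (f : 𝓞 K) * ((u : 𝓞 K) * d + (v : 𝓞 K)) = 1 := by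
        have hZ := congrArg (fun z : ℤ => (z : 𝓞 K)) huv
        push_cast at hZ
        linear_combination hZ - (u : 𝓞 K) * hd
      have : IsUnit ((f : ℤ) : 𝓞 K) := IsUnit.of_mul_eq_one _ (by push_cast; exact hfu)
      exact hfunit (hCunit _ this)
  -- part (i)
  have hgcd0 : Int.gcd x y ≠ 0 := by
    rw [Ne, Int.gcd_eq_zero_iff]
    exact hxy
  have part1 : ∃ a : ℕ, Int.gcd x y = f ^ a := by
    refine ⟨(Int.gcd x y).primeFactorsList.length, ?_⟩
    refine Nat.eq_prime_pow_of_unique_prime_dvd hgcd0 ?_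
    intro d hd hdvd
    refine key d hd ?_ ?_
    · exact dvd_trans (Int.natCast_dvd_natCast.mpr hdvd) (Int.gcd_dvd_left x y)
    · exact dvd_trans (Int.natCast_dvd_natCast.mpr hdvd) (Int.gcd_dvd_right x y)
  -- F^2 facts
  have hF2 : ∀ z : O, z ∈ F ^ 2 → (z : 𝓞 K) ∈ Ideal.span {((f : 𝓞 K)) ^ 2} := by
    intro z hz
    rw [← Ideal.span_singleton_pow]
    have hle : F ^ 2 ≤ Ideal.comap O.subtype (Ideal.span {(f : 𝓞 K)} ^ 2) := by
      rw [pow_two, pow_two]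
      refine Ideal.mul_le.mpr fun a ha b hb => ?_
      rw [Ideal.mem_comap, map_mul]
      exact Ideal.mul_mem_mul ((hF a).mp ha) ((hF b).mp hb)
    exact hle hz
  have hfF : (f : O) ∈ F := by
    rw [hF]
    exact_mod_cast Ideal.mem_span_singleton_self _
  -- basic → coprime
  have hb2c : IsFBasic F (Ideal.span {t}) → IsCoprime x y := by
    intro hb
    obtain ⟨a, ha⟩ := part1
    rcases Nat.eq_zero_or_pos a with ha0 | hapos
    · rw [Int.isCoprime_iff_gcd_eq_one, ha, ha0, pow_zero]
    · exfalso
      have hfg : (f : ℤ) ∣ ↑(Int.gcd x y) := by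
        rw [ha]
        exact_mod_cast dvd_pow_self (f : ℤ) hapos.ne'
      have hfx : (f : ℤ) ∣ x := dvd_trans hfg (Int.gcd_dvd_left x y)
      have hfy : (f : ℤ) ∣ y := dvd_trans hfg (Int.gcd_dvd_right x y)
      obtain ⟨x₁, hx₁⟩ := hfx
      obtain ⟨y₁, hy₁⟩ := hfy
      set S₁ : O := ⟨(f : 𝓞 K) * ((x₁ : 𝓞 K) + ω * (y₁ : 𝓞 K)), hfd_mem _⟩ with hS₁
      have hS₁F : S₁ ∈ F := by
        rw [hF]
        exact Ideal.mem_span_singleton.mpr ⟨_, rfl⟩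
      have htS₁ : t = (f : O) * S₁ := by
        apply Subtype.ext
        push_cast [ht, hx₁, hy₁]
        ring
      have htF2 : t ∈ F ^ 2 := by
        rw [pow_two, htS₁]
        exact Ideal.mul_mem_mul hfF hS₁F
      exact hb.2 ((Ideal.span_singleton_le_iff_mem _).mpr htF2)
  -- coprime → basic
  have hc2b : IsCoprime x y → IsFBasic F (Ideal.span {t}) := by
    intro hcop
    refine ⟨htp, fun hle => ?_⟩
    have htF2 : t ∈ F ^ 2 := hle (Ideal.mem_span_singleton_self t)
    have := hF2 t htF2
    obtain ⟨c, hc⟩ := Ideal.mem_span_singleton.mp this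
    rw [ht] at hc
    have hwc : (x : 𝓞 K) + ω * (y : 𝓞 K) = (f : 𝓞 K) * c := by
      apply mul_left_cancel₀ hfK
      linear_combination hc
    obtain ⟨m, n, rfl⟩ := hB c
    have hz : ((x - f * m : ℤ) : 𝓞 K) + ω * ((y - f * n : ℤ) : 𝓞 K) = 0 := by
      push_cast
      linear_combination hwc
    obtain ⟨h1, h2⟩ := hA _ _ hz
    have hfx : (f : ℤ) ∣ x := ⟨m, by omega⟩
    have hfy : (f : ℤ) ∣ y := ⟨n, by omega⟩
    exact hfunit (hcop.isUnit_of_dvd' hfx hfy)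
  -- ω ∉ O
  have hωO : ω ∉ O := by
    intro h
    obtain ⟨n, hn⟩ := (hO ω).mp h
    obtain ⟨d, hd⟩ := Ideal.mem_span_singleton.mp hn
    obtain ⟨m', n', rfl⟩ := hB d
    have hz : ((-(n + f * m') : ℤ) : 𝓞 K) + ω * ((1 - f * n' : ℤ) : 𝓞 K) = 0 := by
      push_cast
      linear_combination hd
    have h2 := (hA _ _ hz).2
    have : (f : ℤ) * n' = 1 := by omega
    exact hfunit (IsUnit.of_mul_eq_one _ this)
  -- part (iii)
  have part3 : IsFBasic F (Ideal.span {t}) → Irreducible t ∧ ¬ (Ideal.span {t}).IsPrime := by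
    intro hb
    constructor
    · constructor
      · intro hu
        exact hQne (Ideal.span_singleton_eq_top.mpr hu)
      · intro a b hab
        by_contra hcon
        push_neg at hcon
        obtain ⟨hna, hnb⟩ := hcon
        have h1 : a * b ∈ Ideal.span {t} := hab ▸ Ideal.mem_span_singleton_self t
        have h2 : b * a ∈ Ideal.span {t} := (mul_comm a b) ▸ h1
        rcases hprimary h1 with haQ | hbF
        · obtain ⟨c, hc⟩ := Ideal.mem_span_singleton.mp haQ
          have h3 : t * (c * b) = t * 1 := by
            rw [mul_one]
            calc t * (c * b) = (t * c) * b := by ring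
              _ = a * b := by rw [hc]
              _ = t := hab.symm
          have h4 := mul_left_cancel₀ ht0 h3
          exact hnb (IsUnit.of_mul_eq_one _ (by rw [mul_comm]; exact h4))
        rcases hprimary h2 with hbQ | haF
        · obtain ⟨c, hc⟩ := Ideal.mem_span_singleton.mp hbQ
          have h3 : t * (c * a) = t * 1 := by
            rw [mul_one]
            calc t * (c * a) = a * (t * c) := by ring
              _ = a * b := by rw [hc]
              _ = t := hab.symm
          have h4 := mul_left_cancel₀ ht0 h3
          exact hna (IsUnit.of_mul_eq_one _ (by rw [mul_comm]; exact h4))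
        · rw [htp.2] at haF hbF
          have : t ∈ F ^ 2 := by
            rw [pow_two, hab]
            exact Ideal.mul_mem_mul haF hbF
          exact hb.2 ((Ideal.span_singleton_le_iff_mem _).mpr this)
    · intro hpr
      have hFeq : F = Ideal.span {t} := by rw [← htp.2, hpr.radical]
      have helt : (⟨(f : 𝓞 K) * (ω * ((x : 𝓞 K) + ω * (y : 𝓞 K))), hfd_mem _⟩ : O) ∈ F := by
        rw [hF]
        exact Ideal.mem_span_singleton.mpr ⟨_, rfl⟩
      rw [hFeq] at helt
      obtain ⟨u, hu⟩ := Ideal.mem_span_singleton.mp helt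
      have hcoe : (f : 𝓞 K) * (ω * ((x : 𝓞 K) + ω * (y : 𝓞 K)))
          = (t : 𝓞 K) * (u : 𝓞 K) := congrArg Subtype.val hu
      rw [ht] at hcoe
      have h4 : ((x : 𝓞 K) + ω * (y : 𝓞 K)) * (ω - (u : 𝓞 K)) = 0 := by
        apply mul_left_cancel₀ hfK
        rw [mul_zero]
        linear_combination hcoe
      rcases mul_eq_zero.mp h4 with h | h
      · exact absurd h hw0
      · rw [sub_eq_zero.mp h] at hωO
        exact hωO u.2
  exact ⟨part1, ⟨hb2c, hc2b⟩, part3⟩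
end

section
/- Let I be a nonzero ideal of O. Then: (i) if there exists z ∈ D \ O with zI ⊆ I, then I = DI; (ii) if I ≠ DI, then the index of I in DI as additive abelian groups equals f. -/
set_option synthInstance.maxHeartbeats 1000000
set_option maxHeartbeats 1000000

open NumberField

private lemma aux_dvd_stmt3 (K : Type*) [Field K] [NumberField K]
    (hK : Module.finrank ℚ K = 2) (f : ℕ) (hf : f.Prime) (n : ℤ)
    (h : (n : 𝓞 K) ∈ Ideal.span {(f : 𝓞 K)}) : (f : ℤ) ∣ n := by
  rw [Ideal.mem_span_singleton] at h
  obtain ⟨u, hu⟩ := h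
  have hrank : Module.finrank ℤ (𝓞 K) = 2 := by rw [RingOfIntegers.rank, hK]
  let b := Module.Free.chooseBasis ℤ (𝓞 K)
  have hcard : Fintype.card (Module.Free.ChooseBasisIndex ℤ (𝓞 K)) = 2 := by
    rw [← Module.finrank_eq_card_chooseBasisIndex, hrank]
  have key : ∀ m : ℤ, Algebra.norm ℤ ((m : 𝓞 K)) = m ^ 2 := fun m => by
    rw [show ((m : 𝓞 K)) = algebraMap ℤ (𝓞 K) m from rfl,
      Algebra.norm_algebraMap_of_basis b, hcard]
  have h2 : n ^ 2 = (f : ℤ) ^ 2 * Algebra.norm ℤ u := by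
    rw [← key n, hu, map_mul, show ((f:ℕ) : 𝓞 K) = (((f:ℕ):ℤ) : 𝓞 K) by push_cast; ring, key]
  have hp : Prime (f : ℤ) := Nat.prime_iff_prime_int.1 hf
  exact hp.dvd_of_dvd_pow (show (f:ℤ) ∣ n ^ 2 from ⟨(f : ℤ) * Algebra.norm ℤ u, by linarith⟩)

private lemma aux_decomp_stmt3 (K : Type*) [Field K] [NumberField K]
    (hK : Module.finrank ℚ K = 2)
    (f : ℕ) (hf : f.Prime)
    (O : Subring (𝓞 K))
    (hO : ∀ x : 𝓞 K, x ∈ O ↔ ∃ n : ℤ, x - (n : 𝓞 K) ∈ Ideal.span {(f : 𝓞 K)})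
    (z : 𝓞 K) (hz : z ∉ O) (d : 𝓞 K) :
    ∃ a : 𝓞 K, a ∈ O ∧ ∃ b : ℤ, d = a + (b : 𝓞 K) * z := by
  have hdvd : ∀ n : ℤ, (n : 𝓞 K) ∈ Ideal.span {(f : 𝓞 K)} → (f : ℤ) ∣ n :=
    fun n h => aux_dvd_stmt3 K hK f hf n h

  haveI : Fact f.Prime := ⟨hf⟩
  haveI : NeZero f := ⟨hf.ne_zero⟩
  set F : Ideal (𝓞 K) := Ideal.span {(f : (𝓞 K))} with hF
  have hFO : ∀ x : (𝓞 K), x ∈ F → x ∈ O := fun x hx => (hO x).2 ⟨0, by simpa using hx⟩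
  have hintO : ∀ n : ℤ, (n : (𝓞 K)) ∈ O := fun n => (hO _).2 ⟨n, by simp⟩
  set V := (𝓞 K) ⧸ F with hV
  haveI : Module (ZMod f) V := AddCommGroup.zmodModule (by
    intro x
    obtain ⟨y, rfl⟩ := Ideal.Quotient.mk_surjective x
    rw [← map_nsmul]
    apply Ideal.Quotient.eq_zero_iff_mem.2
    rw [nsmul_eq_mul, hF, Ideal.mem_span_singleton]
    exact ⟨y, by push_cast; ring⟩)
  have hsmul : ∀ (m : ℤ) (v : V), ((m : ZMod f)) • v = m • v := fun m v =>
    Int.cast_smul_eq_zsmul (ZMod f) m v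
  -- V is spanned by the images of a ℤ-basis of (𝓞 K)
  set bR := Module.Free.chooseBasis ℤ (𝓞 K) with hbR
  set g : Module.Free.ChooseBasisIndex ℤ (𝓞 K) → V := fun i => Ideal.Quotient.mk F (bR i) with hg
  have hspan : Submodule.span (ZMod f) (Set.range g) = ⊤ := by
    rw [Submodule.eq_top_iff']
    intro v
    obtain ⟨y, rfl⟩ := Ideal.Quotient.mk_surjective v
    have : y = ∑ i, bR.repr y i • bR i := (bR.sum_repr y).symm
    rw [this, map_sum]
    apply Submodule.sum_mem
    intro i _
    rw [map_zsmul, ← hsmul]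
    exact Submodule.smul_mem _ _ (Submodule.subset_span ⟨i, rfl⟩)
  have hfin : Module.Finite (ZMod f) V := by
    classical
    exact ⟨⟨Finset.univ.image g, by
        rw [Finset.coe_image, Finset.coe_univ, Set.image_univ, hspan]⟩⟩
  have hcard : Fintype.card (Module.Free.ChooseBasisIndex ℤ (𝓞 K)) = 2 := by
    rw [← Module.finrank_eq_card_chooseBasisIndex, RingOfIntegers.rank, hK]
  have hrank : Module.finrank (ZMod f) V ≤ 2 := by
    calc Module.finrank (ZMod f) V = Module.finrank (ZMod f) (⊤ : Submodule (ZMod f) V) :=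
          (finrank_top _ _).symm
      _ = Module.finrank (ZMod f) (Submodule.span (ZMod f) (Set.range g)) := by rw [hspan]
      _ ≤ 2 := by
          classical
          refine le_trans (finrank_span_le_card _) ?_
          refine le_trans (by convert Fintype.card_range_le g; rfl; rw [Set.toFinset_card]) ?_
          rw [hcard]
  -- the three elements 1, z, d are dependent mod f
  set v : Fin 3 → V := ![Ideal.Quotient.mk F 1, Ideal.Quotient.mk F z, Ideal.Quotient.mk F d]
  have hnli : ¬ LinearIndependent (ZMod f) v := by
    intro hli
    have := hli.fintype_card_le_finrank
    simp only [Fintype.card_fin] at this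
    omega
  obtain ⟨co, hsum, i0, hi0⟩ := Fintype.not_linearIndependent_iff.1 hnli
  set a0 : ℤ := ((co 0).val : ℤ) with ha0
  set b0 : ℤ := ((co 1).val : ℤ) with hb0
  set c0 : ℤ := ((co 2).val : ℤ) with hc0
  have hvalcast : ∀ x : ZMod f, ((x.val : ℤ) : ZMod f) = x := fun x => by
    push_cast
    rw [ZMod.natCast_val, ZMod.cast_id]
  have hw : ((a0 : (𝓞 K)) + (b0 : (𝓞 K)) * z + (c0 : (𝓞 K)) * d) ∈ F := by
    rw [← Ideal.Quotient.eq_zero_iff_mem]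
    have e1 : Ideal.Quotient.mk F ((a0 : (𝓞 K)) + (b0 : (𝓞 K)) * z + (c0 : (𝓞 K)) * d)
        = co 0 • v 0 + co 1 • v 1 + co 2 • v 2 := by
      have : ∀ (m : ℤ) (y : (𝓞 K)), Ideal.Quotient.mk F ((m : (𝓞 K)) * y)
          = ((m : ZMod f)) • Ideal.Quotient.mk F y := fun m y => by
        rw [hsmul, map_mul, map_intCast, ← zsmul_eq_mul]
      rw [map_add, map_add, this, this, show ((a0 : (𝓞 K))) = (a0 : (𝓞 K)) * 1 by ring, this]
      simp only [v, Matrix.cons_val_zero, Matrix.cons_val_one, Matrix.head_cons,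
        Matrix.cons_val_two, Matrix.tail_cons, ha0, hb0, hc0, hvalcast]
    rw [e1, ← Fin.sum_univ_three (fun j => co j • v j)]
    exact hsum
  rcases eq_or_ne (co 2) 0 with h2 | h2
  · rcases eq_or_ne (co 1) 0 with h1 | h1
    · -- both zero: co 0 must be nonzero, contradiction via hdvd
      exfalso
      have h0 : co 0 ≠ 0 := by
        fin_cases i0 <;> simp_all
      have hb0z : b0 = 0 := by rw [hb0, h1]; simp
      have hc0z : c0 = 0 := by rw [hc0, h2]; simp
      have hwa : ((a0 : (𝓞 K))) ∈ F := by simpa [hb0z, hc0z] using hw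
      have := hdvd a0 hwa
      have hdn : f ∣ (co 0).val := Int.natCast_dvd_natCast.1 this
      have hv0 : (co 0).val = 0 := Nat.eq_zero_of_dvd_of_lt hdn (ZMod.val_lt _)
      exact h0 ((ZMod.val_eq_zero _).1 hv0)
    · -- z ∈ O, contradiction
      exfalso
      have hc0z : c0 = 0 := by rw [hc0, h2]; simp
      have hw2 : ((a0 : (𝓞 K)) + (b0 : (𝓞 K)) * z) ∈ F := by simpa [hc0z] using hw
      obtain ⟨u, hu⟩ := Ideal.mem_span_singleton.1 hw2
      set bz' : ℤ := (((co 1)⁻¹).val : ℤ) with hbz'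
      have hinv : ((bz' * b0 - 1 : ℤ) : ZMod f) = 0 := by
        push_cast
        rw [hbz', hb0, hvalcast, hvalcast, inv_mul_cancel₀ h1]
        ring
      obtain ⟨t, ht⟩ := (ZMod.intCast_zmod_eq_zero_iff_dvd _ _).1 hinv
      have htR : (bz' : (𝓞 K)) * (b0 : (𝓞 K)) - 1 = (f : (𝓞 K)) * (t : (𝓞 K)) := by exact_mod_cast congrArg (fun m : ℤ => (m : (𝓞 K))) ht
      apply hz
      apply (hO z).2
      refine ⟨-(bz' * a0), Ideal.mem_span_singleton.2 ⟨(bz' : (𝓞 K)) * u - (t : (𝓞 K)) * z, ?_⟩⟩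
      push_cast
      linear_combination (bz' : (𝓞 K)) * hu - z * htR
  · -- main case: d decomposes
    obtain ⟨u, hu⟩ := Ideal.mem_span_singleton.1 hw
    set cz' : ℤ := (((co 2)⁻¹).val : ℤ) with hcz'
    have hinv : ((cz' * c0 - 1 : ℤ) : ZMod f) = 0 := by
      push_cast
      rw [hcz', hc0, hvalcast, hvalcast, inv_mul_cancel₀ h2]
      ring
    obtain ⟨t, ht⟩ := (ZMod.intCast_zmod_eq_zero_iff_dvd _ _).1 hinv
    have htR : (cz' : (𝓞 K)) * (c0 : (𝓞 K)) - 1 = (f : (𝓞 K)) * (t : (𝓞 K)) := by exact_mod_cast congrArg (fun m : ℤ => (m : (𝓞 K))) ht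
    refine ⟨(cz' : (𝓞 K)) * ((f : (𝓞 K)) * u) - (f : (𝓞 K)) * ((t : (𝓞 K)) * d) - ((cz' * a0 : ℤ) : (𝓞 K)),
      ?_, -(cz' * b0), ?_⟩
    · refine O.sub_mem (O.sub_mem (hFO _ ?_) (hFO _ ?_)) (hintO _)
      · exact Ideal.mem_span_singleton.2 ⟨(cz' : (𝓞 K)) * u, by ring⟩
      · exact Ideal.mem_span_singleton.2 ⟨(t : (𝓞 K)) * d, rfl⟩
    · push_cast
      linear_combination (cz' : (𝓞 K)) * hu - d * htR

theorem stmt_3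
    (K : Type*) [Field K] [NumberField K] (hK : Module.finrank ℚ K = 2)
    (f : ℕ) (hf : f.Prime)
    (O : Subring (𝓞 K))
    (hO : ∀ x : 𝓞 K, x ∈ O ↔ ∃ n : ℤ, x - (n : 𝓞 K) ∈ Ideal.span {(f : 𝓞 K)})
    (I : Ideal O) (hI : I ≠ ⊥) :
    ((∃ z : 𝓞 K, z ∉ O ∧ ∀ x ∈ I, ∃ w ∈ I, (w : 𝓞 K) = z * (x : 𝓞 K)) →
      ∀ y ∈ Ideal.map O.subtype I, ∃ x ∈ I, (x : 𝓞 K) = y) ∧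
    ((¬ ∀ y ∈ Ideal.map O.subtype I, ∃ x ∈ I, (x : 𝓞 K) = y) →
      AddSubgroup.relIndex
        (AddSubgroup.map O.subtype.toAddMonoidHom (Submodule.toAddSubgroup I))
        (Submodule.toAddSubgroup (Ideal.map O.subtype I)) = f) := by
  constructor
  · rintro ⟨z, hz, hzI⟩
    have hintO : ∀ n : ℤ, (n : 𝓞 K) ∈ O := fun n => (hO _).2 ⟨n, by simp⟩
    have hdec : ∀ d : 𝓞 K, ∃ a : 𝓞 K, a ∈ O ∧ ∃ b : ℤ, d = a + (b : 𝓞 K) * z :=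
      aux_decomp_stmt3 K hK f hf O hO z hz

    intro y hy
    have hy' : y ∈ Submodule.span (𝓞 K) (O.subtype '' I) := hy
    refine Submodule.span_induction ?_ ?_ ?_ ?_ hy'
    · rintro x ⟨x', hx', rfl⟩
      exact ⟨x', hx', rfl⟩
    · exact ⟨0, I.zero_mem, rfl⟩
    · rintro x y' - - ⟨x1, hx1, rfl⟩ ⟨x2, hx2, rfl⟩
      exact ⟨x1 + x2, I.add_mem hx1 hx2, rfl⟩
    · rintro r x - ⟨x1, hx1, rfl⟩
      obtain ⟨a, haO, b, rfl⟩ := hdec r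
      obtain ⟨w, hw, hwz⟩ := hzI x1 hx1
      refine ⟨(⟨a, haO⟩ : O) * x1 + (⟨(b : 𝓞 K), hintO b⟩ : O) * w,
        I.add_mem (I.mul_mem_left _ hx1) (I.mul_mem_left _ hw), ?_⟩
      push_cast
      rw [hwz]
      simp only [smul_eq_mul]
      ring
  · intro hny

    haveI : Fact f.Prime := ⟨hf⟩
    haveI : NeZero f := ⟨hf.ne_zero⟩
    classical
    set J : Ideal (𝓞 K) := Ideal.map O.subtype I with hJ
    set A : AddSubgroup (𝓞 K) :=
      AddSubgroup.map O.subtype.toAddMonoidHom (Submodule.toAddSubgroup I) with hA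
    set B : AddSubgroup (𝓞 K) := Submodule.toAddSubgroup J with hB
    have hmemA : ∀ y : 𝓞 K, y ∈ A ↔ ∃ x ∈ I, (x : 𝓞 K) = y := by
      intro y
      constructor
      · rintro ⟨x, hx, rfl⟩
        exact ⟨x, hx, rfl⟩
      · rintro ⟨x, hx, rfl⟩
        exact ⟨x, hx, rfl⟩
    have hAB : A ≤ B := by
      intro y hy
      obtain ⟨x, hx, rfl⟩ := (hmemA y).1 hy
      exact Ideal.mem_map_of_mem O.subtype hx
    have hfO : ∀ r : 𝓞 K, (f : 𝓞 K) * r ∈ O := fun r => (hO _).2 ⟨0, by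
      rw [Ideal.mem_span_singleton]
      exact ⟨r, by push_cast; ring⟩⟩
    have hfmul : ∀ y ∈ J, ∀ r : 𝓞 K, ∃ x ∈ I, (x : 𝓞 K) = (f : 𝓞 K) * (r * y) := by
      intro y hy
      have hy' : y ∈ Submodule.span (𝓞 K) (O.subtype '' I) := hy
      refine Submodule.span_induction ?_ ?_ ?_ ?_ hy'
      · rintro _ ⟨x', hx', rfl⟩ r
        refine ⟨(⟨(f : 𝓞 K) * r, hfO r⟩ : O) * x', I.mul_mem_left _ hx', ?_⟩
        push_cast
        simp only [Subring.coe_subtype]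
        ring
      · intro r
        exact ⟨0, I.zero_mem, by push_cast; ring⟩
      · rintro y1 y2 - - ih1 ih2 r
        obtain ⟨x1, hx1, e1⟩ := ih1 r
        obtain ⟨x2, hx2, e2⟩ := ih2 r
        refine ⟨x1 + x2, I.add_mem hx1 hx2, ?_⟩
        push_cast
        rw [e1, e2]
        ring
      · rintro s y1 - ih r
        obtain ⟨x1, hx1, e1⟩ := ih (r * s)
        refine ⟨x1, hx1, ?_⟩
        rw [e1, smul_eq_mul]
        ring
    set Q := ↥B ⧸ A.addSubgroupOf B with hQ
    have hfQ : ∀ q : Q, f • q = 0 := by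
      intro q
      obtain ⟨b, rfl⟩ := QuotientAddGroup.mk_surjective q
      have : ((f • b : ↥B) : Q) = f • (b : Q) := by
        rw [QuotientAddGroup.mk_nsmul]
      rw [← this, QuotientAddGroup.eq_zero_iff]
      have hb : (b : 𝓞 K) ∈ J := b.2
      obtain ⟨x, hx, e⟩ := hfmul (b : 𝓞 K) hb 1
      show ((f • b : ↥B) : 𝓞 K) ∈ A
      refine (hmemA _).2 ⟨x, hx, ?_⟩
      rw [e]
      push_cast
      ring
    haveI : Module (ZMod f) Q := AddCommGroup.zmodModule hfQ
    have hsmulQ : ∀ (m : ℤ) (q : Q), ((m : ZMod f)) • q = m • q := fun m q =>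
      Int.cast_smul_eq_zsmul _ m q
    set P : Submodule ℤ (𝓞 K) := Submodule.restrictScalars ℤ J with hP
    set bP := Module.Free.chooseBasis ℤ ↥P with hbP
    have hcard : Fintype.card (Module.Free.ChooseBasisIndex ℤ ↥P) ≤ 2 := by
      rw [← Module.finrank_eq_card_chooseBasisIndex]
      calc Module.finrank ℤ ↥P ≤ Module.finrank ℤ (𝓞 K) := Submodule.finrank_le P
        _ = 2 := by rw [RingOfIntegers.rank, hK]
    have hPB : ∀ p : ↥P, (p : 𝓞 K) ∈ B := fun p => p.2
    set e : ↥P →+ ↥B := AddMonoidHom.mk' (fun p => (⟨(p : 𝓞 K), hPB p⟩ : ↥B))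
      (fun p q => rfl) with he
    set φ : ↥P →+ Q := (QuotientAddGroup.mk' (A.addSubgroupOf B)).comp e with hφ
    set g : Module.Free.ChooseBasisIndex ℤ ↥P → Q := fun i => φ (bP i) with hg
    have hspan : Submodule.span (ZMod f) (Set.range g) = ⊤ := by
      rw [Submodule.eq_top_iff']
      intro q
      obtain ⟨b, rfl⟩ := QuotientAddGroup.mk_surjective q
      have hbq : φ ⟨(b : 𝓞 K), b.2⟩ = QuotientAddGroup.mk b := rfl
      rw [← hbq]
      have hrepr : (⟨(b : 𝓞 K), b.2⟩ : ↥P)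
          = ∑ i, bP.repr ⟨(b : 𝓞 K), b.2⟩ i • bP i := (bP.sum_repr _).symm
      rw [hrepr, map_sum]
      apply Submodule.sum_mem
      intro i _
      rw [map_zsmul, ← hsmulQ]
      exact Submodule.smul_mem _ _ (Submodule.subset_span ⟨i, rfl⟩)
    haveI hfin : Module.Finite (ZMod f) Q := ⟨⟨Finset.univ.image g, by
      rw [Finset.coe_image, Finset.coe_univ, Set.image_univ, hspan]⟩⟩
    have hrankQ : Module.finrank (ZMod f) Q ≤ Fintype.card (Module.Free.ChooseBasisIndex ℤ ↥P) := by
      calc Module.finrank (ZMod f) Q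
          = Module.finrank (ZMod f) (⊤ : Submodule (ZMod f) Q) := (finrank_top _ _).symm
        _ = Module.finrank (ZMod f) (Submodule.span (ZMod f) (Set.range g)) := by rw [hspan]
        _ ≤ Fintype.card (Module.Free.ChooseBasisIndex ℤ ↥P) := by
            refine le_trans (finrank_span_le_card _) ?_
            convert Fintype.card_range_le g
            rfl
            rw [Set.toFinset_card]
    push_neg at hny
    obtain ⟨y0, hy0J, hy0A⟩ := hny
    haveI hQnt : Nontrivial Q := by
      refine ⟨⟨QuotientAddGroup.mk ⟨y0, hy0J⟩, 0, ?_⟩⟩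
      rw [Ne, QuotientAddGroup.eq_zero_iff]
      intro hmem
      obtain ⟨x, hx, hxe⟩ := (hmemA y0).1 hmem
      exact hy0A x hx hxe
    have h1le : 1 ≤ Module.finrank (ZMod f) Q := Module.finrank_pos
    have hface : Module.finrank (ZMod f) Q = 1 := by
      by_contra hne
      have h2 : Module.finrank (ZMod f) Q = 2 := by omega
      have hcard2 : Fintype.card (Module.Free.ChooseBasisIndex ℤ ↥P) = 2 := by omega
      have hli : LinearIndependent (ZMod f) g :=
        linearIndependent_of_top_le_span_of_card_eq_finrank (le_of_eq hspan.symm)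
          (by rw [hcard2, h2])
      have hAfJ : ∀ y ∈ A, ∃ j ∈ J, y = (f : 𝓞 K) * j := by
        intro y hyA
        have hyJ : y ∈ J := hAB hyA
        set p : ↥P := ⟨y, hyJ⟩ with hp
        have hφp : φ p = 0 := by
          show QuotientAddGroup.mk' (A.addSubgroupOf B) (e p) = 0
          exact (QuotientAddGroup.eq_zero_iff _).2 ((AddSubgroup.mem_addSubgroupOf).2 hyA)
        have hrel : ∑ i, ((bP.repr p i : ZMod f)) • g i = 0 := by
          have hstep : ∑ i, ((bP.repr p i : ZMod f)) • g i = φ (∑ i, bP.repr p i • bP i) := by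
            rw [map_sum]
            exact Finset.sum_congr rfl fun i _ => by rw [hsmulQ, map_zsmul]
          rw [hstep, bP.sum_repr p, hφp]
        have hz0 : ∀ i, ((bP.repr p i : ℤ) : ZMod f) = 0 :=
          Fintype.linearIndependent_iff.1 hli _ hrel
        have hdv : ∀ i, (f : ℤ) ∣ bP.repr p i := fun i =>
          (ZMod.intCast_zmod_eq_zero_iff_dvd _ _).1 (hz0 i)
        choose t ht using hdv
        refine ⟨((∑ i, t i • bP i : ↥P) : 𝓞 K), (∑ i, t i • bP i : ↥P).2, ?_⟩
        have hps : p = (f : ℤ) • (∑ i, t i • bP i) := by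
          rw [Finset.smul_sum]
          conv_lhs => rw [← bP.sum_repr p]
          exact Finset.sum_congr rfl fun i _ => by rw [ht i, mul_smul]
        calc y = (p : 𝓞 K) := rfl
          _ = (((f : ℤ) • (∑ i, t i • bP i) : ↥P) : 𝓞 K) := by rw [← hps]
          _ = (f : 𝓞 K) * ((∑ i, t i • bP i : ↥P) : 𝓞 K) := by
              push_cast [zsmul_eq_mul]
              ring
      have hall : ∀ y ∈ J, ∃ x ∈ I, (x : 𝓞 K) = y := by
        intro y hy
        have hy' : y ∈ Submodule.span (𝓞 K) (O.subtype '' I) := hy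
        refine Submodule.span_induction ?_ ?_ ?_ ?_ hy'
        · rintro _ ⟨x', hx', rfl⟩
          exact ⟨x', hx', rfl⟩
        · exact ⟨0, I.zero_mem, rfl⟩
        · rintro y1 y2 - - ⟨x1, hx1, e1⟩ ⟨x2, hx2, e2⟩
          refine ⟨x1 + x2, I.add_mem hx1 hx2, ?_⟩
          push_cast
          rw [e1, e2]
        · rintro r y1 - ⟨x1, hx1, e1⟩
          obtain ⟨j, hj, hjE⟩ := hAfJ y1 ((hmemA y1).2 ⟨x1, hx1, e1⟩)
          obtain ⟨x2, hx2, e2⟩ := hfmul j hj r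
          refine ⟨x2, hx2, ?_⟩
          rw [e2, smul_eq_mul, hjE]
          ring
      obtain ⟨x, hx, hxe⟩ := hall y0 hy0J
      exact hy0A x hx hxe
    obtain ⟨eqv⟩ := FiniteDimensional.nonempty_linearEquiv_of_finrank_eq
      (R := ZMod f) (M := Q) (M' := ZMod f) (by rw [hface, Module.finrank_self])
    have hcardQ : Nat.card Q = f := by rw [Nat.card_congr eqv.toEquiv, Nat.card_zmod]
    exact hcardQ
end

section
/- Let k ≥ 1 and α ∈ D \ O, and suppose Q = f^k·O + fα·O is an 𝔉-basic ideal of O with N(Q) = f^k and Q ≠ fO. Then Q is a D-module if and only if f^{k−1} divides N(α) in ℤ. -/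
set_option synthInstance.maxHeartbeats 1000000
set_option maxHeartbeats 1000000

open NumberField

/-- Cayley–Hamilton for `2 × 2` matrices, done by hand. -/
lemma cayley_hamilton_fin_two {R : Type*} [CommRing R] (M : Matrix (Fin 2) (Fin 2) R) :
    M * M - (Matrix.trace M) • M + (M.det) • (1 : Matrix (Fin 2) (Fin 2) R) = 0 := by
  ext i j
  fin_cases i <;> fin_cases j <;>
    simp [Matrix.mul_apply, Fin.sum_univ_two, Matrix.trace, Matrix.diag,
      Matrix.det_fin_two, Matrix.one_apply] <;> ring

theorem stmt_4
    (K : Type*) [Field K] [NumberField K] (hK : Module.finrank ℚ K = 2)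
    (f : ℕ) (hf : f.Prime)
    (O : Subring (𝓞 K))
    (hO : ∀ x : 𝓞 K, x ∈ O ↔ ∃ n : ℤ, x - (n : 𝓞 K) ∈ Ideal.span {(f : 𝓞 K)})
    (F : Ideal O) (hF : ∀ x : O, x ∈ F ↔ (x : 𝓞 K) ∈ Ideal.span {(f : 𝓞 K)})
    (k : ℕ) (hk : 1 ≤ k) (α : 𝓞 K) (hα : α ∉ O)
    (s : O) (hs : (s : 𝓞 K) = (f : 𝓞 K) * α)
    (Q : Ideal O) (hQdef : Q = Ideal.span {(f : O) ^ k, s})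
    (hQbasic : IsFBasic F Q)
    (hNQ : Nat.card (↥O ⧸ Q) = f ^ k)
    (hQne : Q ≠ Ideal.span {(f : O)}) :
    (∀ z : 𝓞 K, ∀ x ∈ Q, ∃ w ∈ Q, (w : 𝓞 K) = z * (x : 𝓞 K)) ↔
      (f : ℤ) ^ (k - 1) ∣ Algebra.norm ℤ α := by
  haveI : Fact (Nat.Prime f) := ⟨hf⟩
  haveI : NeZero f := ⟨hf.ne_zero⟩
  have hf0 : (f : ℤ) ≠ 0 := by exact_mod_cast hf.ne_zero
  obtain ⟨k', rfl⟩ : ∃ k', k = k' + 1 := ⟨k - 1, (Nat.succ_pred_eq_of_pos hk).symm⟩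
  -- a ℤ-basis of the ring of integers
  let b : Module.Basis (Fin 2) ℤ (𝓞 K) :=
    (Module.finBasis ℤ (𝓞 K)).reindex (finCongr ((RingOfIntegers.rank K).trans hK))
  have hlift : ∀ γ : ZMod f, ((γ.val : ℕ) : ZMod f) = γ := by
    intro γ
    simp [ZMod.natCast_val, ZMod.cast_id]
  -- divisibility by `f` is checked on coordinates
  have hrep : ∀ x : 𝓞 K, (f : 𝓞 K) ∣ x ↔ ∀ i, (f : ℤ) ∣ b.repr x i := by
    intro x
    constructor
    · rintro ⟨y, rfl⟩ i
      have h1 : (f : 𝓞 K) * y = (f : ℤ) • y := by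
        rw [zsmul_eq_mul]; norm_num
      rw [h1, map_smul, Finsupp.smul_apply, smul_eq_mul]
      exact Dvd.intro _ rfl
    · intro h
      choose c hc using h
      refine ⟨∑ i, c i • b i, ?_⟩
      have h2 : x = ∑ i, b.repr x i • b i := (b.sum_repr x).symm
      rw [h2, Finset.mul_sum]
      refine Finset.sum_congr rfl fun i _ => ?_
      rw [hc i, mul_smul, zsmul_eq_mul, zsmul_eq_mul]
      push_cast
      ring
  have hmemO : ∀ x : 𝓞 K, x ∈ O ↔ ∃ c : ℤ, (f : 𝓞 K) ∣ (x - c) := by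
    intro x
    simp [hO, Ideal.mem_span_singleton]
  -- mod-f coordinates of 1 and α
  set u : Fin 2 → ZMod f := fun i => ((b.repr 1 i : ℤ) : ZMod f) with hu_def
  set a : Fin 2 → ZMod f := fun i => ((b.repr α i : ℤ) : ZMod f) with ha_def
  have hu : u 0 ≠ 0 ∨ u 1 ≠ 0 := by
    by_contra h
    push_neg at h
    have h1 : (f : 𝓞 K) ∣ 1 := by
      rw [hrep]
      intro i
      have h2 : u i = 0 := by fin_cases i <;> [exact h.1; exact h.2]
      rwa [hu_def, ZMod.intCast_zmod_eq_zero_iff_dvd] at h2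
    exact hα ((hmemO α).mpr ⟨0, by simpa using h1.trans (Dvd.intro α rfl)⟩)
  have ha : ∀ γ : ZMod f, ¬ (a 0 = γ * u 0 ∧ a 1 = γ * u 1) := by
    rintro γ ⟨e0, e1⟩
    apply hα
    rw [hmemO]
    refine ⟨(γ.val : ℤ), ?_⟩
    rw [hrep]
    intro i
    have hco : b.repr (α - ((γ.val : ℤ) : 𝓞 K)) i
        = b.repr α i - (γ.val : ℤ) * b.repr 1 i := by
      have h3 : (((γ.val : ℤ)) : 𝓞 K) = (γ.val : ℤ) • (1 : 𝓞 K) := by simp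
      rw [h3, map_sub, map_smul, Finsupp.sub_apply, Finsupp.smul_apply, smul_eq_mul]
    rw [← ZMod.intCast_zmod_eq_zero_iff_dvd, hco]
    push_cast
    rw [hlift γ]
    fin_cases i
    · show a 0 - γ * u 0 = 0
      rw [e0]; ring
    · show a 1 - γ * u 1 = 0
      rw [e1]; ring
  have hΔ : u 0 * a 1 - u 1 * a 0 ≠ 0 := by
    intro h
    rcases hu with h0 | h1
    · refine ha (a 0 * (u 0)⁻¹) ⟨?_, ?_⟩
      · field_simp
      · field_simp
        linear_combination h
    · refine ha (a 1 * (u 1)⁻¹) ⟨?_, ?_⟩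
      · field_simp
        linear_combination -h
      · field_simp
  -- every element of the ring of integers is x + m α with x ∈ O
  have hB : ∀ d : 𝓞 K, ∃ (x : O) (m : ℤ), d = (x : 𝓞 K) + (m : 𝓞 K) * α := by
    intro d
    set d0 : ZMod f := ((b.repr d 0 : ℤ) : ZMod f) with hd0
    set d1 : ZMod f := ((b.repr d 1 : ℤ) : ZMod f) with hd1
    set γm : ZMod f := (u 0 * d1 - u 1 * d0) * (u 0 * a 1 - u 1 * a 0)⁻¹ with hγm
    set γc : ZMod f := (d0 * a 1 - d1 * a 0) * (u 0 * a 1 - u 1 * a 0)⁻¹ with hγc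
    have hxO : d - ((γm.val : ℤ) : 𝓞 K) * α ∈ O := by
      rw [hmemO]
      refine ⟨(γc.val : ℤ), ?_⟩
      rw [hrep]
      intro i
      have hco : b.repr (d - ((γm.val : ℤ) : 𝓞 K) * α - ((γc.val : ℤ) : 𝓞 K)) i
          = b.repr d i - (γm.val : ℤ) * b.repr α i - (γc.val : ℤ) * b.repr 1 i := by
        have h1 : ((γm.val : ℤ) : 𝓞 K) * α = (γm.val : ℤ) • α := by rw [zsmul_eq_mul]
        have h2 : (((γc.val : ℤ)) : 𝓞 K) = (γc.val : ℤ) • (1 : 𝓞 K) := by simp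
        rw [h1, h2, map_sub, map_sub, map_smul, map_smul]
        simp [Finsupp.sub_apply, Finsupp.smul_apply, smul_eq_mul]
      rw [← ZMod.intCast_zmod_eq_zero_iff_dvd, hco]
      push_cast
      rw [hlift γm, hlift γc]
      fin_cases i
      · show d0 - γm * a 0 - γc * u 0 = 0
        rw [hγm, hγc]
        field_simp
        ring
      · show d1 - γm * a 1 - γc * u 1 = 0
        rw [hγm, hγc]
        field_simp
        ring
    exact ⟨⟨_, hxO⟩, (γm.val : ℤ), by simp⟩
  -- the quadratic relation satisfied by α
  set t : ℤ := Algebra.trace ℤ (𝓞 K) α with ht_def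
  set n : ℤ := Algebra.norm ℤ α with hn_def
  have hA : α * α = (t : 𝓞 K) * α - (n : 𝓞 K) := by
    classical
    set φ : Module.End ℤ (𝓞 K) := (Algebra.lmul ℤ (𝓞 K)) α with hφ
    set M : Matrix (Fin 2) (Fin 2) ℤ := LinearMap.toMatrix b b φ with hM
    have htr : Matrix.trace M = t := by
      rw [ht_def, Algebra.trace_apply, LinearMap.trace_eq_matrix_trace ℤ b, hM, hφ]
    have hdet : M.det = n := by
      rw [hn_def, Algebra.norm_apply, ← LinearMap.det_toMatrix b, hM, hφ]
    have h2 := cayley_hamilton_fin_two M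
    rw [htr, hdet] at h2
    have h3 : LinearMap.toMatrixAlgEquiv b (φ * φ - t • φ + n • 1) = 0 := by
      rw [map_add, map_sub, map_mul, map_smul, map_smul, map_one]
      exact h2
    have h4 : φ * φ - t • φ + n • (1 : Module.End ℤ (𝓞 K)) = 0 := by
      have := congrArg (LinearMap.toMatrixAlgEquiv b).symm h3
      simpa using this
    have h5 := LinearMap.congr_fun h4 (1 : 𝓞 K)
    simp only [LinearMap.add_apply, LinearMap.sub_apply, Module.End.mul_apply,
      LinearMap.smul_apply, Module.End.one_apply, LinearMap.zero_apply, hφ,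
      Algebra.coe_lmul_eq_mul, LinearMap.mul_apply', mul_one] at h5
    rw [zsmul_eq_mul, zsmul_eq_mul] at h5
    linear_combination h5
  -- the span of the generators of Q over O inside 𝓞 K
  set Msp : Submodule O (𝓞 K) :=
    Submodule.span O {(f : 𝓞 K) ^ (k' + 1), (f : 𝓞 K) * α} with hMsp
  have hMQ : ∀ y : 𝓞 K, y ∈ Msp ↔ ∃ w ∈ Q, (w : 𝓞 K) = y := by
    intro y
    have hmap : Submodule.map (Algebra.linearMap O (𝓞 K)) Q = Msp := by
      rw [hQdef, hMsp, Ideal.span, Submodule.map_span]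
      have himg : (Algebra.linearMap O (𝓞 K)) '' {(f : O) ^ (k' + 1), s}
          = {(f : 𝓞 K) ^ (k' + 1), (f : 𝓞 K) * α} := by
        rw [Set.image_insert_eq, Set.image_singleton]
        have e1 : (Algebra.linearMap O (𝓞 K)) ((f : O) ^ (k' + 1))
            = (f : 𝓞 K) ^ (k' + 1) := by
          show (((f : O) ^ (k' + 1) : O) : 𝓞 K) = (f : 𝓞 K) ^ (k' + 1)
          push_cast
          ring
        have e2 : (Algebra.linearMap O (𝓞 K)) s = (f : 𝓞 K) * α := hs
        rw [e1, e2]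
      rw [himg]
    rw [← hmap]
    exact Submodule.mem_map
  have hMQ' : ∀ w : O, (w : 𝓞 K) ∈ Msp → w ∈ Q := by
    intro w hw
    obtain ⟨w', hw'Q, hw'⟩ := (hMQ _).mp hw
    rwa [show w' = w from Subtype.coe_injective hw'] at hw'Q
  have hg1 : (f : 𝓞 K) ^ (k' + 1) ∈ Msp :=
    Submodule.subset_span (Set.mem_insert _ _)
  have hg2 : (f : 𝓞 K) * α ∈ Msp :=
    Submodule.subset_span (Set.mem_insert_of_mem _ rfl)
  have hsmulO : ∀ (x : O) (y : 𝓞 K), y ∈ Msp → (x : 𝓞 K) * y ∈ Msp := by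
    intro x y hy
    have := Msp.smul_mem x hy
    rw [Algebra.smul_def] at this
    exact this
  have hsmulZ : ∀ (c : ℤ) (y : 𝓞 K), y ∈ Msp → (c : 𝓞 K) * y ∈ Msp := by
    intro c y hy
    have : ((c : ℤ) : O) • y ∈ Msp := Msp.smul_mem _ hy
    simpa [Algebra.smul_def] using this
  -- key downward induction: f^j * d lies in ℤ + Msp
  have key : ∀ (m : ℕ), ∀ j, j + m = k' + 1 → 1 ≤ j →
      ∀ d : 𝓞 K, ∃ c : ℤ, (f : 𝓞 K) ^ j * d - (c : 𝓞 K) ∈ Msp := by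
    intro m
    induction m with
    | zero =>
      intro j hj _ d
      obtain ⟨x, m', hd⟩ := hB d
      refine ⟨0, ?_⟩
      have hj' : j = k' + 1 := by omega
      subst hj'
      have heq : (f : 𝓞 K) ^ (k' + 1) * d
          = (x : 𝓞 K) * ((f : 𝓞 K) ^ (k' + 1))
            + ((m' * (f : ℤ) ^ k' : ℤ) : 𝓞 K) * ((f : 𝓞 K) * α) := by
        rw [hd]; push_cast; ring
      rw [Int.cast_zero, sub_zero, heq]
      exact Msp.add_mem (hsmulO _ _ hg1) (hsmulZ _ _ hg2)
    | succ m ih =>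
      intro j hj hj1 d
      obtain ⟨j'', rfl⟩ : ∃ j'', j = j'' + 1 := ⟨j - 1, (Nat.succ_pred_eq_of_pos hj1).symm⟩
      obtain ⟨x, m', hd⟩ := hB d
      obtain ⟨c0, d', hd'⟩ := (hmemO (x : 𝓞 K)).mp x.2
      obtain ⟨c2, hc2⟩ := ih (j'' + 2) (by omega) (by omega) d'
      refine ⟨c0 * (f : ℤ) ^ (j'' + 1) + c2, ?_⟩
      have heq : (f : 𝓞 K) ^ (j'' + 1) * d - ((c0 * (f : ℤ) ^ (j'' + 1) + c2 : ℤ) : 𝓞 K)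
          = ((f : 𝓞 K) ^ (j'' + 2) * d' - (c2 : 𝓞 K))
            + ((m' * (f : ℤ) ^ j'' : ℤ) : 𝓞 K) * ((f : 𝓞 K) * α) := by
        have hx : (x : 𝓞 K) = (c0 : 𝓞 K) + (f : 𝓞 K) * d' := by linear_combination hd'
        rw [hd, hx]; push_cast; ring
      rw [heq]
      exact Msp.add_mem hc2 (hsmulZ _ _ hg2)
  -- ℤ surjects onto O/Q
  have hO1 : ∀ x : O, ∃ c : ℤ, x - ((c : ℤ) : O) ∈ Q := by
    intro x
    obtain ⟨c0, d', hd'⟩ := (hmemO (x : 𝓞 K)).mp x.2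
    obtain ⟨c2, hc2⟩ := key k' 1 (by omega) le_rfl d'
    refine ⟨c0 + c2, hMQ' _ ?_⟩
    have heq : ((x - ((c0 + c2 : ℤ) : O) : O) : 𝓞 K)
        = (f : 𝓞 K) ^ 1 * d' - (c2 : 𝓞 K) := by
      push_cast
      linear_combination hd'
    rw [heq]
    exact hc2
  -- identify the kernel of ℤ → O/Q
  have hker : ∀ m : ℤ, ((m : ℤ) : O) ∈ Q ↔ (f : ℤ) ^ (k' + 1) ∣ m := by
    set ψ : ℤ →+* O ⧸ Q := (Ideal.Quotient.mk Q).comp (Int.castRingHom O) with hψ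
    have hψsurj : Function.Surjective ψ := by
      intro q
      obtain ⟨x, rfl⟩ := Ideal.Quotient.mk_surjective q
      obtain ⟨c, hc⟩ := hO1 x
      refine ⟨c, ?_⟩
      show Ideal.Quotient.mk Q ((c : ℤ) : O) = Ideal.Quotient.mk Q x
      rw [Ideal.Quotient.eq]
      simpa [neg_sub] using Q.neg_mem hc
    have e := RingHom.quotientKerEquivOfSurjective hψsurj
    have hcard : Nat.card (ℤ ⧸ RingHom.ker ψ) = f ^ (k' + 1) := by
      rw [Nat.card_congr e.toEquiv]
      exact hNQ
    obtain ⟨g, hg⟩ : ∃ g : ℤ, RingHom.ker ψ = Ideal.span {g} :=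
      ⟨Submodule.IsPrincipal.generator (RingHom.ker ψ),
        (Ideal.span_singleton_generator _).symm⟩
    have hcards : g.natAbs = f ^ (k' + 1) := by
      have e2 := Int.quotientSpanEquivZMod g
      rw [hg, Nat.card_congr e2.toEquiv, Nat.card_zmod] at hcard
      exact hcard
    have hkerker : RingHom.ker ψ = Ideal.span {(f : ℤ) ^ (k' + 1)} := by
      rw [hg, ← Int.span_natAbs, hcards]
      push_cast
      ring_nf
    intro m
    have h1 : ((m : ℤ) : O) ∈ Q ↔ ψ m = 0 := by
      rw [hψ]
      show _ ↔ Ideal.Quotient.mk Q ((m : ℤ) : O) = 0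
      rw [Ideal.Quotient.eq_zero_iff_mem]
    rw [h1, ← RingHom.mem_ker, hkerker, Ideal.mem_span_singleton]
  -- norm-theoretic consequences
  have hfk1 : k' + 1 - 1 = k' := rfl
  constructor
  · intro hDmod
    have hsQ : s ∈ Q := by
      rw [hQdef]
      exact Ideal.subset_span (Set.mem_insert_of_mem _ rfl)
    obtain ⟨w, hwQ, hw⟩ := hDmod α s hsQ
    have hwe : ((t : ℤ) : O) * s - w = ((f * n : ℤ) : O) := by
      apply Subtype.coe_injective
      push_cast
      rw [hs] at hw ⊢
      rw [hw]
      linear_combination (-(f : 𝓞 K)) * hA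
    have hfnQ : ((f * n : ℤ) : O) ∈ Q := by
      rw [← hwe]
      exact Q.sub_mem (Q.mul_mem_left _ hsQ) hwQ
    rw [hker] at hfnQ
    rw [hfk1]
    have h6 : (f : ℤ) ^ k' * (f : ℤ) ∣ n * (f : ℤ) := by
      have : (f : ℤ) ^ (k' + 1) = (f : ℤ) ^ k' * (f : ℤ) := by ring
      rw [this] at hfnQ
      calc (f : ℤ) ^ k' * (f : ℤ) ∣ f * n := hfnQ
        _ = n * (f : ℤ) := by ring
    exact (mul_dvd_mul_iff_right hf0).mp h6
  · intro hdvd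
    rw [hfk1] at hdvd
    obtain ⟨n', hn'⟩ := hdvd
    intro z x hx
    have hxM : (x : 𝓞 K) ∈ Msp := (hMQ _).mpr ⟨x, hx, rfl⟩
    suffices hz : z * (x : 𝓞 K) ∈ Msp by
      obtain ⟨w, hwQ, hw⟩ := (hMQ _).mp hz
      exact ⟨w, hwQ, hw⟩
    obtain ⟨x0, m, hz⟩ := hB z
    -- it suffices to prove it for the generators
    have hgen1 : z * ((f : 𝓞 K) ^ (k' + 1)) ∈ Msp := by
      have heq : z * ((f : 𝓞 K) ^ (k' + 1))
          = (x0 : 𝓞 K) * ((f : 𝓞 K) ^ (k' + 1))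
            + ((m * (f : ℤ) ^ k' : ℤ) : 𝓞 K) * ((f : 𝓞 K) * α) := by
        rw [hz]; push_cast; ring
      rw [heq]
      exact Msp.add_mem (hsmulO _ _ hg1) (hsmulZ _ _ hg2)
    have hgen2 : z * ((f : 𝓞 K) * α) ∈ Msp := by
      have heq : z * ((f : 𝓞 K) * α)
          = (x0 : 𝓞 K) * ((f : 𝓞 K) * α)
            + ((m * t : ℤ) : 𝓞 K) * ((f : 𝓞 K) * α)
            - ((m * n' : ℤ) : 𝓞 K) * ((f : 𝓞 K) ^ (k' + 1)) := by
        rw [hz]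
        push_cast
        have hnn : (n : 𝓞 K) = (f : 𝓞 K) ^ k' * (n' : 𝓞 K) := by
          rw [hn']; push_cast; ring
        linear_combination ((m : 𝓞 K)) * (f : 𝓞 K) * hA - ((m : 𝓞 K)) * (f : 𝓞 K) * hnn
      rw [heq]
      exact Submodule.sub_mem _ (Msp.add_mem (hsmulO _ _ hg2) (hsmulZ _ _ hg2)) (hsmulZ _ _ hg1)
    -- extend to all of Msp by span induction
    refine Submodule.span_induction ?_ ?_ ?_ ?_ hxM
    · rintro y (rfl | rfl)
      · exact hgen1
      · exact hgen2
    · simpa using Msp.zero_mem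
    · intro y1 y2 _ _ h1 h2
      have : z * (y1 + y2) = z * y1 + z * y2 := by ring
      rw [this]; exact Msp.add_mem h1 h2
    · intro c y _ h1
      have : z * (c • y) = (c : 𝓞 K) * (z * y) := by
        rw [Algebra.smul_def, show (algebraMap O (𝓞 K)) c = (c : 𝓞 K) from rfl]; ring
      rw [this]; exact hsmulO _ _ h1
end

section
/- Let k ≥ 1 and α ∈ D \ O, and suppose Q = f^k·O + fα·O is an 𝔉-basic ideal of O with N(Q) = f^k and Q ≠ fO. Then 𝔉^k ⊆ Q and 𝔉^{k−1} ⊄ Q; that is, 𝔉^k is the minimum power of 𝔉 contained in Q. -/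
set_option synthInstance.maxHeartbeats 1000000
set_option maxHeartbeats 1000000

open NumberField

section Aux

variable (K : Type*) [Field K] [NumberField K]

lemma aux_norm_intCast (hK : Module.finrank ℚ K = 2) (c : ℤ) :
    Algebra.norm ℤ ((c : ℤ) : 𝓞 K) = c ^ 2 := by
  have b := Module.Free.chooseBasis ℤ (𝓞 K)
  rw [show ((c : ℤ) : 𝓞 K) = algebraMap ℤ (𝓞 K) c by simp,
    Algebra.norm_algebraMap_of_basis b]
  congr 1
  rw [← Module.finrank_eq_card_chooseBasisIndex, NumberField.RingOfIntegers.rank, hK]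

lemma aux_index_intCast (hK : Module.finrank ℚ K = 2) (c : ℤ) :
    ((Ideal.span {((c : ℤ) : 𝓞 K)}).toAddSubgroup).index = (c ^ 2).natAbs := by
  have h2 : (Ideal.span {((c : ℤ) : 𝓞 K)}).toAddSubgroup.index
      = Ideal.absNorm (Ideal.span {((c : ℤ) : 𝓞 K)}) := rfl
  rw [h2, Ideal.absNorm_span_singleton, aux_norm_intCast K hK c]

end Aux

theorem stmt_5
    (K : Type*) [Field K] [NumberField K] (hK : Module.finrank ℚ K = 2)
    (f : ℕ) (hf : f.Prime)
    (O : Subring (𝓞 K))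
    (hO : ∀ x : 𝓞 K, x ∈ O ↔ ∃ n : ℤ, x - (n : 𝓞 K) ∈ Ideal.span {(f : 𝓞 K)})
    (F : Ideal O) (hF : ∀ x : O, x ∈ F ↔ (x : 𝓞 K) ∈ Ideal.span {(f : 𝓞 K)})
    (k : ℕ) (hk : 1 ≤ k) (α : 𝓞 K) (hα : α ∉ O)
    (s : O) (hs : (s : 𝓞 K) = (f : 𝓞 K) * α)
    (Q : Ideal O) (hQdef : Q = Ideal.span {(f : O) ^ k, s})
    (hQbasic : IsFBasic F Q)
    (hNQ : Nat.card (↥O ⧸ Q) = f ^ k)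
    (hQne : Q ≠ Ideal.span {(f : O)}) :
    F ^ k ≤ Q ∧ ¬ F ^ (k - 1) ≤ Q := by
  have hfR : ((f : ℕ) : 𝓞 K) ≠ 0 := Nat.cast_ne_zero.mpr hf.pos.ne'
  -- integers of the form f^m, cast into 𝓞 K
  have hcast : ∀ m : ℕ, ((f : 𝓞 K) ^ m) = (((f : ℤ) ^ m : ℤ) : 𝓞 K) := by
    intro m; push_cast; ring
  -- index of the additive subgroup f^m 𝓞K in 𝓞K
  have hIndexPow : ∀ m : ℕ,
      ((Ideal.span {(f : 𝓞 K) ^ m}).toAddSubgroup).index = f ^ (2 * m) := by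
    intro m
    rw [hcast m, aux_index_intCast K hK]
    rw [← pow_mul]
    norm_num [Int.natAbs_pow]
    ring
  -- fD ⊆ O
  have hfO : ∀ x : 𝓞 K, x ∈ Ideal.span {(f : 𝓞 K)} → x ∈ O := by
    intro x hx
    exact (hO x).mpr ⟨0, by simpa using hx⟩
  have hJ1leO : (Ideal.span {(f : 𝓞 K)}).toAddSubgroup ≤ O.toAddSubgroup := by
    intro x hx; exact hfO x hx
  -- for integers, membership in f 𝓞K is divisibility
  have hintMem : ∀ n : ℤ, (n : 𝓞 K) ∈ Ideal.span {(f : 𝓞 K)} ↔ (f : ℤ) ∣ n := by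
    intro n
    constructor
    · intro hn
      obtain ⟨d, hd⟩ := (Ideal.mem_span_singleton).mp hn
      have hnorm : Algebra.norm ℤ ((n : ℤ) : 𝓞 K)
          = Algebra.norm ℤ ((f : 𝓞 K)) * Algebra.norm ℤ d := by
        rw [hd]; exact map_mul (Algebra.norm ℤ) _ _
      rw [aux_norm_intCast K hK n] at hnorm
      have hf' : Algebra.norm ℤ ((f : 𝓞 K)) = ((f : ℤ)) ^ 2 := by
        have : ((f : ℕ) : 𝓞 K) = (((f : ℕ) : ℤ) : 𝓞 K) := by push_cast; ring
        rw [this, aux_norm_intCast K hK]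
      rw [hf'] at hnorm
      have hdvd2 : (f : ℤ) ∣ n ^ 2 := ⟨(f : ℤ) * Algebra.norm ℤ d, by rw [hnorm]; ring⟩
      have hp : Prime (f : ℤ) := Nat.prime_iff_prime_int.mp hf
      exact hp.dvd_of_dvd_pow hdvd2
    · intro ⟨c, hc⟩
      rw [Ideal.mem_span_singleton, hc]
      push_cast
      exact Dvd.intro _ rfl
  -- relative index of fD in O is f
  have hrel1 : (Ideal.span {(f : 𝓞 K)}).toAddSubgroup.relIndex O.toAddSubgroup = f := by
    set M1 : AddSubgroup ↥O :=
      (Ideal.span {(f : 𝓞 K)}).toAddSubgroup.addSubgroupOf O.toAddSubgroup with hM1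
    have : (Ideal.span {(f : 𝓞 K)}).toAddSubgroup.relIndex O.toAddSubgroup = M1.index := rfl
    rw [this]
    have hMmem : ∀ x : ↥O, x ∈ M1 ↔ (x : 𝓞 K) ∈ Ideal.span {(f : 𝓞 K)} := by
      intro x; rw [hM1, AddSubgroup.mem_addSubgroupOf]; rfl
    set φ : ℤ →+ (↥O ⧸ M1) :=
      (QuotientAddGroup.mk' M1).comp (Int.castRingHom ↥O).toAddMonoidHom with hφ
    have hφapp : ∀ n : ℤ, φ n = QuotientAddGroup.mk' M1 ((n : ℤ) : ↥O) := fun n => rfl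
    have hker : φ.ker = AddSubgroup.zmultiples ((f : ℕ) : ℤ) := by
      ext n
      rw [AddMonoidHom.mem_ker, hφapp, show (QuotientAddGroup.mk' M1) ((n : ℤ) : ↥O)
        = (((n : ℤ) : ↥O) : ↥O ⧸ M1) from rfl, QuotientAddGroup.eq_zero_iff,
        Int.mem_zmultiples_iff, hMmem]
      have : (((n : ℤ) : ↥O) : 𝓞 K) = ((n : ℤ) : 𝓞 K) := by push_cast; ring
      rw [this, hintMem n]
    have hsurj : Function.Surjective φ := by
      intro q
      induction q using QuotientAddGroup.induction_on with
      | H x =>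
        obtain ⟨n, hn⟩ := (hO x).mp x.2
        refine ⟨n, ?_⟩
        rw [hφapp]
        apply (QuotientAddGroup.eq ..).mpr
        rw [hMmem]
        have : ((-((n : ℤ) : ↥O) + x : ↥O) : 𝓞 K) = (x : 𝓞 K) - (n : 𝓞 K) := by
          push_cast; ring
        rw [this]
        exact hn
    have hcard : Nat.card (↥O ⧸ M1) = Nat.card (ZMod f) := by
      refine Nat.card_congr ?_
      refine Equiv.trans ?_ (Int.quotientZMultiplesNatEquivZMod f).toEquiv
      refine Equiv.trans ((QuotientAddGroup.quotientKerEquivOfSurjective φ hsurj).toEquiv).symm ?_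
      rw [hker]
    have : M1.index = Nat.card (↥O ⧸ M1) := rfl
    rw [this, hcard, Nat.card_zmod]
  -- index of O in 𝓞 K is f
  have hOindex : O.toAddSubgroup.index = f := by
    have h := AddSubgroup.relIndex_mul_index hJ1leO
    have hI1 : (Ideal.span {(f : 𝓞 K)}).toAddSubgroup.index = f ^ 2 := by
      have := hIndexPow 1
      rw [pow_one] at this
      rw [this]
    rw [hrel1, hI1] at h
    have : f * O.toAddSubgroup.index = f * f := by
      rw [h]; ring
    exact Nat.eq_of_mul_eq_mul_left hf.pos this
  -- decomposition 𝓞 K = O + ℤ α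
  have decomp : ∀ d : 𝓞 K, ∃ (o : ↥O) (n : ℤ), d = (o : 𝓞 K) + (n : 𝓞 K) * α := by
    have hA : O.toAddSubgroup ⊔ AddSubgroup.zmultiples α = ⊤ := by
      set A := O.toAddSubgroup ⊔ AddSubgroup.zmultiples α with hAdef
      have hOA : O.toAddSubgroup ≤ A := le_sup_left
      have hmul := AddSubgroup.relIndex_mul_index hOA
      rw [hOindex] at hmul
      have hdvd : A.index ∣ f := Dvd.intro_left _ hmul
      rcases (Nat.Prime.eq_one_or_self_of_dvd hf _ hdvd) with h1 | h2
      · exact AddSubgroup.index_eq_one.mp h1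
      · exfalso
        rw [h2] at hmul
        have hrel : O.toAddSubgroup.relIndex A = 1 :=
          Nat.eq_of_mul_eq_mul_right hf.pos (by rw [hmul]; ring)
        have hAO : A ≤ O.toAddSubgroup := AddSubgroup.relIndex_eq_one.mp hrel
        have : α ∈ O.toAddSubgroup := hAO ((le_sup_right : AddSubgroup.zmultiples α ≤ A) (AddSubgroup.mem_zmultiples α))
        exact hα this
    intro d
    have hd : d ∈ O.toAddSubgroup ⊔ AddSubgroup.zmultiples α := by
      rw [hA]; trivial
    rw [AddSubgroup.mem_sup] at hd
    obtain ⟨y, hy, z, hz, hyz⟩ := hd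
    obtain ⟨n, hn⟩ := hz
    refine ⟨⟨y, hy⟩, n, ?_⟩
    rw [← hyz, ← hn]
    push_cast
    rw [zsmul_eq_mul]
  -- divisibility lemma for multiples of α
  have hαdvd : ∀ (j : ℕ) (m : ℕ),
      ((m : ℕ) : 𝓞 K) * α ∈ Ideal.span {(f : 𝓞 K) ^ j} → f ^ j ∣ m := by
    intro j
    induction j with
    | zero => intro m _; simp
    | succ j ih =>
      intro m hm
      obtain ⟨d, hd⟩ := (Ideal.mem_span_singleton).mp hm
      have hfm : f ∣ m := by
        by_contra hfm
        have hcop : IsCoprime ((m : ℕ) : ℤ) ((f : ℕ) : ℤ) := by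
          rw [Int.isCoprime_iff_gcd_eq_one, Int.gcd_natCast_natCast]
          exact ((Nat.Prime.coprime_iff_not_dvd hf).mpr hfm).symm
        obtain ⟨u, v, huv⟩ := hcop
        have hαmem : α ∈ Ideal.span {(f : 𝓞 K)} := by
          have h1 : ((u : ℤ) : 𝓞 K) * ((m : ℕ) : 𝓞 K) + ((v : ℤ) : 𝓞 K) * ((f : ℕ) : 𝓞 K)
              = 1 := by exact_mod_cast congrArg (fun z : ℤ => (z : 𝓞 K)) huv
          have h2 : α = ((u : ℤ) : 𝓞 K) * (((m : ℕ) : 𝓞 K) * α)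
              + ((v : ℤ) : 𝓞 K) * ((f : 𝓞 K) * α) := by
            calc α = (((u : ℤ) : 𝓞 K) * ((m : ℕ) : 𝓞 K)
                + ((v : ℤ) : 𝓞 K) * ((f : ℕ) : 𝓞 K)) * α := by rw [h1, one_mul]
            _ = _ := by ring
          rw [h2]
          apply Ideal.add_mem
          · apply Ideal.mul_mem_left
            rw [hd, Ideal.mem_span_singleton]
            exact Dvd.dvd.mul_right (dvd_pow_self _ (Nat.succ_ne_zero j)) d
          · apply Ideal.mul_mem_left
            rw [Ideal.mem_span_singleton]
            exact Dvd.intro _ rfl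
        exact hα (hfO α hαmem)
      obtain ⟨m', rfl⟩ := hfm
      have hm' : ((m' : ℕ) : 𝓞 K) * α ∈ Ideal.span {(f : 𝓞 K) ^ j} := by
        rw [Ideal.mem_span_singleton]
        refine ⟨d, ?_⟩
        apply mul_left_cancel₀ hfR
        calc (f : 𝓞 K) * ((m' : 𝓞 K) * α) = ((f * m' : ℕ) : 𝓞 K) * α := by push_cast; ring
        _ = (f : 𝓞 K) ^ (j + 1) * d := hd
        _ = (f : 𝓞 K) * ((f : 𝓞 K) ^ j * d) := by ring
      rw [pow_succ']
      exact mul_dvd_mul_left f (ih m' hm')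
  -- basic memberships in Q and F
  have hfkQ : (f : ↥O) ^ k ∈ Q := by
    rw [hQdef]; exact Ideal.subset_span (Set.mem_insert _ _)
  have hsQ : s ∈ Q := by
    rw [hQdef]; exact Ideal.subset_span (Set.mem_insert_of_mem _ rfl)
  have hfF : (f : ↥O) ∈ F := by
    rw [hF]
    push_cast
    exact Ideal.mem_span_singleton_self _
  -- F * F ≤ (f) * F
  have hFF : F * F ≤ Ideal.span {(f : ↥O)} * F := by
    rw [Ideal.mul_le]
    intro x hx y hy
    obtain ⟨d₁, hd₁⟩ := (Ideal.mem_span_singleton).mp ((hF x).mp hx)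
    obtain ⟨d₂, hd₂⟩ := (Ideal.mem_span_singleton).mp ((hF y).mp hy)
    have hz : (f : 𝓞 K) * (d₁ * d₂) ∈ Ideal.span {(f : 𝓞 K)} := by
      rw [Ideal.mem_span_singleton]; exact Dvd.intro _ rfl
    set z : ↥O := ⟨(f : 𝓞 K) * (d₁ * d₂), hfO _ hz⟩ with hzdef
    have hzF : z ∈ F := by rw [hF]; exact hz
    have hxy : x * y = (f : ↥O) * z := by
      apply Subtype.ext
      push_cast
      rw [hd₁, hd₂]
      ring
    rw [hxy]
    exact Ideal.mul_mem_mul (Ideal.mem_span_singleton_self _) hzF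
  -- F^(m+1) ≤ (f^m) * F
  have hFpow : ∀ m : ℕ, F ^ (m + 1) ≤ Ideal.span {(f : ↥O) ^ m} * F := by
    intro m
    induction m with
    | zero => simp [Ideal.one_eq_top]
    | succ m ih =>
      calc F ^ (m + 2) = F ^ (m + 1) * F := by rw [pow_succ]
      _ ≤ (Ideal.span {(f : ↥O) ^ m} * F) * F := Ideal.mul_mono ih le_rfl
      _ = Ideal.span {(f : ↥O) ^ m} * (F * F) := by rw [mul_assoc]
      _ ≤ Ideal.span {(f : ↥O) ^ m} * (Ideal.span {(f : ↥O)} * F) :=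
          Ideal.mul_mono le_rfl hFF
      _ = (Ideal.span {(f : ↥O) ^ m} * Ideal.span {(f : ↥O)}) * F := by rw [mul_assoc]
      _ = Ideal.span {(f : ↥O) ^ (m + 1)} * F := by
          rw [Ideal.span_singleton_mul_span_singleton, pow_succ]
  -- key: f^(m) * x ∈ Q for x ∈ F, m = k - 1
  obtain ⟨j', rfl⟩ : ∃ j', k = j' + 1 := ⟨k - 1, (Nat.succ_pred_eq_of_pos hk).symm⟩
  have hfjF : ∀ x : ↥O, x ∈ F → (f : ↥O) ^ j' * x ∈ Q := by
    intro x hx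
    obtain ⟨d, hd⟩ := (Ideal.mem_span_singleton).mp ((hF x).mp hx)
    obtain ⟨o, n, hon⟩ := decomp d
    have key : (f : ↥O) ^ j' * x = (f : ↥O) ^ (j' + 1) * o + (n : ↥O) * ((f : ↥O) ^ j' * s) := by
      apply Subtype.ext
      push_cast
      rw [hd, hs, hon]
      ring
    rw [key]
    apply Ideal.add_mem
    · exact Ideal.mul_mem_right _ _ hfkQ
    · exact Ideal.mul_mem_left _ _ (Ideal.mul_mem_left _ _ hsQ)
  constructor
  · -- F ^ k ≤ Q
    refine le_trans (hFpow j') ?_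
    rw [Ideal.mul_le]
    intro r hr x hx
    obtain ⟨c, hc⟩ := (Ideal.mem_span_singleton).mp hr
    rw [hc, mul_comm ((f : ↥O) ^ j') c, mul_assoc]
    exact Ideal.mul_mem_left _ _ (hfjF x hx)
  · -- ¬ F ^ (k - 1) ≤ Q
    simp only [Nat.add_sub_cancel]
    rcases Nat.eq_zero_or_pos j' with rfl | hj'
    · -- k = 1
      intro h
      have hQtop : Q = ⊤ := by
        rw [eq_top_iff]
        simpa [Ideal.one_eq_top] using h
      have : Subsingleton (↥O ⧸ Q) := by
        rw [hQtop]
        exact Ideal.Quotient.subsingleton_iff.mpr rfl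
      have h1 : Nat.card (↥O ⧸ Q) = 1 :=
        Nat.card_eq_one_iff_unique.mpr ⟨this, inferInstance⟩
      rw [hNQ, zero_add, pow_one] at h1
      exact hf.one_lt.ne' h1
    · -- k = j + 2
      obtain ⟨j, rfl⟩ : ∃ j, j' = j + 1 := ⟨j' - 1, (Nat.succ_pred_eq_of_pos hj').symm⟩
      intro h
      -- the subgroup N = f^(j+1) 𝓞K inside O
      set JK : Ideal (𝓞 K) := Ideal.span {(f : 𝓞 K) ^ (j + 1)} with hJK
      have hJKleO : JK.toAddSubgroup ≤ O.toAddSubgroup := by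
        intro x hx
        have hx' : x ∈ JK := hx
        apply hfO
        rw [hJK, Ideal.mem_span_singleton] at hx'
        rw [Ideal.mem_span_singleton]
        exact dvd_trans (dvd_pow_self _ (Nat.succ_ne_zero j)) hx'
      set N : AddSubgroup ↥O := JK.toAddSubgroup.addSubgroupOf O.toAddSubgroup with hN
      have hNmem : ∀ x : ↥O, x ∈ N ↔ (x : 𝓞 K) ∈ JK := by
        intro x; rw [hN, AddSubgroup.mem_addSubgroupOf]; rfl
      -- index of N in O
      have hNindex : N.index = f ^ (2 * j + 1) := by
        have h1 : N.index = JK.toAddSubgroup.relIndex O.toAddSubgroup := rfl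
        have h2 := AddSubgroup.relIndex_mul_index hJKleO
        rw [hOindex, hIndexPow (j + 1)] at h2
        rw [h1]
        refine Nat.eq_of_mul_eq_mul_right hf.pos ?_
        rw [h2, ← pow_succ]
        ring_nf
      -- N ≤ Q (using h : F^(j+1) ≤ Q)
      have hNQle : N ≤ Q.toAddSubgroup := by
        intro x hx
        rw [hNmem] at hx
        obtain ⟨d, hd⟩ := (Ideal.mem_span_singleton).mp hx
        have hyO : (f : 𝓞 K) * d ∈ O := by
          apply hfO
          rw [Ideal.mem_span_singleton]
          exact Dvd.intro _ rfl
        set y : ↥O := ⟨(f : 𝓞 K) * d, hyO⟩ with hy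
        have hyF : y ∈ F := by
          rw [hF]
          rw [Ideal.mem_span_singleton]
          exact Dvd.intro _ rfl
        have hxy : x = (f : ↥O) ^ j * y := by
          apply Subtype.ext
          push_cast
          rw [hd]
          ring
        have hxF : x ∈ F ^ (j + 1) := by
          rw [hxy, pow_succ]
          exact Ideal.mul_mem_mul (Ideal.pow_mem_pow hfF j) hyF
        exact h hxF
      -- zmultiples s ≤ Q
      have hZQle : AddSubgroup.zmultiples s ≤ Q.toAddSubgroup := by
        intro x hx
        obtain ⟨n, hn⟩ := hx
        rw [← hn]
        exact AddSubgroup.zsmul_mem _ hsQ n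
      -- B = N ⊔ zmultiples s ≤ Q
      set B : AddSubgroup ↥O := N ⊔ AddSubgroup.zmultiples s with hB
      have hBQle : B ≤ Q.toAddSubgroup := sup_le hNQle hZQle
      -- order of s in O/N
      set sbar : ↥O ⧸ N := QuotientAddGroup.mk' N s with hsbar
      have hmem_smul : ∀ m : ℕ, (m • sbar = 0 ↔ ((m : ℕ) : 𝓞 K) * ((f : 𝓞 K) * α) ∈ JK) := by
        intro m
        rw [hsbar, ← map_nsmul, show (QuotientAddGroup.mk' N) (m • s)
          = ((m • s : ↥O) : ↥O ⧸ N) from rfl, QuotientAddGroup.eq_zero_iff, hNmem]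
        have : ((m • s : ↥O) : 𝓞 K) = ((m : ℕ) : 𝓞 K) * ((f : 𝓞 K) * α) := by
          push_cast
          rw [hs]
          ring
        rw [this]
      have hord : addOrderOf sbar = f ^ j := by
        apply Nat.dvd_antisymm
        · apply addOrderOf_dvd_of_nsmul_eq_zero
          rw [hmem_smul]
          rw [Ideal.mem_span_singleton]
          refine ⟨α, ?_⟩
          push_cast
          ring
        · have h0 : (addOrderOf sbar) • sbar = 0 := addOrderOf_nsmul_eq_zero sbar
          rw [hmem_smul] at h0
          apply hαdvd j (addOrderOf sbar)
          obtain ⟨d, hd⟩ := (Ideal.mem_span_singleton).mp h0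
          rw [Ideal.mem_span_singleton]
          refine ⟨d, ?_⟩
          apply mul_left_cancel₀ hfR
          calc (f : 𝓞 K) * (((addOrderOf sbar : ℕ) : 𝓞 K) * α)
              = ((addOrderOf sbar : ℕ) : 𝓞 K) * ((f : 𝓞 K) * α) := by ring
          _ = (f : 𝓞 K) ^ (j + 1) * d := hd
          _ = (f : 𝓞 K) * ((f : 𝓞 K) ^ j * d) := by ring
      -- index of B
      have hBindex : B.index = f ^ (j + 1) := by
        have hNB : N ≤ B := le_sup_left
        have hquot : Nat.card (↥O ⧸ B)
            = Nat.card ((↥O ⧸ N) ⧸ B.map (QuotientAddGroup.mk' N)) :=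
          (Nat.card_congr (QuotientAddGroup.quotientQuotientEquivQuotient N B hNB).toEquiv).symm
        have hmap : B.map (QuotientAddGroup.mk' N) = AddSubgroup.zmultiples sbar := by
          rw [hB, AddSubgroup.map_sup, QuotientAddGroup.map_mk'_self,
            AddMonoidHom.map_zmultiples]
          simp [hsbar]
        have hZcard : Nat.card (AddSubgroup.zmultiples sbar) = f ^ j := by
          rw [Nat.card_zmultiples, hord]
        have hGcard : Nat.card (↥O ⧸ N) = f ^ (2 * j + 1) := hNindex
        have hmul := AddSubgroup.index_mul_card (AddSubgroup.zmultiples sbar)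
        rw [hZcard, hGcard] at hmul
        have hZindex : (AddSubgroup.zmultiples sbar).index = f ^ (j + 1) := by
          refine Nat.eq_of_mul_eq_mul_right (pow_pos hf.pos j) ?_
          rw [hmul, ← pow_add]
          ring_nf
        have : B.index = Nat.card (↥O ⧸ B) := rfl
        rw [this, hquot, hmap]
        exact hZindex
      -- contradiction
      have hQindex : Q.toAddSubgroup.index = f ^ (j + 1 + 1) := by
        have : Q.toAddSubgroup.index = Nat.card (↥O ⧸ Q) := rfl
        rw [this, hNQ]
      have hdvd := AddSubgroup.index_dvd_of_le hBQle
      rw [hQindex, hBindex] at hdvd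
      have hle := Nat.le_of_dvd (pow_pos hf.pos _) hdvd
      have hlt : f ^ (j + 1) < f ^ (j + 1 + 1) :=
        Nat.pow_lt_pow_succ hf.one_lt
      omega
end

section
/- Let k ≥ 1 and α ∈ D \ O, and suppose Q = f^k·O + fα·O is an 𝔉-basic ideal of O with N(Q) = f^k and Q ≠ fO, and assume Q is a D-module. Then the f + 1 ideals J = f^k·O + f²α·O and J_a = f^{k+1}·O + (a·f^k + fα)·O for a = 0, 1, …, f−1 are pairwise distinct, each lies strictly between fQ and Q, and every ideal of O lying strictly between fQ and Q equals one of them; in particular there are exactly f + 1 ideals of O lying properly between fQ and Q. -/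
set_option synthInstance.maxHeartbeats 1000000
set_option maxHeartbeats 1000000

open NumberField

set_option maxHeartbeats 8000000

lemma aux_card (K : Type*) [Field K] [NumberField K] (hK : Module.finrank ℚ K = 2)
    (f : ℕ) :
    Nat.card ((𝓞 K) ⧸ (Ideal.span {(f : 𝓞 K)})) = f ^ 2 := by
  have h1 : Nat.card ((𝓞 K) ⧸ (Ideal.span {(f : 𝓞 K)}))
      = Ideal.absNorm (Ideal.span {(f : 𝓞 K)}) := by
    rw [Ideal.absNorm_apply, Submodule.cardQuot_apply]
  rw [h1, Ideal.absNorm_span_singleton]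
  have hb := Module.Free.chooseBasis ℤ (𝓞 K)
  have : (f : 𝓞 K) = algebraMap ℤ (𝓞 K) (f : ℤ) := by push_cast; ring
  rw [this, Algebra.norm_algebraMap_of_basis hb]
  have hcard : Fintype.card (Module.Free.ChooseBasisIndex ℤ (𝓞 K)) = 2 := by
    rw [← Module.finrank_eq_card_chooseBasisIndex, NumberField.RingOfIntegers.rank, hK]
  rw [hcard]
  simp [Int.natAbs_pow]

lemma aux_L3 (K : Type*) [Field K] [NumberField K] (hK : Module.finrank ℚ K = 2)
    (f : ℕ) (hf : f.Prime) (O : Subring (𝓞 K))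
    (hO : ∀ x : 𝓞 K, x ∈ O ↔ ∃ n : ℤ, x - (n : 𝓞 K) ∈ Ideal.span {(f : 𝓞 K)})
    (α : 𝓞 K) (hα : α ∉ O) (d : 𝓞 K) :
    ∃ m : ℤ, ∃ x ∈ O, d = x + m * α := by
  set I : Ideal (𝓞 K) := Ideal.span {(f : 𝓞 K)} with hI
  have hsub : ∀ y ∈ I, y ∈ O := fun y hy => (hO y).mpr ⟨0, by simpa using hy⟩
  have cardG : Nat.card ((𝓞 K) ⧸ I) = f ^ 2 := aux_card K hK f
  have hfin : Finite ((𝓞 K) ⧸ I) :=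
    Nat.finite_of_card_ne_zero (by rw [cardG]; exact pow_ne_zero _ hf.ne_zero)
  let π : 𝓞 K →+* (𝓞 K) ⧸ I := Ideal.Quotient.mk I
  set A : AddSubgroup ((𝓞 K) ⧸ I) := AddSubgroup.map π.toAddMonoidHom O.toAddSubgroup with hA
  have hmemA : ∀ w : 𝓞 K, π w ∈ A ↔ w ∈ O := by
    intro w
    constructor
    · rintro ⟨x, hx, hxw⟩
      have hxw2 : π x = π w := hxw
      have hxw' : x - w ∈ I := Ideal.Quotient.eq.mp hxw2
      have hw : w = x - (x - w) := by ring
      rw [hw]; exact sub_mem hx (hsub _ hxw')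
    · intro hw; exact ⟨w, hw, rfl⟩
  have hone : (1 : (𝓞 K) ⧸ I) ≠ 0 := by
    intro h
    have h1 : (1 : 𝓞 K) ∈ I := by rwa [← map_one π, Ideal.Quotient.eq_zero_iff_mem] at h
    have htop : I = ⊤ := Ideal.eq_top_iff_one I |>.mpr h1
    have hss : Subsingleton ((𝓞 K) ⧸ I) := by
      rw [htop]
      exact Ideal.Quotient.subsingleton_iff.mpr rfl
    have hc1 : Nat.card ((𝓞 K) ⧸ I) = 1 := Nat.card_eq_one_iff_unique.mpr ⟨hss, ⟨0⟩⟩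
    rw [cardG] at hc1
    have := hf.two_le
    nlinarith
  have hανA : π α ∉ A := fun h => hα ((hmemA α).mp h)
  have hcards : ∀ B : AddSubgroup ((𝓞 K) ⧸ I),
      Nat.card B = 1 ∨ Nat.card B = f ∨ Nat.card B = f ^ 2 := by
    intro B
    have hdvd : Nat.card B ∣ f ^ 2 := by
      rw [← cardG]; exact AddSubgroup.card_addSubgroup_dvd_card B
    obtain ⟨i, hi, hBi⟩ := (Nat.dvd_prime_pow hf).mp hdvd
    interval_cases i
    · left; simpa using hBi
    · right; left; simpa using hBi
    · right; right; exact hBi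
  have hnotbot : ∀ B : AddSubgroup ((𝓞 K) ⧸ I), (1:(𝓞 K) ⧸ I) ∈ B → Nat.card B ≠ 1 := by
    intro B h1 hc
    have : B = ⊥ := AddSubgroup.card_eq_one.mp hc
    rw [this] at h1
    exact hone (by simpa using h1)
  have hnottop : ∀ B : AddSubgroup ((𝓞 K) ⧸ I), π α ∉ B → Nat.card B ≠ f ^ 2 := by
    intro B hB hc
    have : B = ⊤ := AddSubgroup.eq_top_of_card_eq B (by rw [hc, cardG])
    exact hB (this ▸ AddSubgroup.mem_top _)
  have h1A : (1:(𝓞 K) ⧸ I) ∈ A := by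
    have : π 1 ∈ A := (hmemA 1).mpr (one_mem O)
    simpa using this
  have cardA : Nat.card A = f := by
    rcases hcards A with h | h | h
    · exact absurd h (hnotbot A h1A)
    · exact h
    · exact absurd h (hnottop A hανA)
  set B : AddSubgroup ((𝓞 K) ⧸ I) := A ⊔ AddSubgroup.zmultiples (π α) with hB
  have hABle : A ≤ B := le_sup_left
  have hαB : π α ∈ B := AddSubgroup.mem_sup_right (AddSubgroup.mem_zmultiples _)
  have cardB : Nat.card B = f ^ 2 := by
    rcases hcards B with h | h | h
    · exact absurd h (hnotbot B (hABle h1A))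
    · exfalso
      have hsetle : (A : Set ((𝓞 K) ⧸ I)) ⊆ (B : Set _) := hABle
      have : (A : Set ((𝓞 K) ⧸ I)) = (B : Set _) := by
        apply Set.eq_of_subset_of_ncard_le hsetle
        · rw [← Nat.card_coe_set_eq, ← Nat.card_coe_set_eq]
          simp only [SetLike.coe_sort_coe]
          rw [cardA, h]
      have hABeq : A = B := SetLike.coe_injective this
      exact hανA (hABeq ▸ hαB)
    · exact h
  have hBtop : B = ⊤ := AddSubgroup.eq_top_of_card_eq B (by rw [cardB, cardG])
  have hd : π d ∈ B := hBtop ▸ AddSubgroup.mem_top _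
  rw [hB, AddSubgroup.mem_sup] at hd
  obtain ⟨y, hy, z, hz, hyz⟩ := hd
  obtain ⟨m, hm⟩ := AddSubgroup.mem_zmultiples_iff.mp hz
  refine ⟨m, d - m * α, ?_, by ring⟩
  have : π (d - m * α) ∈ A := by
    have hπ : π (d - m * α) = y := by
      have hπm : π ((m : 𝓞 K) * α) = m • π α := by
        push_cast [map_mul]
        simp [zsmul_eq_mul]
      rw [map_sub, hπm, hm, ← hyz]; ring
    rw [hπ]; exact hy
  exact (hmemA _).mp this

set_option maxHeartbeats 8000000 in
theorem stmt_6
    (K : Type*) [Field K] [NumberField K] (hK : Module.finrank ℚ K = 2)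
    (f : ℕ) (hf : f.Prime)
    (O : Subring (𝓞 K))
    (hO : ∀ x : 𝓞 K, x ∈ O ↔ ∃ n : ℤ, x - (n : 𝓞 K) ∈ Ideal.span {(f : 𝓞 K)})
    (F : Ideal O) (hF : ∀ x : O, x ∈ F ↔ (x : 𝓞 K) ∈ Ideal.span {(f : 𝓞 K)})
    (k : ℕ) (hk : 1 ≤ k) (α : 𝓞 K) (hα : α ∉ O)
    (s : O) (hs : (s : 𝓞 K) = (f : 𝓞 K) * α)
    (Q : Ideal O) (hQdef : Q = Ideal.span {(f : O) ^ k, s})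
    (hQbasic : IsFBasic F Q)
    (hNQ : Nat.card (↥O ⧸ Q) = f ^ k)
    (hQne : Q ≠ Ideal.span {(f : O)})
    (hDmod : ∀ z : 𝓞 K, ∀ x ∈ Q, ∃ w ∈ Q, (w : 𝓞 K) = z * (x : 𝓞 K))
    (J : Ideal O) (hJ : J = Ideal.span {(f : O) ^ k, (f : O) * s})
    (Ja : ℕ → Ideal O)
    (hJa : ∀ a : ℕ, Ja a = Ideal.span {(f : O) ^ (k + 1), (a : O) * (f : O) ^ k + s}) :
    (∀ a < f, J ≠ Ja a) ∧
    (∀ a < f, ∀ b < f, a ≠ b → Ja a ≠ Ja b) ∧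
    (Ideal.span {(f : O)} * Q < J ∧ J < Q) ∧
    (∀ a < f, Ideal.span {(f : O)} * Q < Ja a ∧ Ja a < Q) ∧
    (∀ I : Ideal O, Ideal.span {(f : O)} * Q < I → I < Q → I = J ∨ ∃ a < f, I = Ja a) ∧
    Nat.card {I : Ideal O // Ideal.span {(f : O)} * Q < I ∧ I < Q} = f + 1 := by
  classical
  have hf2 : 2 ≤ f := hf.two_le
  have hfz : (f : 𝓞 K) ≠ 0 := Nat.cast_ne_zero.mpr hf.ne_zero
  have hfprimeZ : Prime (f : ℤ) := Nat.prime_iff_prime_int.mp hf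
  obtain ⟨k', hk'⟩ : ∃ k', k = k' + 1 := ⟨k - 1, by omega⟩
  set p : Ideal O := Ideal.span {(f : O)} with hp
  have hfp : (f : O) ∈ p := Ideal.subset_span rfl
  have hfQspan : p * Q = Ideal.span {(f : O) ^ (k+1), (f : O) * s} := by
    have h1 : (f : O) * (f : O) ^ k = (f : O) ^ (k+1) := by ring
    rw [hQdef, hp, Ideal.span_insert, Ideal.mul_sup,
        Ideal.span_singleton_mul_span_singleton, Ideal.span_singleton_mul_span_singleton,
        ← Ideal.span_insert, h1]
  have memQ : ∀ x : O, x ∈ Q ↔ ∃ u v : O, u * (f : O) ^ k + v * s = x := by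
    intro x; rw [hQdef]; exact Ideal.mem_span_pair
  have memfQ : ∀ x : O, x ∈ p * Q ↔ ∃ u v : O, u * (f : O) ^ (k+1) + v * ((f : O) * s) = x := by
    intro x; rw [hfQspan]; exact Ideal.mem_span_pair
  have hsQ : s ∈ Q := by rw [hQdef]; exact Ideal.subset_span (by simp)
  have hfkQ : (f : O) ^ k ∈ Q := by rw [hQdef]; exact Ideal.subset_span (by simp)
  have hfk1fQ : (f : O) ^ (k+1) ∈ p * Q := by rw [hfQspan]; exact Ideal.subset_span (by simp)
  have hfsfQ : (f : O) * s ∈ p * Q := by rw [hfQspan]; exact Ideal.subset_span (by simp)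
  have hfQleQ : p * Q ≤ Q := Ideal.mul_le_right
  have hqmem : ∀ u v : O, u * (f : O) ^ k + v * s ∈ Q := fun u v =>
    Ideal.add_mem _ (Ideal.mul_mem_left _ _ hfkQ) (Ideal.mul_mem_left _ _ hsQ)
  have hmulfQ : ∀ (d : 𝓞 K) (x : O), x ∈ Q →
      ∃ w : O, w ∈ p * Q ∧ (w : 𝓞 K) = (f : 𝓞 K) * (d * (x : 𝓞 K)) := by
    intro d x hx
    obtain ⟨w, hwQ, hw⟩ := hDmod d x hx
    refine ⟨(f : O) * w, Ideal.mul_mem_mul hfp hwQ, ?_⟩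
    push_cast
    rw [hw]
  -- reduction mod p*Q
  have redQ : ∀ x ∈ Q, ∃ a b : ℤ, x - ((a : O) * (f : O) ^ k + (b : O) * s) ∈ p * Q := by
    intro x hx
    obtain ⟨u, v, huv⟩ := (memQ x).mp hx
    obtain ⟨n, hn⟩ := (hO u).mp u.2
    obtain ⟨d, hd⟩ := Ideal.mem_span_singleton.mp hn
    obtain ⟨m, hm⟩ := (hO v).mp v.2
    obtain ⟨e, he⟩ := Ideal.mem_span_singleton.mp hm
    obtain ⟨w₁, hw₁fQ, hw₁⟩ := hmulfQ d ((f : O) ^ k) hfkQ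
    obtain ⟨w₂, hw₂fQ, hw₂⟩ := hmulfQ e s hsQ
    push_cast at hw₁ hw₂
    refine ⟨n, m, ?_⟩
    have huv' : (u : 𝓞 K) * (f : 𝓞 K) ^ k + (v : 𝓞 K) * (s : 𝓞 K) = (x : 𝓞 K) := by
      exact_mod_cast congrArg (Subtype.val) huv
    have hxw : x - ((n : O) * (f : O) ^ k + (m : O) * s) = w₁ + w₂ := by
      apply Subtype.ext
      push_cast
      rw [hw₁, hw₂]
      linear_combination (-1 : 𝓞 K) * huv' + (f : 𝓞 K) ^ k * hd + (s : 𝓞 K) * he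
    rw [hxw]; exact Ideal.add_mem _ hw₁fQ hw₂fQ
  have L3 := aux_L3 K hK f hf O hO α hα
  -- single step for the ℤ-generation of O/Q
  have stepS : ∀ y : O, ∃ n : ℤ, ∃ y' : O, y - ((n : O) + (f : O) * y') ∈ Q := by
    intro y
    obtain ⟨n, hn⟩ := (hO y).mp y.2
    obtain ⟨d, hd⟩ := Ideal.mem_span_singleton.mp hn
    obtain ⟨m, x, hxO, hx⟩ := L3 d
    refine ⟨n, ⟨x, hxO⟩, ?_⟩
    have heq : y - ((n : O) + (f : O) * ⟨x, hxO⟩) = (m : O) * s := by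
      apply Subtype.ext
      push_cast
      rw [hs]
      linear_combination hd + (f : 𝓞 K) * hx
    rw [heq]; exact Ideal.mul_mem_left _ _ hsQ
  have L4 : ∀ x : O, ∃ n : ℤ, x - (n : O) ∈ Q := by
    have main : ∀ j : ℕ, ∀ x : O, ∃ n : ℤ, ∃ y : O, x - ((n : O) + (f : O) ^ j * y) ∈ Q := by
      intro j
      induction j with
      | zero => intro x; exact ⟨0, x, by simp⟩
      | succ j ih =>
        intro x
        obtain ⟨n, y, hny⟩ := ih x
        obtain ⟨n', y', hn'y'⟩ := stepS y
        refine ⟨n + f ^ j * n', y', ?_⟩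
        have heq : x - (((n + (f : ℤ) ^ j * n' : ℤ) : O) + (f : O) ^ (j+1) * y')
            = (x - ((n : O) + (f : O) ^ j * y)) + (f : O) ^ j * (y - ((n' : O) + (f : O) * y')) := by
          push_cast; ring
        rw [heq]; exact Ideal.add_mem _ hny (Ideal.mul_mem_left _ _ hn'y')
    intro x
    obtain ⟨n, y, h⟩ := main k x
    refine ⟨n, ?_⟩
    have heq : x - (n : O) = (x - ((n : O) + (f : O) ^ k * y)) + (f : O) ^ k * y := by ring
    rw [heq]; exact Ideal.add_mem _ h (Ideal.mul_mem_right _ _ hfkQ)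
  -- the integers in Q
  have L5 : ∀ a : ℤ, ((a : ℤ) : O) ∈ Q ↔ (f : ℤ) ^ k ∣ a := by
    set φ : ℤ →+* (↥O) ⧸ Q := (Ideal.Quotient.mk Q).comp (Int.castRingHom O) with hφ
    have hsurj : Function.Surjective φ := by
      intro g
      obtain ⟨x, rfl⟩ := Ideal.Quotient.mk_surjective g
      obtain ⟨n, hn⟩ := L4 x
      refine ⟨n, ?_⟩
      show Ideal.Quotient.mk Q ((n : ℤ) : O) = Ideal.Quotient.mk Q x
      rw [Ideal.Quotient.eq]
      simpa [neg_sub] using Q.neg_mem hn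
    obtain ⟨g, hg⟩ := (IsPrincipalIdealRing.principal (RingHom.ker φ)).principal
    have hcard : Nat.card (ℤ ⧸ RingHom.ker φ) = f ^ k := by
      rw [← hNQ]
      exact Nat.card_congr (RingHom.quotientKerEquivOfSurjective hsurj).toEquiv
    rw [hg] at hcard
    have hgcard : g.natAbs = f ^ k := by
      rw [show (Submodule.span ℤ {g} : Ideal ℤ) = Ideal.span {g} from rfl] at hcard
      rw [Nat.card_congr (Int.quotientSpanEquivZMod g).toEquiv, Nat.card_zmod] at hcard
      exact hcard
    intro a
    have hmem : (((a : ℤ) : O) ∈ Q) ↔ a ∈ RingHom.ker φ := by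
      rw [RingHom.mem_ker]
      constructor
      · intro h
        show Ideal.Quotient.mk Q ((a : ℤ) : O) = 0
        exact Ideal.Quotient.eq_zero_iff_mem.mpr h
      · intro h
        exact Ideal.Quotient.eq_zero_iff_mem.mp h
    rw [hmem, hg]
    rw [show (Submodule.span ℤ {g} : Ideal ℤ) = Ideal.span {g} from rfl, Ideal.mem_span_singleton]
    rw [← Int.natAbs_dvd, hgcard]
    push_cast
    rfl
  -- cancellation helper
  have cancel : ∀ (u v : O) (A B : ℤ),
      u * (f : O) ^ (k+1) + v * ((f : O) * s) = (A : O) * (f : O) ^ k + (B : O) * s →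
      ((u * (f : O) ^ k + v * s : O) : 𝓞 K) = (A : 𝓞 K) * (f : 𝓞 K) ^ k' + (B : 𝓞 K) * α := by
    intro u v A B h
    have hc : (u : 𝓞 K) * (f : 𝓞 K) ^ (k+1) + (v : 𝓞 K) * ((f : 𝓞 K) * (s : 𝓞 K))
        = (A : 𝓞 K) * (f : 𝓞 K) ^ k + (B : 𝓞 K) * (s : 𝓞 K) := by
      exact_mod_cast congrArg (Subtype.val) h
    rw [hs, hk'] at hc
    apply mul_left_cancel₀ hfz
    push_cast
    rw [hs, hk']
    linear_combination hc
  -- independence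
  have indep : ∀ A B : ℤ, ((A : O) * (f : O) ^ k + (B : O) * s) ∈ p * Q →
      (f : ℤ) ∣ A ∧ (f : ℤ) ∣ B := by
    intro A B hmem
    have hB : (f : ℤ) ∣ B := by
      by_contra hBf
      obtain ⟨u, v, huv⟩ := (memfQ _).mp hmem
      have hq := cancel u v A B huv
      have hcop : IsCoprime (f : ℤ) B := hfprimeZ.coprime_iff_not_dvd.mpr hBf
      obtain ⟨c, d, hcd⟩ := hcop
      have hαO : α ∈ O := by
        have hmm : α = (c : 𝓞 K) * (s : 𝓞 K)
            + (d : 𝓞 K) * (((u * (f : O) ^ k + v * s : O) : 𝓞 K))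
            - (d : 𝓞 K) * ((A : 𝓞 K) * (f : 𝓞 K) ^ k') := by
          rw [hq, hs]
          have hcd' : (c : 𝓞 K) * (f : 𝓞 K) + (d : 𝓞 K) * (B : 𝓞 K) = 1 := by
            exact_mod_cast congrArg (fun t : ℤ => (t : 𝓞 K)) hcd
          linear_combination (-α) * hcd'
        rw [hmm]
        refine O.sub_mem (O.add_mem (O.mul_mem ?_ s.2) (O.mul_mem ?_ (u * (f : O) ^ k + v * s).2))
          (O.mul_mem ?_ (O.mul_mem ?_ ?_))
        · exact intCast_mem O c
        · exact intCast_mem O d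
        · exact intCast_mem O d
        · exact intCast_mem O A
        · exact pow_mem (natCast_mem O f) k'
      exact hα hαO
    obtain ⟨B', rfl⟩ := hB
    refine ⟨?_, Dvd.intro B' rfl⟩
    have hAf : (A : O) * (f : O) ^ k ∈ p * Q := by
      have heq : (A : O) * (f : O) ^ k
          = ((A : O) * (f : O) ^ k + (((f : ℤ) * B' : ℤ) : O) * s) - (B' : O) * ((f : O) * s) := by
        push_cast; ring
      rw [heq]; exact Ideal.sub_mem _ hmem (Ideal.mul_mem_left _ _ hfsfQ)
    obtain ⟨u, v, huv⟩ := (memfQ _).mp hAf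
    have hq := cancel u v A 0 (by push_cast at huv ⊢; linear_combination huv)
    have hZQ : ((A * (f : ℤ) ^ k' : ℤ) : O) ∈ Q := by
      have heq : ((A * (f : ℤ) ^ k' : ℤ) : O) = u * (f : O) ^ k + v * s := by
        apply Subtype.ext
        push_cast at hq ⊢
        linear_combination (-1 : 𝓞 K) * hq
      rw [heq]; exact hqmem u v
    obtain ⟨t, ht⟩ := (L5 _).mp hZQ
    have hfk'nz : ((f : ℤ)) ^ k' ≠ 0 := pow_ne_zero _ (by exact_mod_cast hf.ne_zero)
    refine ⟨t, mul_right_cancel₀ hfk'nz ?_⟩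
    rw [ht, hk']; ring
  have fdvd1 : ¬ ((f : ℤ) ∣ 1) := by
    intro h
    have h1 := Int.le_of_dvd one_pos h
    have h2 : (2 : ℤ) ≤ f := by exact_mod_cast hf2
    omega
  -- membership normal form for J
  have fQleJ : p * Q ≤ J := by
    rw [hfQspan, hJ, Ideal.span_le]
    rw [Set.insert_subset_iff]
    constructor
    · have heq : (f : O) ^ (k+1) = (f : O) * (f : O) ^ k := by ring
      rw [heq]
      exact Ideal.mul_mem_left _ _ (Ideal.subset_span (by simp))
    · simp only [Set.singleton_subset_iff, SetLike.mem_coe]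
      exact Ideal.subset_span (by simp)
  have hfkJ : (f : O) ^ k ∈ J := by rw [hJ]; exact Ideal.subset_span (by simp)
  have memJ : ∀ x : O, x ∈ J ↔ ∃ a : ℤ, x - (a : O) * (f : O) ^ k ∈ p * Q := by
    intro x
    constructor
    · intro hx
      rw [hJ] at hx
      obtain ⟨u, v, huv⟩ := Ideal.mem_span_pair.mp hx
      obtain ⟨n, hn⟩ := (hO u).mp u.2
      obtain ⟨d, hd⟩ := Ideal.mem_span_singleton.mp hn
      obtain ⟨w, hwfQ, hw⟩ := hmulfQ d ((f : O) ^ k) hfkQ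
      push_cast at hw
      refine ⟨n, ?_⟩
      have huv' : (u : 𝓞 K) * (f : 𝓞 K) ^ k + (v : 𝓞 K) * ((f : 𝓞 K) * (s : 𝓞 K)) = (x : 𝓞 K) := by
        exact_mod_cast congrArg (Subtype.val) huv
      have heq : x - (n : O) * (f : O) ^ k = w + v * ((f : O) * s) := by
        apply Subtype.ext
        push_cast
        rw [hw]
        linear_combination (-1 : 𝓞 K) * huv' + (f : 𝓞 K) ^ k * hd
      rw [heq]; exact Ideal.add_mem _ hwfQ (Ideal.mul_mem_left _ _ hfsfQ)
    · rintro ⟨a, ha⟩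
      have h1 : (a : O) * (f : O) ^ k ∈ J := Ideal.mul_mem_left _ _ hfkJ
      have h2 := Ideal.add_mem _ (fQleJ ha) h1
      simpa using h2
  -- membership normal form for Ja
  have hgQ : ∀ a : ℕ, (a : O) * (f : O) ^ k + s ∈ Q := fun a =>
    Ideal.add_mem _ (Ideal.mul_mem_left _ _ hfkQ) hsQ
  have hgJa : ∀ a : ℕ, (a : O) * (f : O) ^ k + s ∈ Ja a := by
    intro a; rw [hJa]; exact Ideal.subset_span (by simp)
  have hfk1Ja : ∀ a : ℕ, (f : O) ^ (k+1) ∈ Ja a := by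
    intro a; rw [hJa]; exact Ideal.subset_span (by simp)
  have fQleJa : ∀ a : ℕ, p * Q ≤ Ja a := by
    intro a
    rw [hfQspan, Ideal.span_le, Set.insert_subset_iff]
    refine ⟨hfk1Ja a, ?_⟩
    simp only [Set.singleton_subset_iff, SetLike.mem_coe]
    have heq : (f : O) * s = (f : O) * ((a : O) * (f : O) ^ k + s) - (a : O) * (f : O) ^ (k+1) := by
      ring
    rw [heq]
    exact Ideal.sub_mem _ (Ideal.mul_mem_left _ _ (hgJa a)) (Ideal.mul_mem_left _ _ (hfk1Ja a))
  have memJa : ∀ (a : ℕ) (x : O),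
      x ∈ Ja a ↔ ∃ b : ℤ, x - (b : O) * ((a : O) * (f : O) ^ k + s) ∈ p * Q := by
    intro a x
    constructor
    · intro hx
      rw [hJa] at hx
      obtain ⟨u, v, huv⟩ := Ideal.mem_span_pair.mp hx
      obtain ⟨m, hm⟩ := (hO v).mp v.2
      obtain ⟨e, he⟩ := Ideal.mem_span_singleton.mp hm
      obtain ⟨w, hwfQ, hw⟩ := hmulfQ e ((a : O) * (f : O) ^ k + s) (hgQ a)
      push_cast at hw
      refine ⟨m, ?_⟩
      have huv' : (u : 𝓞 K) * (f : 𝓞 K) ^ (k+1)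
          + (v : 𝓞 K) * ((a : 𝓞 K) * (f : 𝓞 K) ^ k + (s : 𝓞 K)) = (x : 𝓞 K) := by
        exact_mod_cast congrArg (Subtype.val) huv
      have heq : x - (m : O) * ((a : O) * (f : O) ^ k + s)
          = u * (f : O) ^ (k+1) + w := by
        apply Subtype.ext
        push_cast
        rw [hw]
        push_cast
        linear_combination (-1 : 𝓞 K) * huv'
          + ((a : 𝓞 K) * (f : 𝓞 K) ^ k + (s : 𝓞 K)) * he
      rw [heq]
      exact Ideal.add_mem _ (Ideal.mul_mem_left _ _ hfk1fQ) hwfQ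
    · rintro ⟨b, hb⟩
      have h1 : (b : O) * ((a : O) * (f : O) ^ k + s) ∈ Ja a := Ideal.mul_mem_left _ _ (hgJa a)
      have h2 := Ideal.add_mem _ (fQleJa a hb) h1
      simpa using h2
  -- non-membership facts
  have hfk_notin_fQ : (f : O) ^ k ∉ p * Q := by
    intro h
    have h' : ((1 : ℤ) : O) * (f : O) ^ k + ((0 : ℤ) : O) * s ∈ p * Q := by
      push_cast; simpa using h
    exact fdvd1 (indep 1 0 h').1
  have hs_notin_J : s ∉ J := by
    intro h
    obtain ⟨a, ha⟩ := (memJ s).mp h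
    have heq : s - (a : O) * (f : O) ^ k = ((-a : ℤ) : O) * (f : O) ^ k + ((1 : ℤ) : O) * s := by
      push_cast; ring
    rw [heq] at ha
    exact fdvd1 (indep _ _ ha).2
  have hfk_notin_Ja : ∀ a : ℕ, (f : O) ^ k ∉ Ja a := by
    intro a h
    obtain ⟨b, hb⟩ := (memJa a _).mp h
    have heq : (f : O) ^ k - (b : O) * ((a : O) * (f : O) ^ k + s)
        = ((1 - b * (a : ℤ) : ℤ) : O) * (f : O) ^ k + ((-b : ℤ) : O) * s := by
      push_cast; ring
    rw [heq] at hb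
    obtain ⟨h1, h2⟩ := indep _ _ hb
    apply fdvd1
    have h3 : (f : ℤ) ∣ b := (dvd_neg).mp h2
    have h4 : (f : ℤ) ∣ b * (a : ℤ) := h3.mul_right _
    have := dvd_add h1 h4
    simpa using this
  have hg_notin_fQ : ∀ a : ℕ, (a : O) * (f : O) ^ k + s ∉ p * Q := by
    intro a h
    have heq : (a : O) * (f : O) ^ k + s
        = (((a : ℤ) : ℤ) : O) * (f : O) ^ k + ((1 : ℤ) : O) * s := by
      push_cast; ring
    rw [heq] at h
    exact fdvd1 (indep _ _ h).2
  -- the six statements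
  have part1 : ∀ a < f, J ≠ Ja a := by
    intro a _ h
    exact hfk_notin_Ja a (h ▸ hfkJ)
  have part2 : ∀ a < f, ∀ b < f, a ≠ b → Ja a ≠ Ja b := by
    intro a haf b hbf hab h
    have hga : (a : O) * (f : O) ^ k + s ∈ Ja b := h ▸ hgJa a
    obtain ⟨c, hc⟩ := (memJa b _).mp hga
    have heq : ((a : O) * (f : O) ^ k + s) - (c : O) * ((b : O) * (f : O) ^ k + s)
        = (((a : ℤ) - c * (b : ℤ) : ℤ) : O) * (f : O) ^ k + ((1 - c : ℤ) : O) * s := by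
      push_cast; ring
    rw [heq] at hc
    obtain ⟨h1, h2⟩ := indep _ _ hc
    have h3 : (f : ℤ) ∣ ((a : ℤ) - (b : ℤ)) := by
      have heq2 : (a : ℤ) - (b : ℤ) = ((a : ℤ) - c * (b : ℤ)) - (b : ℤ) * (1 - c) := by ring
      rw [heq2]
      exact dvd_sub h1 (h2.mul_left _)
    have habs : (a : ℤ) - (b : ℤ) = 0 := by
      refine Int.eq_zero_of_abs_lt_dvd h3 ?_
      rw [abs_sub_lt_iff]
      constructor <;> [skip; skip] <;> omega
    omega
  have hJleQ : J ≤ Q := by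
    rw [hJ, Ideal.span_le, Set.insert_subset_iff]
    exact ⟨hfkQ, by simpa using Ideal.mul_mem_left _ _ hsQ⟩
  have hJaleQ : ∀ a : ℕ, Ja a ≤ Q := by
    intro a
    rw [hJa, Ideal.span_le, Set.insert_subset_iff]
    constructor
    · have heq : (f : O) ^ (k+1) = (f : O) * (f : O) ^ k := by ring
      rw [heq]; exact Ideal.mul_mem_left _ _ hfkQ
    · simpa using hgQ a
  have part3a : p * Q < J := by
    refine lt_of_le_of_ne fQleJ (fun h => ?_)
    exact hfk_notin_fQ (h ▸ hfkJ)
  have part3b : J < Q := by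
    refine lt_of_le_of_ne hJleQ (fun h => ?_)
    exact hs_notin_J (h ▸ hsQ)
  have part4 : ∀ a < f, p * Q < Ja a ∧ Ja a < Q := by
    intro a _
    constructor
    · refine lt_of_le_of_ne (fQleJa a) (fun h => ?_)
      exact hg_notin_fQ a (h ▸ hgJa a)
    · refine lt_of_le_of_ne (hJaleQ a) (fun h => ?_)
      exact hfk_notin_Ja a (h ▸ hfkQ)
  have part5 : ∀ I : Ideal O, p * Q < I → I < Q → I = J ∨ ∃ a < f, I = Ja a := by
    intro I hfQI hIQ
    by_cases hcase : ∀ x ∈ I, ∀ A B : ℤ,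
        x - ((A : O) * (f : O) ^ k + (B : O) * s) ∈ p * Q → (f : ℤ) ∣ B
    · left
      obtain ⟨x, hxI, hxfQ⟩ := SetLike.exists_of_lt hfQI
      obtain ⟨A, B, hAB⟩ := redQ x (le_of_lt hIQ hxI)
      obtain ⟨B', rfl⟩ := hcase x hxI A B hAB
      have hA : ¬ (f : ℤ) ∣ A := by
        intro hAd
        obtain ⟨A', rfl⟩ := hAd
        apply hxfQ
        have hx : x = (x - ((((f : ℤ) * A' : ℤ) : O) * (f : O) ^ k + (((f : ℤ) * B' : ℤ) : O) * s))
            + (A' : O) * (f : O) ^ (k+1) + (B' : O) * ((f : O) * s) := by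
          push_cast; ring
        rw [hx]
        exact Ideal.add_mem _ (Ideal.add_mem _ hAB (Ideal.mul_mem_left _ _ hfk1fQ))
          (Ideal.mul_mem_left _ _ hfsfQ)
      have hcop : IsCoprime (f : ℤ) A := hfprimeZ.coprime_iff_not_dvd.mpr hA
      obtain ⟨c, d, hcd⟩ := hcop
      have hcd' : (c : O) * (f : O) + (d : O) * (A : O) = 1 := by
        exact_mod_cast congrArg (fun t : ℤ => (t : O)) hcd
      have hfkI : (f : O) ^ k ∈ I := by
        have heq : (f : O) ^ k = (d : O) * x
            - (d : O) * (x - ((A : O) * (f : O) ^ k + (((f : ℤ) * B' : ℤ) : O) * s))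
            + (c : O) * (f : O) ^ (k+1)
            - ((d * B' : ℤ) : O) * ((f : O) * s) := by
          push_cast
          linear_combination (-((f : O) ^ k)) * hcd'
        rw [heq]
        refine Ideal.sub_mem _ (Ideal.add_mem _ (Ideal.sub_mem _
          (Ideal.mul_mem_left _ _ hxI)
          (Ideal.mul_mem_left _ _ (le_of_lt hfQI hAB)))
          (Ideal.mul_mem_left _ _ (le_of_lt hfQI hfk1fQ)))
          (Ideal.mul_mem_left _ _ (le_of_lt hfQI hfsfQ))
      apply le_antisymm
      · intro y hyI
        obtain ⟨Ay, By, hy⟩ := redQ y (le_of_lt hIQ hyI)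
        obtain ⟨By', rfl⟩ := hcase y hyI Ay By hy
        rw [memJ]
        refine ⟨Ay, ?_⟩
        have heq : y - (Ay : O) * (f : O) ^ k
            = (y - ((Ay : O) * (f : O) ^ k + (((f : ℤ) * By' : ℤ) : O) * s))
              + (By' : O) * ((f : O) * s) := by
          push_cast; ring
        rw [heq]
        exact Ideal.add_mem _ hy (Ideal.mul_mem_left _ _ hfsfQ)
      · rw [hJ, Ideal.span_le, Set.insert_subset_iff]
        exact ⟨hfkI, by simpa using le_of_lt hfQI hfsfQ⟩
    · right
      push_neg at hcase
      obtain ⟨x, hxI, A, B, hAB, hBf⟩ := hcase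
      have hcop : IsCoprime (f : ℤ) B := hfprimeZ.coprime_iff_not_dvd.mpr hBf
      obtain ⟨c, d, hcd⟩ := hcop
      have hfpos : (0 : ℤ) < f := by exact_mod_cast hf.pos
      obtain ⟨a, haf, haz⟩ : ∃ a : ℕ, a < f ∧
          (a : ℤ) = d * A - (f : ℤ) * ((d * A) / (f : ℤ)) := by
        have hmodnn := Int.emod_nonneg (d * A) (ne_of_gt hfpos)
        have hmodlt := Int.emod_lt_of_pos (d * A) hfpos
        refine ⟨((d * A) % (f : ℤ)).toNat, by omega, ?_⟩
        rw [Int.toNat_of_nonneg hmodnn, Int.emod_def]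
      refine ⟨a, haf, ?_⟩
      have hcd' : (c : O) * (f : O) + (d : O) * (B : O) = 1 := by
        exact_mod_cast congrArg (fun t : ℤ => (t : O)) hcd
      have haz' : ((a : ℕ) : O) = (d : O) * (A : O) - (f : O) * (((d * A) / (f : ℤ) : ℤ) : O) := by
        exact_mod_cast congrArg (fun t : ℤ => (t : O)) haz
      have hkey : ((a : O) * (f : O) ^ k + s) - (d : O) * x ∈ p * Q := by
        have heq : ((a : O) * (f : O) ^ k + s) - (d : O) * x
            = -((d : O) * (x - ((A : O) * (f : O) ^ k + (B : O) * s)))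
              + (-((d * A) / (f : ℤ) : ℤ) : O) * (f : O) ^ (k+1)
              + (c : O) * ((f : O) * s) := by
          push_cast
          linear_combination ((f : O) ^ k) * haz' + (-s) * hcd'
        rw [heq]
        exact Ideal.add_mem _ (Ideal.add_mem _ ((p * Q).neg_mem (Ideal.mul_mem_left _ _ hAB))
          (Ideal.mul_mem_left _ _ hfk1fQ)) (Ideal.mul_mem_left _ _ hfsfQ)
      have hgI : (a : O) * (f : O) ^ k + s ∈ I := by
        have heq : (a : O) * (f : O) ^ k + s
            = (((a : O) * (f : O) ^ k + s) - (d : O) * x) + (d : O) * x := by ring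
        rw [heq]
        exact Ideal.add_mem _ (le_of_lt hfQI hkey) (Ideal.mul_mem_left _ _ hxI)
      apply le_antisymm
      · intro y hyI
        obtain ⟨Ay, By, hy⟩ := redQ y (le_of_lt hIQ hyI)
        by_cases hdv : (f : ℤ) ∣ (Ay - By * (a : ℤ))
        · obtain ⟨t, ht⟩ := hdv
          rw [memJa]
          refine ⟨By, ?_⟩
          have ht' : (Ay : O) - (By : O) * ((a : ℤ) : O) = (f : O) * (t : O) := by
            exact_mod_cast congrArg (fun z : ℤ => (z : O)) ht
          push_cast at ht'
          have heq : y - (By : O) * ((a : O) * (f : O) ^ k + s)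
              = (y - ((Ay : O) * (f : O) ^ k + (By : O) * s)) + (t : O) * (f : O) ^ (k+1) := by
            push_cast
            linear_combination ((f : O) ^ k) * ht'
          rw [heq]
          exact Ideal.add_mem _ hy (Ideal.mul_mem_left _ _ hfk1fQ)
        · exfalso
          have hcop2 : IsCoprime (f : ℤ) (Ay - By * (a : ℤ)) := hfprimeZ.coprime_iff_not_dvd.mpr hdv
          obtain ⟨c₂, d₂, hcd₂⟩ := hcop2
          have hcd₂' : (c₂ : O) * (f : O) + (d₂ : O) * ((Ay : O) - (By : O) * ((a : ℕ) : O)) = 1 := by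
            have h0 : ((c₂ * (f : ℤ) + d₂ * (Ay - By * (a : ℤ)) : ℤ) : O) = ((1 : ℤ) : O) := by
              rw [hcd₂]
            push_cast at h0
            linear_combination h0
          have hzI : y - (By : O) * ((a : O) * (f : O) ^ k + s) ∈ I :=
            Ideal.sub_mem _ hyI (Ideal.mul_mem_left _ _ hgI)
          have hfkI : (f : O) ^ k ∈ I := by
            have heq : (f : O) ^ k
                = (d₂ : O) * (y - (By : O) * ((a : O) * (f : O) ^ k + s))
                  - (d₂ : O) * (y - ((Ay : O) * (f : O) ^ k + (By : O) * s))
                  + (c₂ : O) * (f : O) ^ (k+1) := by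
              push_cast
              linear_combination (-((f : O) ^ k)) * hcd₂'
            rw [heq]
            exact Ideal.add_mem _ (Ideal.sub_mem _ (Ideal.mul_mem_left _ _ hzI)
              (Ideal.mul_mem_left _ _ (le_of_lt hfQI hy)))
              (Ideal.mul_mem_left _ _ (le_of_lt hfQI hfk1fQ))
          have hsI : s ∈ I := by
            have heq : s = ((a : O) * (f : O) ^ k + s) - (a : O) * (f : O) ^ k := by ring
            rw [heq]
            exact Ideal.sub_mem _ hgI (Ideal.mul_mem_left _ _ hfkI)
          have hQI : Q ≤ I := by
            rw [hQdef, Ideal.span_le, Set.insert_subset_iff]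
            exact ⟨hfkI, by simpa using hsI⟩
          exact absurd (lt_of_lt_of_le hIQ hQI) (lt_irrefl I)
      · rw [hJa, Ideal.span_le, Set.insert_subset_iff]
        exact ⟨le_of_lt hfQI hfk1fQ, by simpa using hgI⟩
  have part6 : Nat.card {I : Ideal O // p * Q < I ∧ I < Q} = f + 1 := by
    have hset : {I : Ideal O | p * Q < I ∧ I < Q} = insert J (Ja '' (Set.Iio f)) := by
      ext I
      simp only [Set.mem_setOf_eq, Set.mem_insert_iff, Set.mem_image, Set.mem_Iio]
      constructor
      · rintro ⟨h1, h2⟩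
        rcases part5 I h1 h2 with h | ⟨a, haf, rfl⟩
        · left; exact h
        · right; exact ⟨a, haf, rfl⟩
      · rintro (rfl | ⟨a, haf, rfl⟩)
        · exact ⟨part3a, part3b⟩
        · exact part4 a haf
    have hJnotmem : J ∉ Ja '' (Set.Iio f) := by
      rintro ⟨a, haf, h⟩
      exact part1 a haf h.symm
    have hinj : Set.InjOn Ja (Set.Iio f) := by
      intro a ha b hb h
      by_contra hab
      exact part2 a ha b hb hab h
    have hcard : Nat.card {I : Ideal O // p * Q < I ∧ I < Q}
        = ({I : Ideal O | p * Q < I ∧ I < Q}).ncard := by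
      exact Nat.card_coe_set_eq {I : Ideal O | p * Q < I ∧ I < Q}
    rw [hcard, hset, Set.ncard_insert_of_notMem hJnotmem ((Set.finite_Iio f).image _),
        Set.ncard_image_of_injOn hinj, ← Finset.coe_range]
    rw [Set.ncard_coe_finset, Finset.card_range]
  exact ⟨part1, part2, ⟨part3a, part3b⟩, part4, part5, part6⟩
end

section
/- Let k ≥ 1 and α ∈ D \ O, and suppose Q = f^k·O + fα·O is an 𝔉-basic ideal of O with N(Q) = f^k and Q ≠ fO, and assume Q ≠ DQ. Then there is a unique ideal of O lying strictly between fQ and Q, namely J = f^k·O + f²α·O, and moreover J = f·(DQ) = {f·x : x ∈ DQ}. -/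
set_option synthInstance.maxHeartbeats 1000000
set_option maxHeartbeats 1000000

open NumberField

lemma int_not_dvd_exists_pow (f : ℕ) (hf : f.Prime) : ∀ N : ℤ, N ≠ 0 → ∃ (j : ℕ) (w : ℤ), ¬((f:ℤ) ∣ w) ∧ N = (f:ℤ)^j * w := by
  suffices h : ∀ (n : ℕ) (N : ℤ), N.natAbs = n → N ≠ 0 → ∃ (j : ℕ) (w : ℤ), ¬((f:ℤ) ∣ w) ∧ N = (f:ℤ)^j * w by
    intro N hN; exact h N.natAbs N rfl hN
  intro n
  induction n using Nat.strong_induction_on with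
  | _ n ih =>
    intro N hn hN
    by_cases h : (f:ℤ) ∣ N
    · obtain ⟨c, rfl⟩ := h
      have hc : c ≠ 0 := by rintro rfl; simp at hN
      have hlt : c.natAbs < n := by
        rw [← hn, Int.natAbs_mul]
        have h1 : 0 < c.natAbs := Int.natAbs_pos.2 hc
        calc c.natAbs = 1 * c.natAbs := (one_mul _).symm
        _ < (f:ℤ).natAbs * c.natAbs := by
            exact Nat.mul_lt_mul_of_lt_of_le (by simpa using hf.one_lt) le_rfl h1
      obtain ⟨j, w, hw, he⟩ := ih c.natAbs hlt c rfl hc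
      exact ⟨j+1, w, hw, by rw [he, pow_succ]; ring⟩
    · exact ⟨0, N, h, by simp⟩

lemma cop_helper (f : ℕ) (hf : f.Prime) (w : ℤ) (M : ℕ) (h : ¬ ((f:ℤ) ∣ w)) :
    ∃ u v : ℤ, u*w + v*(f:ℤ)^M = 1 := by
  have hp : Prime (f:ℤ) := Int.prime_iff_natAbs_prime.2 (by simpa using hf)
  obtain ⟨a, b, hab⟩ := (IsCoprime.pow_left ((Prime.coprime_iff_not_dvd hp).2 h))
  exact ⟨b, a, by linarith⟩

lemma mod_f_map (K : Type*) [Field K] [NumberField K] (hK : Module.finrank ℚ K = 2) (f : ℕ) :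
    ∃ φ : 𝓞 K →ₗ[ℤ] (ZMod f × ZMod f), Function.Surjective φ ∧
      ∀ x : 𝓞 K, φ x = 0 ↔ x ∈ Ideal.span {(f : 𝓞 K)} := by
  have hrank : Module.finrank ℤ (𝓞 K) = 2 := by
    rw [NumberField.RingOfIntegers.rank, hK]
  let B : Module.Basis (Fin (Module.finrank ℤ (𝓞 K))) ℤ (𝓞 K) := Module.finBasis ℤ (𝓞 K)
  let B2 : Module.Basis (Fin 2) ℤ (𝓞 K) := B.reindex (finCongr hrank)
  let e : 𝓞 K ≃ₗ[ℤ] (Fin 2 → ℤ) := B2.equivFun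
  have hcast : ∀ (c : ℤ) (x : 𝓞 K), (c : 𝓞 K) * x = c • x := by
    intro c x; rw [zsmul_eq_mul]
  let ψ : (Fin 2 → ℤ) →ₗ[ℤ] (ZMod f × ZMod f) :=
    { toFun := fun v => ((v 0 : ZMod f), (v 1 : ZMod f))
      map_add' := by intros; simp [Prod.ext_iff]
      map_smul' := by
        intro c v; simp only [Pi.smul_apply, smul_eq_mul, RingHom.id_apply, Prod.smul_def]
        simp [zsmul_eq_mul] }
  refine ⟨ψ.comp (e : 𝓞 K →ₗ[ℤ] (Fin 2 → ℤ)), ?_, ?_⟩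
  · rintro ⟨a, b⟩
    obtain ⟨a', rfl⟩ := ZMod.intCast_surjective a
    obtain ⟨b', rfl⟩ := ZMod.intCast_surjective b
    refine ⟨e.symm ![a', b'], ?_⟩
    simp [ψ, LinearMap.comp_apply]
  · intro x
    rw [Ideal.mem_span_singleton]
    constructor
    · intro h
      have h0 : ((e x 0 : ZMod f) = 0) ∧ ((e x 1 : ZMod f) = 0) := by
        simpa [ψ, LinearMap.comp_apply, Prod.ext_iff] using h
      obtain ⟨h1, h2⟩ := h0
      rw [ZMod.intCast_zmod_eq_zero_iff_dvd] at h1 h2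
      obtain ⟨c1, hc1⟩ := h1
      obtain ⟨c2, hc2⟩ := h2
      refine ⟨e.symm ![c1, c2], ?_⟩
      have : x = (f : ℤ) • e.symm ![c1, c2] := by
        apply e.injective
        rw [map_smul]
        funext i
        fin_cases i <;> simp [hc1, hc2]
      rw [this, ← hcast]; norm_cast
    · rintro ⟨c, rfl⟩
      have hx : (f : 𝓞 K) * c = (f : ℤ) • c := by rw [← hcast]; norm_cast
      rw [LinearMap.comp_apply, hx]
      have : (e ((f:ℤ) • c)) = (f:ℤ) • (e c) := map_smul _ _ _
      rw [LinearEquiv.coe_coe, this]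
      have h0 : ((f:ℤ) • (e c)) 0 = (f:ℤ) * (e c 0) := rfl
      have h1 : ((f:ℤ) • (e c)) 1 = (f:ℤ) * (e c 1) := rfl
      show ((((f:ℤ) • (e c)) 0 : ZMod f), (((f:ℤ) • (e c)) 1 : ZMod f)) = 0
      rw [h0, h1]
      simp [Prod.ext_iff]

lemma decomp_lemma (K : Type*) [Field K] [NumberField K] (hK : Module.finrank ℚ K = 2)
    (f : ℕ) (hf : f.Prime)
    (h1 : (1 : 𝓞 K) ∉ Ideal.span {(f : 𝓞 K)})
    (α : 𝓞 K) (hα : ∀ m : ℤ, α - (m : 𝓞 K) ∉ Ideal.span {(f : 𝓞 K)}) :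
    (∀ δ : 𝓞 K, ∃ (m n : ℤ) (γ : 𝓞 K), δ = (n : 𝓞 K) + (f : 𝓞 K) * γ + (m : 𝓞 K) * α) ∧
    (∀ d : ℤ, (d : 𝓞 K) ∈ Ideal.span {(f : 𝓞 K)} → (f : ℤ) ∣ d) := by
  haveI : Fact f.Prime := ⟨hf⟩
  obtain ⟨φ, hsurj, hker⟩ := mod_f_map K hK f
  have hφ1 : φ 1 ≠ 0 := fun h => h1 ((hker 1).1 h)
  constructor
  · intro δ
    have hli : LinearIndependent (ZMod f) ![φ α, φ 1] := by
      rw [linearIndependent_fin2]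
      refine ⟨by simpa using hφ1, ?_⟩
      intro a h
      obtain ⟨m, rfl⟩ := ZMod.intCast_surjective a
      apply hα m
      apply (hker _).1
      have : φ (α - (m : 𝓞 K)) = φ α - (m : ℤ) • φ 1 := by
        rw [map_sub]
        congr 1
        rw [← map_smul]
        congr 1
        rw [zsmul_eq_mul, mul_one]
      rw [this]
      have hsm : (m : ℤ) • φ 1 = ((m : ZMod f)) • φ 1 :=
        (Int.cast_smul_eq_zsmul (ZMod f) m (φ 1)).symm
      simp only [Matrix.cons_val_one, Matrix.head_cons, Matrix.cons_val_zero] at h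
      rw [hsm, h]
      simp
    have hspan : Submodule.span (ZMod f) (Set.range ![φ α, φ 1]) = ⊤ := by
      apply hli.span_eq_top_of_card_eq_finrank
      simp [Module.finrank_prod]
    have hrange : Set.range ![φ α, φ 1] = ({φ α, φ 1} : Set (ZMod f × ZMod f)) := by
      simp [Matrix.range_cons, Matrix.range_empty, Set.pair_comm]
    have hmem : φ δ ∈ Submodule.span (ZMod f) ({φ α, φ 1} : Set (ZMod f × ZMod f)) := by
      rw [← hrange, hspan]; trivial
    rw [Submodule.mem_span_pair] at hmem
    obtain ⟨a, b, hab⟩ := hmem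
    obtain ⟨m, rfl⟩ := ZMod.intCast_surjective a
    obtain ⟨n, rfl⟩ := ZMod.intCast_surjective b
    have hz : φ (δ - (n : 𝓞 K) - (m : 𝓞 K) * α) = 0 := by
      have e1 : φ ((m : 𝓞 K) * α) = (m : ℤ) • φ α := by
        rw [← map_smul]; congr 1; rw [zsmul_eq_mul]
      have e2 : φ ((n : 𝓞 K)) = (n : ℤ) • φ 1 := by
        rw [← map_smul]; congr 1; rw [zsmul_eq_mul, mul_one]
      rw [map_sub, map_sub, e1, e2, ← Int.cast_smul_eq_zsmul (ZMod f) m (φ α),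
        ← Int.cast_smul_eq_zsmul (ZMod f) n (φ 1)]
      rw [← hab]; abel
    have := (hker _).1 hz
    rw [Ideal.mem_span_singleton] at this
    obtain ⟨γ, hγ⟩ := this
    exact ⟨m, n, γ, by rw [← hγ]; ring⟩
  · intro d hd
    have : φ (d : 𝓞 K) = 0 := (hker _).2 hd
    have hφd : (d : ℤ) • φ 1 = 0 := by
      rw [← this, ← map_smul]
      congr 1
      rw [zsmul_eq_mul, mul_one]
    have : ((d : ZMod f)) • φ 1 = 0 := by
      rw [Int.cast_smul_eq_zsmul, hφd]
    have hd0 : (d : ZMod f) = 0 := by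
      by_contra hne
      exact hφ1 (by simpa [smul_eq_zero, hne] using this)
    exact_mod_cast (ZMod.intCast_zmod_eq_zero_iff_dvd d f).1 hd0

open Polynomial in
lemma minpoly_quad (K : Type*) [Field K] [NumberField K] (hK : Module.finrank ℚ K = 2)
    (α : 𝓞 K) (hint : ∀ n : ℤ, α ≠ (n : 𝓞 K)) :
    ∃ t N : ℤ, α ^ 2 = (t : 𝓞 K) * α - (N : 𝓞 K) := by
  have hα : IsIntegral ℤ α := NumberField.RingOfIntegers.isIntegral α
  set p : ℤ[X] := minpoly ℤ α with hp
  have hmonic : p.Monic := minpoly.monic hα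
  have hdeg2 : p.natDegree = 2 := by
    have hle : p.natDegree ≤ 2 := by
      have heq : minpoly ℚ (algebraMap (𝓞 K) K α) = p.map (algebraMap ℤ ℚ) :=
        minpoly.isIntegrallyClosed_eq_field_fractions ℚ K hα
      have h2 : (minpoly ℚ (algebraMap (𝓞 K) K α)).natDegree ≤ 2 := by
        rw [← hK]
        exact minpoly.natDegree_le _
      rwa [heq, hmonic.natDegree_map] at h2
    have hge : 2 ≤ p.natDegree := by
      rw [minpoly.two_le_natDegree_iff hα]
      rintro ⟨n, hn⟩
      exact hint n (by rw [← hn]; rfl)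
    omega
  have haev : (aeval α) p = 0 := minpoly.aeval ℤ α
  rw [Polynomial.aeval_eq_sum_range, hdeg2] at haev
  have hsum : p.coeff 0 • (1 : 𝓞 K) + p.coeff 1 • α + p.coeff 2 • α ^ 2 = 0 := by
    rw [← haev]
    rw [Finset.sum_range_succ, Finset.sum_range_succ, Finset.sum_range_one]
    simp
  have hc2 : p.coeff 2 = 1 := by
    have := hmonic.coeff_natDegree
    rwa [hdeg2] at this
  refine ⟨-(p.coeff 1), p.coeff 0, ?_⟩
  rw [hc2, one_smul] at hsum
  push_cast
  rw [zsmul_eq_mul, zsmul_eq_mul, mul_one] at hsum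
  linear_combination hsum

lemma unit_helper (K : Type*) [Field K] [NumberField K] (f : ℕ) (hf : f.Prime)
    (O : Subring (𝓞 K))
    (hO : ∀ x : 𝓞 K, x ∈ O ↔ ∃ n : ℤ, x - (n : 𝓞 K) ∈ Ideal.span {(f : 𝓞 K)})
    (b : O) (hb : (b : 𝓞 K) ∉ Ideal.span {(f : 𝓞 K)}) (M : ℕ) :
    ∃ b' : O, b * b' - 1 ∈ Ideal.span {(f : O) ^ M} := by
  obtain ⟨n, hn⟩ := (hO (b : 𝓞 K)).1 b.2
  rw [Ideal.mem_span_singleton] at hn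
  obtain ⟨δ, hδ⟩ := hn
  have hfn : ¬ ((f:ℤ) ∣ n) := by
    rintro ⟨c, hc⟩
    apply hb
    rw [Ideal.mem_span_singleton]
    refine ⟨(c : 𝓞 K) + δ, ?_⟩
    have : (b : 𝓞 K) = (n : 𝓞 K) + (f:𝓞 K) * δ := by rw [← hδ]; ring
    rw [this, hc]
    push_cast
    ring
  have hmem : (f:𝓞 K) * δ ∈ O := by
    rw [hO]; exact ⟨0, by simpa using Ideal.mem_span_singleton.2 ⟨δ, rfl⟩⟩
  set e : O := b - (n : O) with he
  have hecoe : (e : 𝓞 K) = (f : 𝓞 K) * δ := by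
    rw [he]
    push_cast
    rw [← hδ]
  have hδpow : (f:𝓞 K) * δ^(M+1) ∈ O := by
    rw [hO]; exact ⟨0, by simpa using Ideal.mem_span_singleton.2 ⟨δ^(M+1), rfl⟩⟩
  have hepow : e^(M+1) ∈ Ideal.span {(f : O)^M} := by
    rw [Ideal.mem_span_singleton]
    refine ⟨⟨(f:𝓞 K) * δ^(M+1), hδpow⟩, ?_⟩
    apply Subtype.coe_injective
    push_cast
    rw [hecoe]
    ring
  obtain ⟨u, v, huv⟩ := cop_helper f hf n M hfn
  set R := O ⧸ Ideal.span {(f : O)^M}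
  set mk := Ideal.Quotient.mk (Ideal.span {(f : O)^M})
  have hnunit : IsUnit (mk (n : O)) := by
    refine IsUnit.of_mul_eq_one (mk (u : O)) ?_
    rw [← map_mul, ← map_one mk, Ideal.Quotient.mk_eq_mk_iff_sub_mem]
    rw [Ideal.mem_span_singleton]
    refine ⟨((-v : ℤ) : O), ?_⟩
    have hz : (n : O) * (u : O) - 1 = ((n*u - 1 : ℤ) : O) := by push_cast; ring
    have hz2 : (n*u - 1 : ℤ) = (f:ℤ)^M * (-v) := by linarith
    rw [hz, hz2]
    push_cast
    ring
  have henil : IsNilpotent (mk e) :=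
    ⟨M+1, by rw [← map_pow, Ideal.Quotient.eq_zero_iff_mem]; exact hepow⟩
  have hbu : IsUnit (mk b) := by
    have : mk b = mk (n : O) + mk e := by
      rw [← map_add]
      congr 1
      rw [he]; ring
    rw [this]
    exact IsNilpotent.isUnit_add_left_of_commute henil hnunit (Commute.all _ _)
  obtain ⟨c, hc⟩ := hbu.exists_right_inv
  obtain ⟨b', rfl⟩ := Ideal.Quotient.mk_surjective c
  refine ⟨b', ?_⟩
  rw [← Ideal.Quotient.eq_zero_iff_mem, map_sub, map_mul, map_one]
  rw [hc]
  ring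
theorem stmt_7
    (K : Type*) [Field K] [NumberField K] (hK : Module.finrank ℚ K = 2)
    (f : ℕ) (hf : f.Prime)
    (O : Subring (𝓞 K))
    (hO : ∀ x : 𝓞 K, x ∈ O ↔ ∃ n : ℤ, x - (n : 𝓞 K) ∈ Ideal.span {(f : 𝓞 K)})
    (F : Ideal O) (hF : ∀ x : O, x ∈ F ↔ (x : 𝓞 K) ∈ Ideal.span {(f : 𝓞 K)})
    (k : ℕ) (hk : 1 ≤ k) (α : 𝓞 K) (hα : α ∉ O)
    (s : O) (hs : (s : 𝓞 K) = (f : 𝓞 K) * α)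
    (Q : Ideal O) (hQdef : Q = Ideal.span {(f : O) ^ k, s})
    (hQbasic : IsFBasic F Q)
    (hNQ : Nat.card (↥O ⧸ Q) = f ^ k)
    (hQne : Q ≠ Ideal.span {(f : O)})
    (hnotD : ¬ ∀ y ∈ Ideal.map O.subtype Q, ∃ x ∈ Q, (x : 𝓞 K) = y)
    (J : Ideal O) (hJ : J = Ideal.span {(f : O) ^ k, (f : O) * s}) :
    (Ideal.span {(f : O)} * Q < J ∧ J < Q) ∧
    (∀ I : Ideal O, Ideal.span {(f : O)} * Q < I → I < Q → I = J) ∧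
    (∀ x : O, x ∈ J ↔ ∃ y ∈ Ideal.map O.subtype Q, (x : 𝓞 K) = (f : 𝓞 K) * y) := by
  obtain ⟨k₁, rfl⟩ : ∃ k₁, k = k₁ + 1 := ⟨k - 1, by omega⟩
  -- basic facts
  have h1 : (1 : 𝓞 K) ∉ Ideal.span {(f : 𝓞 K)} := by
    intro h1
    have htop : Ideal.span {(f : 𝓞 K)} = ⊤ := (Ideal.eq_top_iff_one _).2 h1
    have hFtop : F = ⊤ := by
      rw [Ideal.eq_top_iff_one, hF, htop]; trivial
    have hrad := hQbasic.1.2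
    rw [hFtop, Ideal.radical_eq_top] at hrad
    exact hQbasic.1.1.1 hrad
  have hfO : ∀ γ : 𝓞 K, (f : 𝓞 K) * γ ∈ O := fun γ => by
    rw [hO]; exact ⟨0, by simpa using Ideal.mem_span_singleton.2 ⟨γ, rfl⟩⟩
  have hαm : ∀ m : ℤ, α - (m : 𝓞 K) ∉ Ideal.span {(f : 𝓞 K)} :=
    fun m hm => hα ((hO α).2 ⟨m, hm⟩)
  obtain ⟨hdec, hdvdZ⟩ := decomp_lemma K hK f hf h1 α hαm
  have hint : ∀ n : ℤ, α ≠ (n : 𝓞 K) := by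
    intro n h
    exact hαm n (by rw [h, sub_self]; exact Ideal.zero_mem _)
  obtain ⟨t, N, htN⟩ := minpoly_quad K hK α hint
  have hf0K : (f : 𝓞 K) ≠ 0 := Nat.cast_ne_zero.2 hf.ne_zero
  have hN0 : N ≠ 0 := by
    intro h
    rw [h] at htN; push_cast at htN
    have hz : α * (α - (t : 𝓞 K)) = 0 := by linear_combination htN
    rcases mul_eq_zero.1 hz with h0 | h0
    · exact hint 0 (by rw [h0]; norm_num)
    · exact hint t (by linear_combination h0)
  have hfkQ : (f : O) ^ (k₁ + 1) ∈ Q := by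
    rw [hQdef]; exact Ideal.subset_span (by simp)
  have hsQ : s ∈ Q := by
    rw [hQdef]; exact Ideal.subset_span (by simp)
  have hTspan : Ideal.map O.subtype Q
      = Ideal.span {((f : 𝓞 K)) ^ (k₁ + 1), (s : 𝓞 K)} := by
    rw [hQdef, Ideal.map_span]
    congr 1
    rw [Set.image_pair]
    have h₁ : O.subtype ((f : O) ^ (k₁ + 1)) = ((f : 𝓞 K)) ^ (k₁ + 1) := by push_cast; rfl
    have h₂ : O.subtype s = (s : 𝓞 K) := rfl
    rw [h₁, h₂]
  -- Claim A : f^k₁ does not divide N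
  have hA : ¬ ((f : ℤ) ^ k₁ ∣ N) := by
    rintro ⟨e, he⟩
    apply hnotD
    intro y hy
    rw [hTspan, Ideal.mem_span_pair] at hy
    obtain ⟨δ', ε', hy'⟩ := hy
    obtain ⟨m₁, n₁, γ₁, hδ'⟩ := hdec δ'
    obtain ⟨m₂, n₂, γ₂, hε'⟩ := hdec ε'
    have hecast : (N : 𝓞 K) = (f : 𝓞 K) ^ k₁ * (e : 𝓞 K) := by exact_mod_cast he
    refine ⟨(n₁ : O) * (f : O) ^ (k₁ + 1) + (⟨(f : 𝓞 K) * γ₁, hfO γ₁⟩ : O) * (f : O) ^ (k₁ + 1)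
        + (m₁ : O) * (f : O) ^ k₁ * s + (n₂ : O) * s + (⟨(f : 𝓞 K) * γ₂, hfO γ₂⟩ : O) * s
        + (m₂ : O) * ((t : O) * s - (e : O) * (f : O) ^ (k₁ + 1)), ?_, ?_⟩
    · refine add_mem (add_mem (add_mem (add_mem (add_mem ?_ ?_) ?_) ?_) ?_) ?_
      · exact Q.mul_mem_left _ hfkQ
      · exact Q.mul_mem_left _ hfkQ
      · exact Q.mul_mem_left _ hsQ
      · exact Q.mul_mem_left _ hsQ
      · exact Q.mul_mem_left _ hsQ
      · exact Q.mul_mem_left _ (Ideal.sub_mem _ (Q.mul_mem_left _ hsQ) (Q.mul_mem_left _ hfkQ))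
    · rw [← hy', hδ', hε']
      push_cast
      rw [hs]
      linear_combination (-(m₂ : 𝓞 K) * (f : 𝓞 K)) * htN + ((m₂ : 𝓞 K) * (f : 𝓞 K)) * hecast
  obtain ⟨k₂, rfl⟩ : ∃ k₂, k₁ = k₂ + 1 := by
    rcases k₁ with _ | k₂
    · exact absurd (by simpa using (one_dvd N)) hA
    · exact ⟨k₂, rfl⟩
  obtain ⟨j, w, hw, hjw⟩ := int_not_dvd_exists_pow f hf N hN0
  have hjle : j ≤ k₂ := by
    by_contra hj
    apply hA
    rw [hjw]
    exact Dvd.dvd.mul_right (pow_dvd_pow _ (by omega)) _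
  -- Claim B (uses hNQ): j = k₂
  have hjeq : j = k₂ := by
    by_contra hne
    have hjlt : j < k₂ := by omega
    have hNp2 : (N : O) * (f : O) ^ 2 ∈ Q := by
      have hid : (N : O) * (f : O) ^ 2 = (t : O) * (f : O) * s - s * s := by
        apply Subtype.coe_injective
        push_cast
        rw [hs]
        linear_combination ((f : 𝓞 K) ^ 2) * htN
      rw [hid]
      exact Ideal.sub_mem _ (Q.mul_mem_left _ hsQ) (Q.mul_mem_left _ hsQ)
    obtain ⟨u, v, huv⟩ := cop_helper f hf w (k₂ - j) hw
    have hfm : (f : O) ^ (j + 2) ∈ Q := by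
      have hidZ : (f : ℤ) ^ (j + 2) = u * (N * (f : ℤ) ^ 2) + v * (f : ℤ) ^ (k₂ + 2) := by
        rw [hjw]
        have hkk : k₂ + 2 = (j + 2) + (k₂ - j) := by omega
        rw [hkk, pow_add]
        linear_combination (-(f : ℤ) ^ (j + 2)) * huv
      have hidO : (f : O) ^ (j + 2)
          = (u : O) * ((N : O) * (f : O) ^ 2) + (v : O) * (f : O) ^ (k₂ + 2) := by
        have := congrArg (fun z : ℤ => (z : O)) hidZ
        push_cast at this
        exact this
      rw [hidO]
      exact add_mem (Q.mul_mem_left _ hNp2) (Q.mul_mem_left _ hfkQ)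
    -- everything is congruent to an integer mod Q
    have hP : ∀ i : ℕ, ∀ x : O, ∃ (n : ℤ) (γ : 𝓞 K) (q : O), q ∈ Q ∧
        (x : 𝓞 K) = (n : 𝓞 K) + (f : 𝓞 K) ^ (i + 1) * γ + (q : 𝓞 K) := by
      intro i
      induction i with
      | zero =>
        intro x
        obtain ⟨n, hn⟩ := (hO (x : 𝓞 K)).1 x.2
        rw [Ideal.mem_span_singleton] at hn
        obtain ⟨γ, hγ⟩ := hn
        exact ⟨n, γ, 0, Q.zero_mem, by rw [pow_one]; push_cast; linear_combination hγ⟩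
      | succ i ih =>
        intro x
        obtain ⟨n, γ, q, hq, hx⟩ := ih x
        obtain ⟨m', n', γ', hγ⟩ := hdec γ
        refine ⟨n + (f : ℤ) ^ (i + 1) * n', γ', q + (m' : O) * (f : O) ^ i * s,
          add_mem hq (Q.mul_mem_left _ hsQ), ?_⟩
        rw [hx, hγ]
        push_cast
        rw [hs]
        ring
    have hPQ : ∀ x : O, ∃ n : ℤ, x - (n : O) ∈ Q := by
      intro x
      obtain ⟨n, γ, q, hq, hx⟩ := hP (j + 2) x
      have hmem : (f : O) ^ (j + 2) * (⟨(f : 𝓞 K) * γ, hfO γ⟩ : O) + q ∈ Q :=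
        add_mem (Ideal.mul_mem_right _ _ hfm) hq
      have heq : x - (n : O) = (f : O) ^ (j + 2) * (⟨(f : 𝓞 K) * γ, hfO γ⟩ : O) + q := by
        apply Subtype.coe_injective
        push_cast
        rw [hx]
        ring
      exact ⟨n, heq ▸ hmem⟩
    -- cardinality contradiction
    haveI : NeZero (f ^ (j + 2)) := ⟨pow_ne_zero _ hf.ne_zero⟩
    have hsurj : Function.Surjective
        (fun c : ZMod (f ^ (j + 2)) => Ideal.Quotient.mk Q (((ZMod.cast c : ℤ) : O))) := by
      intro xq
      obtain ⟨x, rfl⟩ := Ideal.Quotient.mk_surjective xq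
      obtain ⟨n, hn⟩ := hPQ x
      refine ⟨(n : ZMod (f ^ (j + 2))), ?_⟩
      rw [Ideal.Quotient.eq]
      have hdv : ((f : ℤ)) ^ (j + 2) ∣ ((ZMod.cast ((n : ZMod (f ^ (j + 2)))) : ℤ) - n) := by
        have h0 : (((ZMod.cast ((n : ZMod (f ^ (j + 2)))) : ℤ) - n : ℤ) : ZMod (f ^ (j + 2))) = 0 := by
          rw [Int.cast_sub, ZMod.intCast_rightInverse ((n : ZMod (f ^ (j + 2))))]
          exact sub_self _
        have := (ZMod.intCast_zmod_eq_zero_iff_dvd _ _).1 h0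
        exact_mod_cast this
      obtain ⟨c', hc'⟩ := hdv
      have heq2 : ((ZMod.cast ((n : ZMod (f ^ (j + 2)))) : ℤ) : O) - x
          = (f : O) ^ (j + 2) * (c' : O) - (x - (n : O)) := by
        apply Subtype.coe_injective
        push_cast
        have := congrArg (fun z : ℤ => (z : 𝓞 K)) hc'
        push_cast at this
        linear_combination this
      rw [heq2]
      exact Ideal.sub_mem _ (Ideal.mul_mem_right _ _ hfm) hn
    have hle : f ^ (k₂ + 1 + 1) ≤ f ^ (j + 2) := by
      calc f ^ (k₂ + 1 + 1) = Nat.card (↥O ⧸ Q) := hNQ.symm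
      _ ≤ Nat.card (ZMod (f ^ (j + 2))) := Nat.card_le_card_of_surjective _ hsurj
      _ = f ^ (j + 2) := Nat.card_zmod _
    have hlt : f ^ (j + 2) < f ^ (k₂ + 1 + 1) := Nat.pow_lt_pow_right hf.one_lt (by omega)
    omega
  rw [hjeq] at hjw
  -- now N = f^j * w with f ∤ w, k = j + 2
  clear hjle hA
  have hNcast : (N : 𝓞 K) = (f : 𝓞 K) ^ k₂ * (w : 𝓞 K) := by exact_mod_cast hjw
  obtain ⟨u₂, v₂, huv₂⟩ := cop_helper f hf w 1 hw
  rw [pow_one] at huv₂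
  have h1K : (u₂ : 𝓞 K) * (w : 𝓞 K) + (v₂ : 𝓞 K) * (f : 𝓞 K) = 1 := by exact_mod_cast huv₂
  have h1O : (u₂ : O) * (w : O) + (v₂ : O) * (f : O) = 1 := by
    apply Subtype.coe_injective; push_cast; exact_mod_cast huv₂
  -- key identity in O
  have hssO : s * s = (t : O) * (f : O) * s - (w : O) * (f : O) ^ (k₂ + 1 + 1) := by
    apply Subtype.coe_injective
    push_cast
    rw [hs]
    linear_combination ((f : 𝓞 K) ^ 2) * htN - ((f : 𝓞 K) ^ 2) * hNcast
  -- basic membership facts for J and span{f}*Q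
  have hfkJ : (f : O) ^ (k₂ + 1 + 1) ∈ J := by
    rw [hJ]; exact Ideal.subset_span (by simp)
  have hpsJ : (f : O) * s ∈ J := by
    rw [hJ]; exact Ideal.subset_span (by simp)
  have hpsQmul : (f : O) * s ∈ Ideal.span {(f : O)} * Q :=
    Ideal.mem_span_singleton_mul.2 ⟨s, hsQ, rfl⟩
  have hsp3le : Ideal.span {(f : O) ^ (k₂ + 3)} ≤ Ideal.span {(f : O)} * Q := by
    rw [Ideal.span_le, Set.singleton_subset_iff]
    show (f : O) ^ (k₂ + 3) ∈ Ideal.span {(f : O)} * Q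
    have h3 : (f : O) ^ (k₂ + 3) = (f : O) * (f : O) ^ (k₂ + 1 + 1) := by ring
    rw [h3]
    exact Ideal.mem_span_singleton_mul.2 ⟨(f : O) ^ (k₂ + 1 + 1), hfkQ, rfl⟩
  have hpQ_le_J : Ideal.span {(f : O)} * Q ≤ J := by
    intro x hx
    obtain ⟨y, hy, hxy⟩ := Ideal.mem_span_singleton_mul.1 hx
    rw [hQdef, Ideal.mem_span_pair] at hy
    obtain ⟨a, b, hab⟩ := hy
    rw [hJ, Ideal.mem_span_pair]
    exact ⟨a * (f : O), b, by rw [← hxy, ← hab]; ring⟩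
  -- the key quadratic identity in 𝓞 K
  have E5 : α * ((t : 𝓞 K) * (f : 𝓞 K) - (f : 𝓞 K) * α)
      = (f : 𝓞 K) ^ (k₂ + 1) * (w : 𝓞 K) := by
    linear_combination (-(f : 𝓞 K)) * htN + (f : 𝓞 K) * hNcast
  -- f^k ∉ span{f} * Q
  have hfk_npQ : (f : O) ^ (k₂ + 1 + 1) ∉ Ideal.span {(f : O)} * Q := by
    intro hx
    obtain ⟨y, hy, hxy⟩ := Ideal.mem_span_singleton_mul.1 hx
    rw [hQdef, Ideal.mem_span_pair] at hy
    obtain ⟨a, b, hab⟩ := hy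
    have h1' := congrArg (fun z : O => (z : 𝓞 K)) hxy
    have h2' := congrArg (fun z : O => (z : 𝓞 K)) hab
    push_cast at h1' h2'
    rw [hs] at h2'
    have hco : (f : 𝓞 K) * ((a : 𝓞 K) * (f : 𝓞 K) ^ (k₂ + 1 + 1) + (b : 𝓞 K) * ((f : 𝓞 K) * α))
        = (f : 𝓞 K) ^ (k₂ + 1 + 1) := by
      rw [h2']; exact h1'
    have E1 : (f : 𝓞 K) ^ (k₂ + 1)
        = (a : 𝓞 K) * (f : 𝓞 K) ^ (k₂ + 1 + 1) + (b : 𝓞 K) * ((f : 𝓞 K) * α) := by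
      apply mul_left_cancel₀ hf0K
      rw [hco]; ring
    have h9 : (f : 𝓞 K) ^ (k₂ + 1) * ((t : 𝓞 K) * (f : 𝓞 K) - (f : 𝓞 K) * α)
        = (a : 𝓞 K) * (f : 𝓞 K) ^ (k₂ + 1 + 1) * ((t : 𝓞 K) * (f : 𝓞 K) - (f : 𝓞 K) * α)
          + (b : 𝓞 K) * (f : 𝓞 K) * ((f : 𝓞 K) ^ (k₂ + 1) * (w : 𝓞 K)) := by
      rw [← E5]
      linear_combination ((t : 𝓞 K) * (f : 𝓞 K) - (f : 𝓞 K) * α) * E1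
    have E8 : (f : 𝓞 K) ^ (k₂ + 1 + 1) * α
        = (f : 𝓞 K) ^ (k₂ + 1 + 1) * ((t : 𝓞 K)
            - (a : 𝓞 K) * ((t : 𝓞 K) * (f : 𝓞 K) - (f : 𝓞 K) * α) - (b : 𝓞 K) * (w : 𝓞 K)) := by
      linear_combination -h9
    set z : O := (t : O) - a * ((t : O) * (f : O) - s) - b * (w : O) with hz
    have hzc : (z : 𝓞 K) = (t : 𝓞 K)
        - (a : 𝓞 K) * ((t : 𝓞 K) * (f : 𝓞 K) - (f : 𝓞 K) * α) - (b : 𝓞 K) * (w : 𝓞 K) := by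
      rw [hz]; push_cast; rw [hs]
    have hαz : α = (z : 𝓞 K) := by
      have h11 := mul_left_cancel₀ (pow_ne_zero (k₂ + 1 + 1) hf0K) E8
      rw [h11, hzc]
    exact hα (by rw [hαz]; exact z.2)
  -- s ∉ J
  have hs_nJ : s ∉ J := by
    intro hsJ
    rw [hJ, Ideal.mem_span_pair] at hsJ
    obtain ⟨a, b, hab⟩ := hsJ
    have hco := congrArg (fun z : O => (z : 𝓞 K)) hab
    push_cast at hco
    rw [hs] at hco
    have E1 : α = (a : 𝓞 K) * (f : 𝓞 K) ^ (k₂ + 1) + (b : 𝓞 K) * ((f : 𝓞 K) * α) := by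
      apply mul_left_cancel₀ hf0K
      linear_combination -hco
    have E7 : (w : 𝓞 K) = (a : 𝓞 K) * ((t : 𝓞 K) * (f : 𝓞 K) - (f : 𝓞 K) * α)
        + (b : 𝓞 K) * (f : 𝓞 K) * (w : 𝓞 K) := by
      apply mul_left_cancel₀ (pow_ne_zero (k₂ + 1) hf0K)
      calc (f : 𝓞 K) ^ (k₂ + 1) * (w : 𝓞 K)
          = α * ((t : 𝓞 K) * (f : 𝓞 K) - (f : 𝓞 K) * α) := E5.symm
        _ = ((a : 𝓞 K) * (f : 𝓞 K) ^ (k₂ + 1) + (b : 𝓞 K) * ((f : 𝓞 K) * α))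
              * ((t : 𝓞 K) * (f : 𝓞 K) - (f : 𝓞 K) * α) := by rw [← E1]
        _ = (a : 𝓞 K) * (f : 𝓞 K) ^ (k₂ + 1) * ((t : 𝓞 K) * (f : 𝓞 K) - (f : 𝓞 K) * α)
              + (b : 𝓞 K) * (f : 𝓞 K) * (α * ((t : 𝓞 K) * (f : 𝓞 K) - (f : 𝓞 K) * α)) := by ring
        _ = (f : 𝓞 K) ^ (k₂ + 1) * ((a : 𝓞 K) * ((t : 𝓞 K) * (f : 𝓞 K) - (f : 𝓞 K) * α)
              + (b : 𝓞 K) * (f : 𝓞 K) * (w : 𝓞 K)) := by rw [E5]; ring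
    have hwF : ((w : ℤ) : 𝓞 K) ∈ Ideal.span {(f : 𝓞 K)} := by
      rw [Ideal.mem_span_singleton]
      refine ⟨(a : 𝓞 K) * ((t : 𝓞 K) - α) + (b : 𝓞 K) * (w : 𝓞 K), ?_⟩
      linear_combination E7
    exact hw (hdvdZ w hwF)
  -- b*s decomposition for b ∈ F
  have hbsJ : ∀ b : O, (b : 𝓞 K) ∈ Ideal.span {(f : 𝓞 K)} → ∃ (c : O) (mz : ℤ),
      b * s = (f : O) * (s * c) - (mz : O) * (f : O) ^ (k₂ + 1 + 1) := by
    intro b hb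
    obtain ⟨δ, hδ⟩ := Ideal.mem_span_singleton.1 hb
    obtain ⟨m', n', γ, hγ⟩ := hdec δ
    refine ⟨(n' : O) + ⟨(f : 𝓞 K) * γ, hfO γ⟩ + (m' : O) * (t : O), m' * w, ?_⟩
    apply Subtype.coe_injective
    push_cast
    rw [hs, hδ, hγ]
    linear_combination ((m' : 𝓞 K) * (f : 𝓞 K) ^ 2) * htN
      - ((m' : 𝓞 K) * (f : 𝓞 K) ^ 2) * hNcast
  -- c * f^k ∈ span{f}*Q for c ∈ F
  have hcqpQ : ∀ c : O, (c : 𝓞 K) ∈ Ideal.span {(f : 𝓞 K)} →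
      c * (f : O) ^ (k₂ + 1 + 1) ∈ Ideal.span {(f : O)} * Q := by
    intro c hc
    obtain ⟨δ, hδ⟩ := Ideal.mem_span_singleton.1 hc
    obtain ⟨m', n', γ, hγ⟩ := hdec δ
    refine Ideal.mem_span_singleton_mul.2
      ⟨(n' : O) * (f : O) ^ (k₂ + 1 + 1) + (⟨(f : 𝓞 K) * γ, hfO γ⟩ : O) * (f : O) ^ (k₂ + 1 + 1)
        + (m' : O) * (f : O) ^ (k₂ + 1) * s, ?_, ?_⟩
    · exact add_mem (add_mem (Q.mul_mem_left _ hfkQ) (Q.mul_mem_left _ hfkQ)) (Q.mul_mem_left _ hsQ)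
    · apply Subtype.coe_injective
      push_cast
      rw [hs, hδ, hγ]
      ring
  -- main engine: if some a f^k + b s ∈ I with b ∉ F then Q ≤ I
  have hQleI : ∀ (I : Ideal O), Ideal.span {(f : O)} * Q ≤ I → ∀ a b : O,
      a * (f : O) ^ (k₂ + 1 + 1) + b * s ∈ I → (b : 𝓞 K) ∉ Ideal.span {(f : 𝓞 K)} → Q ≤ I := by
    intro I hpQI a b hxI hbF
    obtain ⟨b', hbb'⟩ := unit_helper K f hf O hO b hbF (k₂ + 3)
    have hbb'I : b * b' - 1 ∈ I := hpQI (hsp3le hbb')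
    have hsz : s + (a * b') * (f : O) ^ (k₂ + 1 + 1) ∈ I := by
      have h2 := I.sub_mem (I.mul_mem_left b' hxI) (I.mul_mem_right s hbb'I)
      have h3 : s + (a * b') * (f : O) ^ (k₂ + 1 + 1)
          = b' * (a * (f : O) ^ (k₂ + 1 + 1) + b * s) - (b * b' - 1) * s := by ring
      rw [h3]; exact h2
    have hpsI : (f : O) * s ∈ I := hpQI hpsQmul
    have hfksI : (f : O) ^ (k₂ + 1 + 1) * s ∈ I :=
      hpQI (Ideal.mem_span_singleton_mul.2 ⟨(f : O) ^ (k₂ + 1) * s, Q.mul_mem_left _ hsQ, by ring⟩)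
    have hwfkI : (w : O) * (f : O) ^ (k₂ + 1 + 1) ∈ I := by
      have h4 : (w : O) * (f : O) ^ (k₂ + 1 + 1)
          = (t : O) * ((f : O) * s) - (s + (a * b') * (f : O) ^ (k₂ + 1 + 1)) * s
            + (a * b') * ((f : O) ^ (k₂ + 1 + 1) * s) := by
        linear_combination hssO
      rw [h4]
      exact add_mem (I.sub_mem (I.mul_mem_left _ hpsI) (I.mul_mem_right s hsz))
        (I.mul_mem_left _ hfksI)
    have hfk3I : (f : O) * (f : O) ^ (k₂ + 1 + 1) ∈ I :=
      hpQI (Ideal.mem_span_singleton_mul.2 ⟨(f : O) ^ (k₂ + 1 + 1), hfkQ, rfl⟩)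
    have hfkI : (f : O) ^ (k₂ + 1 + 1) ∈ I := by
      have h5 : (f : O) ^ (k₂ + 1 + 1) = (u₂ : O) * ((w : O) * (f : O) ^ (k₂ + 1 + 1))
          + (v₂ : O) * ((f : O) * (f : O) ^ (k₂ + 1 + 1)) := by
        linear_combination (-(f : O) ^ (k₂ + 1 + 1)) * h1O
      rw [h5]
      exact add_mem (I.mul_mem_left _ hwfkI) (I.mul_mem_left _ hfk3I)
    have hsI : s ∈ I := by
      have h6 : s = (s + (a * b') * (f : O) ^ (k₂ + 1 + 1)) - (a * b') * (f : O) ^ (k₂ + 1 + 1) := by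
        ring
      rw [h6]; exact I.sub_mem hsz (I.mul_mem_left _ hfkI)
    rw [hQdef, Ideal.span_le, Set.insert_subset_iff, Set.singleton_subset_iff]
    exact ⟨hfkI, hsI⟩
  -- f^(k₂+1) ∈ the D-ideal generated by Q
  have hdw : (w : 𝓞 K) * (f : 𝓞 K) ^ (k₂ + 1)
      ∈ Ideal.span {((f : 𝓞 K)) ^ (k₂ + 1 + 1), (s : 𝓞 K)} := by
    rw [Ideal.mem_span_pair]
    refine ⟨0, (t : 𝓞 K) - α, ?_⟩
    rw [hs]
    linear_combination (-(f : 𝓞 K)) * htN + (f : 𝓞 K) * hNcast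
  have hfk1T : (f : 𝓞 K) ^ (k₂ + 1) ∈ Ideal.span {((f : 𝓞 K)) ^ (k₂ + 1 + 1), (s : 𝓞 K)} := by
    have h10 : (f : 𝓞 K) ^ (k₂ + 1) = (u₂ : 𝓞 K) * ((w : 𝓞 K) * (f : 𝓞 K) ^ (k₂ + 1))
        + (v₂ : 𝓞 K) * (f : 𝓞 K) ^ (k₂ + 1 + 1) := by
      linear_combination (-(f : 𝓞 K) ^ (k₂ + 1)) * h1K
    rw [h10]
    exact add_mem (Ideal.mul_mem_left _ _ hdw)
      (Ideal.mul_mem_left _ _ (Ideal.subset_span (by simp)))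
  -- final goals
  refine ⟨⟨?_, ?_⟩, ?_, ?_⟩
  · -- span{f} * Q < J
    exact lt_of_le_of_ne hpQ_le_J (fun h => hfk_npQ (by rw [h]; exact hfkJ))
  · -- J < Q
    refine lt_of_le_of_ne ?_ (fun h => hs_nJ (by rw [h]; exact hsQ))
    rw [hJ, Ideal.span_le, Set.insert_subset_iff, Set.singleton_subset_iff]
    exact ⟨hfkQ, Q.mul_mem_left _ hsQ⟩
  · -- uniqueness
    intro I hpQI hIQ
    have hIle : I ≤ J := by
      intro x hxI
      have hxQ : x ∈ Q := hIQ.le hxI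
      rw [hQdef, Ideal.mem_span_pair] at hxQ
      obtain ⟨a, b, hab⟩ := hxQ
      by_cases hbF : (b : 𝓞 K) ∈ Ideal.span {(f : 𝓞 K)}
      · obtain ⟨c, mz, hbseq⟩ := hbsJ b hbF
        have hxj : x = a * (f : O) ^ (k₂ + 1 + 1) + ((f : O) * (s * c)
            - (mz : O) * (f : O) ^ (k₂ + 1 + 1)) := by rw [← hab, hbseq]
        rw [hxj]
        have m1 : (f : O) * (s * c) ∈ J := by
          have h12 : (f : O) * (s * c) = c * ((f : O) * s) := by ring
          rw [h12]; exact J.mul_mem_left _ hpsJ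
        exact add_mem (J.mul_mem_left _ hfkJ) (J.sub_mem m1 (J.mul_mem_left _ hfkJ))
      · exact absurd (hQleI I hpQI.le a b (hab ▸ hxI) hbF) hIQ.not_ge
    have hJle : J ≤ I := by
      obtain ⟨x, hxI, hxnpQ⟩ := SetLike.exists_of_lt hpQI
      have hxQ : x ∈ Q := hIQ.le hxI
      rw [hQdef, Ideal.mem_span_pair] at hxQ
      obtain ⟨a, b, hab⟩ := hxQ
      have hbF : (b : 𝓞 K) ∈ Ideal.span {(f : 𝓞 K)} := by
        by_contra hbF
        exact absurd (hQleI I hpQI.le a b (hab ▸ hxI) hbF) hIQ.not_ge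
      obtain ⟨c, mz, hbseq⟩ := hbsJ b hbF
      have hscQ : s * c ∈ Q := Ideal.mul_mem_right c _ hsQ
      have hfscpQ : (f : O) * (s * c) ∈ Ideal.span {(f : O)} * Q :=
        Ideal.mem_span_singleton_mul.2 ⟨s * c, hscQ, rfl⟩
      have hc0fk : (a - (mz : O)) * (f : O) ^ (k₂ + 1 + 1) ∈ I := by
        have h7 : (a - (mz : O)) * (f : O) ^ (k₂ + 1 + 1) = x - (f : O) * (s * c) := by
          rw [← hab, hbseq]; ring
        rw [h7]
        exact I.sub_mem hxI (hpQI.le hfscpQ)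
      have hc0F : ((a - (mz : O) : O) : 𝓞 K) ∉ Ideal.span {(f : 𝓞 K)} := by
        intro hmem
        apply hxnpQ
        have h8 : x = (a - (mz : O)) * (f : O) ^ (k₂ + 1 + 1) + (f : O) * (s * c) := by
          rw [← hab, hbseq]; ring
        rw [h8]
        exact add_mem (hcqpQ _ hmem) hfscpQ
      obtain ⟨c', hcc'⟩ := unit_helper K f hf O hO (a - (mz : O)) hc0F (k₂ + 3)
      have hcc'I : (a - (mz : O)) * c' - 1 ∈ I := hpQI.le (hsp3le hcc')
      have hfkI : (f : O) ^ (k₂ + 1 + 1) ∈ I := by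
        have h9 : (f : O) ^ (k₂ + 1 + 1) = c' * ((a - (mz : O)) * (f : O) ^ (k₂ + 1 + 1))
            - ((a - (mz : O)) * c' - 1) * (f : O) ^ (k₂ + 1 + 1) := by ring
        rw [h9]
        exact I.sub_mem (I.mul_mem_left _ hc0fk) (I.mul_mem_right _ hcc'I)
      rw [hJ, Ideal.span_le, Set.insert_subset_iff, Set.singleton_subset_iff]
      exact ⟨hfkI, hpQI.le hpsQmul⟩
    exact le_antisymm hIle hJle
  · -- J = f * (DQ)
    intro x
    constructor
    · intro hxJ
      rw [hJ, Ideal.mem_span_pair] at hxJ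
      obtain ⟨a, b, hab⟩ := hxJ
      refine ⟨(a : 𝓞 K) * (f : 𝓞 K) ^ (k₂ + 1) + (b : 𝓞 K) * (s : 𝓞 K), ?_, ?_⟩
      · rw [hTspan]
        exact add_mem (Ideal.mul_mem_left _ _ hfk1T)
          (Ideal.mul_mem_left _ _ (Ideal.subset_span (by simp)))
      · have hcoe := congrArg (fun z : O => (z : 𝓞 K)) hab
        push_cast at hcoe
        linear_combination -hcoe
    · rintro ⟨y, hyT, hxy⟩
      rw [hTspan, Ideal.mem_span_pair] at hyT
      obtain ⟨δ', ε', hy'⟩ := hyT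
      obtain ⟨m₁, n₁, γ₁, hδ'⟩ := hdec δ'
      obtain ⟨m₂, n₂, γ₂, hε'⟩ := hdec ε'
      have hjxJ : (n₁ : O) * ((f : O) * (f : O) ^ (k₂ + 1 + 1))
          + (⟨(f : 𝓞 K) * γ₁, hfO γ₁⟩ : O) * ((f : O) * (f : O) ^ (k₂ + 1 + 1))
          + (m₁ : O) * ((f : O) ^ (k₂ + 1) * ((f : O) * s))
          + (n₂ : O) * ((f : O) * s)
          + (⟨(f : 𝓞 K) * γ₂, hfO γ₂⟩ : O) * ((f : O) * s)
          + ((m₂ : O) * (t : O) * ((f : O) * s) - (m₂ : O) * (w : O) * (f : O) ^ (k₂ + 1 + 1))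
          ∈ J := by
        refine add_mem (add_mem (add_mem (add_mem (add_mem ?_ ?_) ?_) ?_) ?_) ?_
        · exact J.mul_mem_left _ (J.mul_mem_left _ hfkJ)
        · exact J.mul_mem_left _ (J.mul_mem_left _ hfkJ)
        · exact J.mul_mem_left _ (J.mul_mem_left _ hpsJ)
        · exact J.mul_mem_left _ hpsJ
        · exact J.mul_mem_left _ hpsJ
        · exact J.sub_mem (J.mul_mem_left _ hpsJ) (J.mul_mem_left _ hfkJ)
      have hxeq : x = (n₁ : O) * ((f : O) * (f : O) ^ (k₂ + 1 + 1))
          + (⟨(f : 𝓞 K) * γ₁, hfO γ₁⟩ : O) * ((f : O) * (f : O) ^ (k₂ + 1 + 1))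
          + (m₁ : O) * ((f : O) ^ (k₂ + 1) * ((f : O) * s))
          + (n₂ : O) * ((f : O) * s)
          + (⟨(f : 𝓞 K) * γ₂, hfO γ₂⟩ : O) * ((f : O) * s)
          + ((m₂ : O) * (t : O) * ((f : O) * s) - (m₂ : O) * (w : O) * (f : O) ^ (k₂ + 1 + 1)) := by
        apply Subtype.coe_injective
        push_cast
        rw [hxy, ← hy', hδ', hε', hs]
        linear_combination ((m₂ : 𝓞 K) * (f : 𝓞 K) ^ 2) * htN
          - ((m₂ : 𝓞 K) * (f : 𝓞 K) ^ 2) * hNcast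
      rw [hxeq]
      exact hjxJ
end

section
/- For t ∈ O, the principal ideal tO lies properly between 𝔉 and 𝔉² (i.e. 𝔉² ⊊ tO ⊊ 𝔉) if and only if t = fw for some unit w of D. Moreover, for units w, w' of D, one has fwO = fw'O if and only if w/w' ∈ O. -/
set_option synthInstance.maxHeartbeats 1000000
set_option maxHeartbeats 1000000

open NumberField

theorem stmt_8
    (K : Type*) [Field K] [NumberField K] (hK : Module.finrank ℚ K = 2)
    (f : ℕ) (hf : f.Prime)
    (O : Subring (𝓞 K))
    (hO : ∀ x : 𝓞 K, x ∈ O ↔ ∃ n : ℤ, x - (n : 𝓞 K) ∈ Ideal.span {(f : 𝓞 K)})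
    (F : Ideal O) (hF : ∀ x : O, x ∈ F ↔ (x : 𝓞 K) ∈ Ideal.span {(f : 𝓞 K)}) :
    (∀ t : O, (F ^ 2 < Ideal.span {t} ∧ Ideal.span {t} < F) ↔
      ∃ w : (𝓞 K)ˣ, (t : 𝓞 K) = (f : 𝓞 K) * w) ∧
    (∀ (w w' : (𝓞 K)ˣ) (s s' : O),
      (s : 𝓞 K) = (f : 𝓞 K) * w → (s' : 𝓞 K) = (f : 𝓞 K) * w' →
      (Ideal.span {s} = Ideal.span {s'} ↔ ((w * w'⁻¹ : (𝓞 K)ˣ) : 𝓞 K) ∈ O)) := by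
  haveI : Fact f.Prime := ⟨hf⟩
  have hf0 : (f : 𝓞 K) ≠ 0 := Nat.cast_ne_zero.mpr hf.pos.ne'
  -- divisibility by f descends from 𝓞 K to ℤ
  have key : ∀ n : ℤ, (f : 𝓞 K) ∣ (n : 𝓞 K) → (f : ℤ) ∣ n := by
    intro n hdvd
    have hrank : Module.finrank ℤ (𝓞 K) = 2 := by
      rw [NumberField.RingOfIntegers.rank]; exact hK
    have h1 : Algebra.norm ℤ (algebraMap ℤ (𝓞 K) (f : ℤ)) ∣
        Algebra.norm ℤ (algebraMap ℤ (𝓞 K) n) := by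
      apply map_dvd
      simpa using hdvd
    have hb := Algebra.norm_algebraMap_of_basis (Module.Free.chooseBasis ℤ (𝓞 K))
    rw [hb, hb, ← Module.finrank_eq_card_chooseBasisIndex, hrank] at h1
    have hp : Prime (f : ℤ) := Nat.prime_iff_prime_int.mp hf
    exact hp.dvd_of_dvd_pow ((dvd_pow_self (f : ℤ) two_ne_zero).trans h1)
  have hcast : ∀ z : ℤ, (f : ℤ) ∣ z → (f : 𝓞 K) ∣ (z : 𝓞 K) := by
    intro z hz
    obtain ⟨c, rfl⟩ := hz
    exact ⟨(c : 𝓞 K), by push_cast; ring⟩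
  have hfd1 : ¬ (f : 𝓞 K) ∣ 1 := by
    intro h
    have := key 1 (by exact_mod_cast h)
    have h2 : (f : ℤ) ≤ 1 := Int.le_of_dvd one_pos this
    have := hf.two_le
    omega
  have hmodinv : ∀ n : ℤ, ¬ (f : ℤ) ∣ n → ∃ m : ℤ, (f : ℤ) ∣ (n * m - 1) := by
    intro n hn
    refine ⟨(((n : ZMod f))⁻¹.val : ℤ), ?_⟩
    have h0 : (n : ZMod f) ≠ 0 := by rwa [Ne, ZMod.intCast_zmod_eq_zero_iff_dvd]
    rw [← ZMod.intCast_zmod_eq_zero_iff_dvd]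
    push_cast
    rw [ZMod.natCast_val, ZMod.cast_id, mul_inv_cancel₀ h0, sub_self]
  -- existence of an element outside O
  have hexists : ∃ d : 𝓞 K, d ∉ O := by
    by_contra hall
    push_neg at hall
    set I : Ideal (𝓞 K) := Ideal.span {(f : 𝓞 K)} with hI
    have hsurj : Function.Surjective (fun x : ZMod f => (((x.val : ℤ) : 𝓞 K ⧸ I))) := by
      intro r
      obtain ⟨d, rfl⟩ := Ideal.Quotient.mk_surjective r
      obtain ⟨n, hn⟩ := (hO d).mp (hall d)
      refine ⟨(n : ZMod f), ?_⟩
      have h1 : Ideal.Quotient.mk I d = ((n : ℤ) : 𝓞 K ⧸ I) := by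
        rw [← map_intCast (Ideal.Quotient.mk I) n]
        exact (Ideal.Quotient.mk_eq_mk_iff_sub_mem _ _).mpr hn
      have h2 : (f : ℤ) ∣ (n - (((n : ZMod f)).val : ℤ)) := by
        rw [← ZMod.intCast_zmod_eq_zero_iff_dvd]
        push_cast
        rw [ZMod.natCast_val, ZMod.cast_id, sub_self]
      obtain ⟨c, hc⟩ := h2
      show ((((n : ZMod f)).val : ℤ) : 𝓞 K ⧸ I) = Ideal.Quotient.mk I d
      rw [h1]
      symm
      show ((n : ℤ) : 𝓞 K ⧸ I) = ((((n : ZMod f)).val : ℤ) : 𝓞 K ⧸ I)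
      rw [← map_intCast (Ideal.Quotient.mk I) n, ← map_intCast (Ideal.Quotient.mk I)]
      apply (Ideal.Quotient.mk_eq_mk_iff_sub_mem _ _).mpr
      rw [hI, Ideal.mem_span_singleton]
      refine ⟨(c : 𝓞 K), ?_⟩
      have hc2 := congrArg (fun z : ℤ => (z : 𝓞 K)) hc
      push_cast at hc2 ⊢
      exact hc2
    have hcard2 : Nat.card (𝓞 K ⧸ I) = f ^ 2 := by
      have habs : Ideal.absNorm I = f ^ 2 := by
        rw [hI, Ideal.absNorm_span_singleton]
        have hfa : (f : 𝓞 K) = algebraMap ℤ (𝓞 K) (f : ℤ) := by push_cast; rfl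
        rw [hfa]
        rw [Algebra.norm_algebraMap_of_basis (Module.Free.chooseBasis ℤ (𝓞 K)),
          ← Module.finrank_eq_card_chooseBasisIndex,
          NumberField.RingOfIntegers.rank, hK]
        push_cast
        simp [Int.natAbs_pow]
      rw [← habs, Ideal.absNorm_apply, Submodule.cardQuot_apply]
    have hle : Nat.card (𝓞 K ⧸ I) ≤ f := by
      have h := Nat.card_le_card_of_surjective _ hsurj
      simpa [Nat.card_zmod] using h
    rw [hcard2, pow_two] at hle
    have h2le := hf.two_le
    nlinarith
  -- multiples of f lie in O
  have hmemO : ∀ d : 𝓞 K, (f : 𝓞 K) * d ∈ O := by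
    intro d
    refine (hO _).mpr ⟨0, ?_⟩
    rw [Ideal.mem_span_singleton]
    exact ⟨d, by push_cast; ring⟩
  -- characterization of F ^ 2
  have hF2 : ∀ x : O, x ∈ F ^ 2 ↔ (f : 𝓞 K) ^ 2 ∣ (x : 𝓞 K) := by
    have hF2le : F ^ 2 ≤ Ideal.comap O.subtype (Ideal.span {(f : 𝓞 K) ^ 2}) := by
      rw [pow_two]
      apply Ideal.mul_le.mpr
      intro r hr s hs
      rw [Ideal.mem_comap, Ideal.mem_span_singleton]
      obtain ⟨a, ha⟩ := Ideal.mem_span_singleton.mp ((hF r).mp hr)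
      obtain ⟨b, hb⟩ := Ideal.mem_span_singleton.mp ((hF s).mp hs)
      show (f : 𝓞 K) ^ 2 ∣ ((r * s : O) : 𝓞 K)
      push_cast
      rw [ha, hb]
      exact ⟨a * b, by ring⟩
    intro x
    constructor
    · intro hx
      have := hF2le hx
      rwa [Ideal.mem_comap, Ideal.mem_span_singleton] at this
    · rintro ⟨y, hy⟩
      have ha : (f : 𝓞 K) ∈ O := by simpa using hmemO 1
      have hb : (f : 𝓞 K) * y ∈ O := hmemO y
      have hx : x = (⟨(f : 𝓞 K), ha⟩ : O) * ⟨(f : 𝓞 K) * y, hb⟩ := by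
        apply Subtype.ext
        show (x : 𝓞 K) = (f : 𝓞 K) * ((f : 𝓞 K) * y)
        rw [hy]; ring
      rw [hx, pow_two]
      refine Ideal.mul_mem_mul ((hF _).mpr ?_) ((hF _).mpr ?_)
      · exact Ideal.mem_span_singleton.mpr ⟨1, (mul_one _).symm⟩
      · exact Ideal.mem_span_singleton.mpr ⟨y, rfl⟩
  -- inverses of units lying in O lie in O
  have hinvO : ∀ u : (𝓞 K)ˣ, (u : 𝓞 K) ∈ O → ((u⁻¹ : (𝓞 K)ˣ) : 𝓞 K) ∈ O := by
    intro u hu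
    obtain ⟨n, hn⟩ := (hO _).mp hu
    have hnd : (f : 𝓞 K) ∣ ((u : 𝓞 K) - n) := Ideal.mem_span_singleton.mp hn
    have hfn : ¬ (f : ℤ) ∣ n := by
      intro hdvd
      apply hfd1
      have h1 : (f : 𝓞 K) ∣ (u : 𝓞 K) := by
        have h2 := hcast n hdvd
        have h3 := dvd_add hnd h2
        simpa using h3
      exact h1.trans (isUnit_iff_dvd_one.mp u.isUnit)
    obtain ⟨m, hm⟩ := hmodinv n hfn
    refine (hO _).mpr ⟨m, Ideal.mem_span_singleton.mpr ?_⟩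
    have hui : ((u⁻¹ : (𝓞 K)ˣ) : 𝓞 K) * (u : 𝓞 K) = 1 := by exact_mod_cast u.inv_mul
    have hexp : ((u⁻¹ : (𝓞 K)ˣ) : 𝓞 K) - (m : 𝓞 K) =
        -((u⁻¹ : (𝓞 K)ˣ) : 𝓞 K) * ((n * m - 1 : ℤ) : 𝓞 K) +
          (-((u⁻¹ : (𝓞 K)ˣ) : 𝓞 K) * (m : 𝓞 K)) * ((u : 𝓞 K) - (n : 𝓞 K)) := by
      push_cast
      linear_combination (m : 𝓞 K) * hui
    rw [hexp]
    exact dvd_add ((hcast _ hm).mul_left _) (hnd.mul_left _)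
  constructor
  · intro t
    constructor
    · rintro ⟨h2, h1⟩
      have htF : t ∈ F := h1.le (Ideal.mem_span_singleton_self t)
      obtain ⟨d, hd⟩ := Ideal.mem_span_singleton.mp ((hF t).mp htF)
      have hsub : ∀ x : 𝓞 K, ∃ c : O, (f : 𝓞 K) * x = d * (c : 𝓞 K) := by
        intro x
        have hmem : (⟨(f : 𝓞 K) * ((f : 𝓞 K) * x), hmemO _⟩ : O) ∈ F ^ 2 :=
          (hF2 _).mpr ⟨x, by ring⟩
        have hmem2 := h2.le hmem
        obtain ⟨c, hc⟩ := Ideal.mem_span_singleton'.mp hmem2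
        refine ⟨c, ?_⟩
        have hc' : (c : 𝓞 K) * (t : 𝓞 K) = (f : 𝓞 K) * ((f : 𝓞 K) * x) :=
          congrArg Subtype.val hc
        rw [hd] at hc'
        apply mul_left_cancel₀ hf0
        linear_combination -hc'
      obtain ⟨k, hk⟩ := hsub 1
      have hd0 : d ≠ 0 := by
        intro h
        apply hf0
        rw [h] at hk
        simpa using hk
      have hkO : ∀ x : 𝓞 K, (k : 𝓞 K) * x ∈ O := by
        intro x
        obtain ⟨c, hc⟩ := hsub x
        have hx : (k : 𝓞 K) * x = (c : 𝓞 K) := by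
          apply mul_left_cancel₀ hd0
          linear_combination hc - x * hk
        rw [hx]
        exact c.2
      obtain ⟨n, hn⟩ := (hO (k : 𝓞 K)).mp k.2
      have hnd : (f : 𝓞 K) ∣ ((k : 𝓞 K) - n) := Ideal.mem_span_singleton.mp hn
      by_cases hfn : (f : ℤ) ∣ n
      · have h1' : (f : 𝓞 K) ∣ (k : 𝓞 K) := by
          have h2' := hcast n hfn
          have h3 := dvd_add hnd h2'
          simpa using h3
        obtain ⟨e, he⟩ := h1'
        have hu : IsUnit d := by
          apply IsUnit.of_mul_eq_one (a := d) e
          apply mul_left_cancel₀ hf0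
          linear_combination -hk - d * he
        obtain ⟨w, hw⟩ := hu
        exact ⟨w, by rw [hd, ← hw]⟩
      · exfalso
        obtain ⟨m, hm⟩ := hmodinv n hfn
        obtain ⟨d0, hd0'⟩ := hexists
        apply hd0'
        have hkd0 := hkO d0
        obtain ⟨p, hp⟩ := (hO _).mp hkd0
        have hpd : (f : 𝓞 K) ∣ ((k : 𝓞 K) * d0 - p) := Ideal.mem_span_singleton.mp hp
        refine (hO _).mpr ⟨m * p, Ideal.mem_span_singleton.mpr ?_⟩
        have hexp : d0 - ((m * p : ℤ) : 𝓞 K) =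
            -d0 * ((n * m - 1 : ℤ) : 𝓞 K) + (-(m : 𝓞 K) * d0) * ((k : 𝓞 K) - (n : 𝓞 K)) +
              (m : 𝓞 K) * ((k : 𝓞 K) * d0 - (p : 𝓞 K)) := by
          push_cast
          ring
        rw [hexp]
        exact dvd_add (dvd_add ((hcast _ hm).mul_left _) (hnd.mul_left _)) (hpd.mul_left _)
    · rintro ⟨w, hw⟩
      have hw0 : ((w : 𝓞 K)) ≠ 0 := w.ne_zero
      have hle1 : F ^ 2 ≤ Ideal.span {t} := by
        intro x hx
        obtain ⟨y, hy⟩ := (hF2 x).mp hx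
        rw [Ideal.mem_span_singleton']
        refine ⟨⟨(f : 𝓞 K) * (((w⁻¹ : (𝓞 K)ˣ) : 𝓞 K) * y), hmemO _⟩, ?_⟩
        apply Subtype.ext
        show (f : 𝓞 K) * (((w⁻¹ : (𝓞 K)ˣ) : 𝓞 K) * y) * (t : 𝓞 K) = (x : 𝓞 K)
        rw [hw, hy]
        have hiv : ((w⁻¹ : (𝓞 K)ˣ) : 𝓞 K) * (w : 𝓞 K) = 1 := by exact_mod_cast w.inv_mul
        linear_combination (f : 𝓞 K) ^ 2 * y * hiv
      have hne1 : t ∉ F ^ 2 := by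
        intro hmem
        obtain ⟨y, hy⟩ := (hF2 t).mp hmem
        apply hfd1
        have hwfy : (w : 𝓞 K) = (f : 𝓞 K) * y := by
          apply mul_left_cancel₀ hf0
          rw [← hw, hy]; ring
        exact dvd_trans ⟨y, hwfy⟩ (isUnit_iff_dvd_one.mp w.isUnit)
      have hle2 : Ideal.span {t} ≤ F := by
        intro x hx
        obtain ⟨c, hc⟩ := Ideal.mem_span_singleton'.mp hx
        rw [hF, Ideal.mem_span_singleton]
        have hcc : (c : 𝓞 K) * (t : 𝓞 K) = (x : 𝓞 K) := congrArg Subtype.val hc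
        rw [hw] at hcc
        exact ⟨(c : 𝓞 K) * w, by rw [← hcc]; ring⟩
      obtain ⟨d0, hd0'⟩ := hexists
      have hyF : (⟨(f : 𝓞 K) * ((w : 𝓞 K) * d0), hmemO _⟩ : O) ∈ F := by
        rw [hF, Ideal.mem_span_singleton]
        exact ⟨(w : 𝓞 K) * d0, rfl⟩
      have hynot : (⟨(f : 𝓞 K) * ((w : 𝓞 K) * d0), hmemO _⟩ : O) ∉ Ideal.span {t} := by
        intro hmem
        obtain ⟨c, hc⟩ := Ideal.mem_span_singleton'.mp hmem
        have hcc : (c : 𝓞 K) * (t : 𝓞 K) = (f : 𝓞 K) * ((w : 𝓞 K) * d0) :=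
          congrArg Subtype.val hc
        rw [hw] at hcc
        apply hd0'
        have : d0 = (c : 𝓞 K) := by
          apply mul_left_cancel₀ (mul_ne_zero hf0 hw0)
          linear_combination -hcc
        rw [this]
        exact c.2
      constructor
      · apply lt_of_le_of_ne hle1
        intro h
        exact hne1 (h ▸ Ideal.mem_span_singleton_self t)
      · apply lt_of_le_of_ne hle2
        intro h
        exact hynot (h ▸ hyF)
  · intro w w' s s' hs hs'
    constructor
    · intro hsp
      have hmem : s ∈ Ideal.span {s'} := hsp ▸ Ideal.mem_span_singleton_self s
      obtain ⟨c, hc⟩ := Ideal.mem_span_singleton'.mp hmem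
      have hcc : (c : 𝓞 K) * (s' : 𝓞 K) = (s : 𝓞 K) := congrArg Subtype.val hc
      rw [hs, hs'] at hcc
      have hval : ((w * w'⁻¹ : (𝓞 K)ˣ) : 𝓞 K) = (c : 𝓞 K) := by
        apply mul_right_cancel₀ (show ((w' : 𝓞 K)) ≠ 0 from w'.ne_zero)
        have hiv : ((w'⁻¹ : (𝓞 K)ˣ) : 𝓞 K) * (w' : 𝓞 K) = 1 := by exact_mod_cast w'.inv_mul
        have hmul : ((w * w'⁻¹ : (𝓞 K)ˣ) : 𝓞 K) =
            (w : 𝓞 K) * ((w'⁻¹ : (𝓞 K)ˣ) : 𝓞 K) := by push_cast; ring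
        rw [hmul]
        have hww' : (w : 𝓞 K) = (c : 𝓞 K) * (w' : 𝓞 K) := by
          apply mul_left_cancel₀ hf0
          linear_combination -hcc
        rw [hww']
        linear_combination (c : 𝓞 K) * (w' : 𝓞 K) * hiv
      rw [hval]
      exact c.2
    · intro hu
      have hu' : ((w' * w⁻¹ : (𝓞 K)ˣ) : 𝓞 K) ∈ O := by
        have h := hinvO (w * w'⁻¹) hu
        rwa [mul_inv_rev, inv_inv] at h
      apply le_antisymm
      · apply Ideal.span_singleton_le_span_singleton.mpr
        refine ⟨⟨((w * w'⁻¹ : (𝓞 K)ˣ) : 𝓞 K), hu⟩, Subtype.ext ?_⟩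
        show (s : 𝓞 K) = (s' : 𝓞 K) * ((w * w'⁻¹ : (𝓞 K)ˣ) : 𝓞 K)
        rw [hs, hs']
        have hiv : ((w'⁻¹ : (𝓞 K)ˣ) : 𝓞 K) * (w' : 𝓞 K) = 1 := by exact_mod_cast w'.inv_mul
        have hmul : ((w * w'⁻¹ : (𝓞 K)ˣ) : 𝓞 K) =
            (w : 𝓞 K) * ((w'⁻¹ : (𝓞 K)ˣ) : 𝓞 K) := by push_cast; ring
        rw [hmul]
        linear_combination -(f : 𝓞 K) * (w : 𝓞 K) * hiv
      · apply Ideal.span_singleton_le_span_singleton.mpr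
        refine ⟨⟨((w' * w⁻¹ : (𝓞 K)ˣ) : 𝓞 K), hu'⟩, Subtype.ext ?_⟩
        show (s' : 𝓞 K) = (s : 𝓞 K) * ((w' * w⁻¹ : (𝓞 K)ˣ) : 𝓞 K)
        rw [hs, hs']
        have hiv : ((w⁻¹ : (𝓞 K)ˣ) : 𝓞 K) * (w : 𝓞 K) = 1 := by exact_mod_cast w.inv_mul
        have hmul : ((w' * w⁻¹ : (𝓞 K)ˣ) : 𝓞 K) =
            (w' : 𝓞 K) * ((w⁻¹ : (𝓞 K)ˣ) : 𝓞 K) := by push_cast; ring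
        rw [hmul]
        linear_combination -(f : 𝓞 K) * (w' : 𝓞 K) * hiv
end
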